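/- arXiv:1206.1301 — 8 statements merged into one kernel-verified Lean document; each statement's English description precedes it below -/
import Mathlib

section
/- Every permutation σ in S_n has a unique expression σ = (i_1 j_1)(i_2 j_2)···(i_k j_k) as a product of transpositions such that i_s < j_s for all 1 ≤ s ≤ k and j_1 < j_2 < ··· < j_k. -/
open Equiv

namespace UTF

variable {n : ℕ}

def P (l : List (Fin n × Fin n)) : Equiv.Perm (Fin n) :=
  (l.map (fun p => Equiv.swap p.1 p.2)).prod

def Good (l : List (Fin n × Fin n)) : Prop :=
  (∀ p ∈ l, p.1 < p.2) ∧ (l.map Prod.snd).Pairwise (· < ·)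

lemma prod_fix (l : List (Fin n × Fin n)) (x : Fin n)
    (h1 : ∀ p ∈ l, p.1 < p.2) (h : ∀ p ∈ l, p.2 < x) :
    P l x = x := by
  induction l with
  | nil => simp [P]
  | cons a t ih =>
      have hx1 : x ≠ a.1 := by
        have := lt_trans (h1 a (List.mem_cons_self)) (h a (List.mem_cons_self))
        exact fun hh => absurd hh.symm (ne_of_lt this)
      have hx2 : x ≠ a.2 := by
        have := h a (List.mem_cons_self)
        exact fun hh => absurd hh.symm (ne_of_lt this)
      simp only [P, List.map_cons, List.prod_cons, Perm.mul_apply]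
      have := ih (fun p hp => h1 p (List.mem_cons_of_mem _ hp))
        (fun p hp => h p (List.mem_cons_of_mem _ hp))
      simp only [P] at this
      rw [this, Equiv.swap_apply_of_ne_of_ne hx1 hx2]

lemma prod_lt (l : List (Fin n × Fin n)) (x y : Fin n)
    (h1 : ∀ p ∈ l, p.1 < p.2) (h : ∀ p ∈ l, p.2 < x) (hy : y < x) :
    P l y < x := by
  induction l generalizing y with
  | nil => simpa [P]
  | cons a t ih =>
      simp only [P, List.map_cons, List.prod_cons, Perm.mul_apply]
      have hz := ih y (fun p hp => h1 p (List.mem_cons_of_mem _ hp))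
        (fun p hp => h p (List.mem_cons_of_mem _ hp)) hy
      simp only [P] at hz
      have ha1 : a.1 < x := lt_trans (h1 a (List.mem_cons_self)) (h a (List.mem_cons_self))
      have ha2 : a.2 < x := h a (List.mem_cons_self)
      rcases eq_or_ne ((List.map (fun p => Equiv.swap p.1 p.2) t).prod y) a.1 with he1 | hne1
      · rw [he1, Equiv.swap_apply_left]; exact ha2
      rcases eq_or_ne ((List.map (fun p => Equiv.swap p.1 p.2) t).prod y) a.2 with he2 | hne2
      · rw [he2, Equiv.swap_apply_right]; exact ha1
      · rw [Equiv.swap_apply_of_ne_of_ne hne1 hne2]; exact hz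

lemma concat_facts {a : List (Fin n × Fin n)} {i j : Fin n}
    (hg : Good (a ++ [(i, j)])) :
    Good a ∧ i < j ∧ ∀ p ∈ a, p.2 < j := by
  obtain ⟨h1, h2⟩ := hg
  rw [List.map_append, List.pairwise_append] at h2
  refine ⟨⟨fun p hp => h1 p (List.mem_append_left _ hp), h2.1⟩,
    h1 (i, j) (List.mem_append_right _ (List.mem_singleton_self _)), ?_⟩
  intro p hp
  exact h2.2.2 p.2 (List.mem_map_of_mem (f := Prod.snd) hp) j (by simp)

lemma P_concat (a : List (Fin n × Fin n)) (i j : Fin n) :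
    P (a ++ [(i, j)]) = P a * Equiv.swap i j := by
  simp [P]

lemma moved {a : List (Fin n × Fin n)} {i j : Fin n}
    (hg : Good (a ++ [(i, j)])) :
    P (a ++ [(i, j)]) j < j := by
  obtain ⟨⟨hga1, _⟩, hij, hsnd⟩ := concat_facts hg
  rw [P_concat, Perm.mul_apply, Equiv.swap_apply_right]
  exact prod_lt a j i hga1 hsnd hij

lemma inv_apply {a : List (Fin n × Fin n)} {i j : Fin n}
    (hg : Good (a ++ [(i, j)])) :
    (P (a ++ [(i, j)]))⁻¹ j = i := by
  obtain ⟨⟨hga1, _⟩, hij, hsnd⟩ := concat_facts hg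
  rw [P_concat, mul_inv_rev, Perm.mul_apply, Equiv.swap_inv]
  have : P a j = j := prod_fix a j hga1 hsnd
  have hainv : (P a)⁻¹ j = j := by
    conv_lhs => rw [← this]
    simp
  rw [hainv, Equiv.swap_apply_right]

lemma uniq : ∀ (k : ℕ) (l₁ l₂ : List (Fin n × Fin n)), l₁.length ≤ k →
    Good l₁ → Good l₂ → P l₁ = P l₂ → l₁ = l₂ := by
  intro k
  induction k with
  | zero =>
      intro l₁ l₂ hlen hg1 hg2 hP
      have h1 : l₁ = [] := List.length_eq_zero_iff.mp (Nat.le_zero.mp hlen)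
      subst h1
      rcases List.eq_nil_or_concat l₂ with rfl | ⟨b, ⟨i, j⟩, rfl⟩
      · rfl
      · simp only [List.concat_eq_append] at hg2 hP
        exfalso
        have := moved hg2
        rw [← hP] at this
        simp [P] at this
  | succ k ih =>
      intro l₁ l₂ hlen hg1 hg2 hP
      rcases List.eq_nil_or_concat l₁ with rfl | ⟨a, ⟨i₁, j₁⟩, rfl⟩
      · rcases List.eq_nil_or_concat l₂ with rfl | ⟨b, ⟨i, j⟩, rfl⟩
        · rfl
        · simp only [List.concat_eq_append] at hg2 hP
          exfalso
          have := moved hg2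
          rw [← hP] at this
          simp [P] at this
      simp only [List.concat_eq_append] at hg1 hP hlen ⊢
      rcases List.eq_nil_or_concat l₂ with rfl | ⟨b, ⟨i₂, j₂⟩, rfl⟩
      · exfalso
        have := moved hg1
        rw [hP] at this
        simp [P] at this
      simp only [List.concat_eq_append] at hg2 hP ⊢
      -- both concat
      have hm1 := moved hg1
      have hm2 := moved hg2
      obtain ⟨hga, hij1, hsnd1⟩ := concat_facts hg1
      obtain ⟨hgb, hij2, hsnd2⟩ := concat_facts hg2
      have hj : j₁ = j₂ := by
        by_contra hne
        rcases lt_or_gt_of_ne hne with h | h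
        · -- j₁ < j₂ : P l₂ fixes nothing... P l₁ fixes j₂
          have : P (a ++ [(i₁, j₁)]) j₂ = j₂ := by
            apply prod_fix
            · exact hg1.1
            · intro p hp
              rcases List.mem_append.mp hp with hp | hp
              · exact lt_trans (hsnd1 p hp) h
              · simp at hp; rw [hp]; exact h
          rw [hP] at this
          exact absurd this (ne_of_lt hm2)
        · have : P (b ++ [(i₂, j₂)]) j₁ = j₁ := by
            apply prod_fix
            · exact hg2.1
            · intro p hp
              rcases List.mem_append.mp hp with hp | hp
              · exact lt_trans (hsnd2 p hp) h
              · simp at hp; rw [hp]; exact h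
          rw [← hP] at this
          exact absurd this (ne_of_lt hm1)
      subst hj
      have hi : i₁ = i₂ := by
        have e1 := inv_apply hg1
        have e2 := inv_apply hg2
        rw [hP] at e1
        rw [e2] at e1
        exact e1.symm
      subst hi
      have hPa : P a = P b := by
        have : P a * Equiv.swap i₁ j₁ = P b * Equiv.swap i₁ j₁ := by
          rw [← P_concat, ← P_concat, hP]
        exact mul_right_cancel this
      have hlen' : a.length ≤ k := by
        simp at hlen; omega
      rw [ih a b hlen' hga hgb hPa]

lemma exists_part : ∀ (m : ℕ) (σ : Equiv.Perm (Fin n)),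
    (∀ x : Fin n, m ≤ x.val → σ x = x) →
    ∃ l : List (Fin n × Fin n), Good l ∧ σ = P l ∧ ∀ p ∈ l, (p.2 : Fin n).val < m := by
  intro m
  induction m with
  | zero =>
      intro σ hσ
      refine ⟨[], ⟨by simp, by simp⟩, ?_, by simp⟩
      ext x
      simp [P, hσ x (Nat.zero_le _)]
  | succ m ih =>
      intro σ hσ
      by_cases h : ∀ x : Fin n, m ≤ x.val → σ x = x
      · obtain ⟨l, hg, hp, hb⟩ := ih σ h
        exact ⟨l, hg, hp, fun p hp => Nat.lt_succ_of_lt (hb p hp)⟩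
      · push_neg at h
        obtain ⟨j, hjm, hjne⟩ := h
        have hjval : j.val = m := by
          rcases Nat.lt_or_ge j.val (m + 1) with h' | h'
          · omega
          · exact absurd (hσ j h') hjne
        set i := σ⁻¹ j with hi
        have hσi : σ i = j := by simp [hi]
        have hine : i ≠ j := by
          intro hh
          rw [hh] at hσi
          exact hjne hσi
        have hival : i.val < m := by
          rcases Nat.lt_or_ge i.val (m + 1) with h' | h'
          · rcases Nat.lt_or_ge i.val m with h'' | h''
            · exact h''
            · exfalso; apply hine; apply Fin.ext; omega
          · exfalso
            have := hσ i h'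
            rw [hσi] at this
            apply hine
            exact this.symm
        have hij : i < j := by
          rw [Fin.lt_def]; omega
        set σ' := σ * Equiv.swap i j with hσ'
        have hσ'fix : ∀ x : Fin n, m ≤ x.val → σ' x = x := by
          intro x hx
          rcases Nat.lt_or_ge x.val (m + 1) with h' | h'
          · have hxj : x = j := by apply Fin.ext; omega
            subst hxj
            simp [hσ', Perm.mul_apply, Equiv.swap_apply_right, hσi]
          · have hx1 : x ≠ i := by intro hh; rw [hh] at h'; omega
            have hx2 : x ≠ j := by intro hh; rw [hh] at h'; omega
            rw [hσ', Perm.mul_apply, Equiv.swap_apply_of_ne_of_ne hx1 hx2]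
            exact hσ x (by omega)
        obtain ⟨l', hg', hp', hb'⟩ := ih σ' hσ'fix
        refine ⟨l' ++ [(i, j)], ⟨?_, ?_⟩, ?_, ?_⟩
        · intro p hp
          rcases List.mem_append.mp hp with hp | hp
          · exact hg'.1 p hp
          · simp at hp; rw [hp]; exact hij
        · rw [List.map_append, List.pairwise_append]
          refine ⟨hg'.2, by simp, ?_⟩
          intro x hx y hy
          simp at hy
          subst hy
          simp only [List.mem_map] at hx
          obtain ⟨p, hp, rfl⟩ := hx
          have := hb' p hp
          rw [Fin.lt_def]; omega
        · rw [P_concat, ← hp']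
          rw [hσ']
          simp [mul_assoc]
        · intro p hp
          rcases List.mem_append.mp hp with hp | hp
          · exact Nat.lt_succ_of_lt (hb' p hp)
          · simp at hp; rw [hp]; simp only; omega

end UTF

/-- Every permutation `σ ∈ S_n` has a unique expression
`σ = (i_1 j_1)(i_2 j_2)⋯(i_k j_k)` as a product of transpositions with
`i_s < j_s` for all `s` and `j_1 < j_2 < ⋯ < j_k`. -/
theorem unique_transposition_factorization (n : ℕ) (σ : Equiv.Perm (Fin n)) :
    ∃! l : List (Fin n × Fin n),
      (∀ p ∈ l, p.1 < p.2) ∧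
      (l.map Prod.snd).Pairwise (· < ·) ∧
      σ = (l.map (fun p => Equiv.swap p.1 p.2)).prod := by
  obtain ⟨l, hg, hp, -⟩ := UTF.exists_part n σ (fun x hx => absurd x.isLt (by omega))
  refine ⟨l, ⟨hg.1, hg.2, hp⟩, ?_⟩
  rintro l' ⟨h1', h2', h3'⟩
  exact UTF.uniq l'.length l' l le_rfl ⟨h1', h2'⟩ hg
    (by simp only [UTF.P]; rw [← h3']; exact hp)
end

section
/- For all n ≥ 1, the joint distribution identity holds: the sum over σ in S_n of q^{sor(σ)} t^{cyc(σ)} equals t(t+q)(t+q+q^2)···(t+q+···+q^{n-1}). -/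
/-- Number of cycles of a permutation of `Fin n`. -/
def permCyc {n : ℕ} (σ : Equiv.Perm (Fin n)) : ℕ :=
  (Finset.univ.filter (fun k : Fin n => ∀ m : Fin n, σ.SameCycle k m → k ≤ m)).card

/-- `l` is the canonical factorization of `σ` into transpositions `(i_s j_s)`
with `i_s < j_s` and strictly increasing `j_s`. -/
def IsSortFact {n : ℕ} (σ : Equiv.Perm (Fin n)) (l : List (Fin n × Fin n)) : Prop :=
  (∀ p ∈ l, p.1 < p.2) ∧ (l.map Prod.snd).Pairwise (· < ·) ∧
    σ = (l.map (fun p => Equiv.swap p.1 p.2)).prod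

namespace SorAux
open Equiv Equiv.Perm Finset

variable {n : ℕ}

lemma pow_fix (τ : Equiv.Perm (Fin n)) {x : Fin n} (hx : τ x = x) (m : ℕ) : (τ ^ m) x = x := by
  induction m with
  | zero => simp
  | succ m ih => rw [pow_succ, Equiv.Perm.mul_apply, hx, ih]

lemma eq_of_sameCycle_fixed {τ : Equiv.Perm (Fin n)} {x m : Fin n}
    (hx : τ x = x) (h : τ.SameCycle x m) : m = x := by
  obtain ⟨j, -, hj⟩ := h.exists_pow_eq'
  rw [← hj, pow_fix τ hx]

lemma permCyc_succ {k : ℕ} (hk : k < n) (τ : Equiv.Perm (Fin n))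
    (hτ : ∀ x : Fin n, k ≤ x.val → τ x = x) (i : Fin n) (hi : i.val < k) :
    permCyc τ = permCyc (τ * Equiv.swap i ⟨k, hk⟩) + 1 := by
  set k' : Fin n := ⟨k, hk⟩ with hk'
  set σ : Equiv.Perm (Fin n) := τ * Equiv.swap i k' with hσ
  have hik : i ≠ k' := Fin.ne_of_val_ne (Nat.ne_of_lt hi)
  have hτk : τ k' = k' := hτ k' le_rfl
  have hσi : σ i = k' := by rw [hσ, Equiv.Perm.mul_apply, Equiv.swap_apply_left, hτk]
  have hσk : σ k' = τ i := by rw [hσ, Equiv.Perm.mul_apply, Equiv.swap_apply_right]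
  have hσx : ∀ x, x ≠ i → x ≠ k' → σ x = τ x := fun x h1 h2 => by
    rw [hσ, Equiv.Perm.mul_apply, Equiv.swap_apply_of_ne_of_ne h1 h2]
  have hτne : ∀ x : Fin n, x ≠ k' → τ x ≠ k' := fun x hx h =>
    hx (τ.injective (by rw [h, hτk]))
  have L : ∀ (x : Fin n), x ≠ k' → ∀ m : ℕ,
      ((σ ^ m) x = k' ∧ τ.SameCycle x i) ∨ ((σ ^ m) x ≠ k' ∧ τ.SameCycle x ((σ ^ m) x)) := by
    intro x hx m
    induction m with
    | zero => right; simpa using ⟨hx, Equiv.Perm.SameCycle.refl τ x⟩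
    | succ m ih =>
      have hp : (σ ^ (m+1)) x = σ ((σ ^ m) x) := by
        rw [pow_succ', Equiv.Perm.mul_apply]
      rcases ih with ⟨he, hs⟩ | ⟨hne, hs⟩
      · right
        rw [hp, he, hσk]
        exact ⟨hτne i hik, hs.apply_right⟩
      · by_cases hyi : (σ ^ m) x = i
        · left
          rw [hp, hyi, hσi]
          exact ⟨rfl, hyi ▸ hs⟩
        · right
          rw [hp, hσx _ hyi hne]
          exact ⟨hτne _ hne, hs.apply_right⟩
  have hτpow : ∀ (x : Fin n), x ≠ k' → ∀ m : ℕ, (τ ^ m) x ≠ k' := by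
    intro x hx m h
    exact hx ((τ ^ m).injective (by rw [h, pow_fix τ hτk]))
  have hσik : σ.SameCycle i k' := ⟨1, by simpa using hσi⟩
  have L2 : ∀ (x : Fin n), x ≠ k' → ∀ m : ℕ, σ.SameCycle x ((τ ^ m) x) := by
    intro x hx m
    induction m with
    | zero => simpa using Equiv.Perm.SameCycle.refl σ x
    | succ m ih =>
      have hp : (τ ^ (m+1)) x = τ ((τ ^ m) x) := by
        rw [pow_succ', Equiv.Perm.mul_apply]
      by_cases hyi : (τ ^ m) x = i
      · rw [hp, hyi, ← hσk]
        exact ((ih.trans (hyi ▸ hσik)).apply_right)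
      · rw [hp, ← hσx _ hyi (hτpow x hx m)]
        exact ih.apply_right
  have hc2 : ∀ x y : Fin n, x ≠ k' → y ≠ k' → (σ.SameCycle x y ↔ τ.SameCycle x y) := by
    intro x y hx hy
    constructor
    · intro h
      obtain ⟨m, _, hm⟩ := h.exists_pow_eq'
      rcases L x hx m with ⟨he, _⟩ | ⟨_, hs⟩
      · exact absurd (hm ▸ he) hy
      · exact hm ▸ hs
    · intro h
      obtain ⟨m, _, hm⟩ := h.exists_pow_eq'
      exact hm ▸ L2 x hx m
  have hc1 : ∀ x : Fin n, x ≠ k' → σ.SameCycle x k' → τ.SameCycle x i := by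
    intro x hx h
    obtain ⟨m, _, hm⟩ := h.exists_pow_eq'
    rcases L x hx m with ⟨_, hs⟩ | ⟨hne, _⟩
    · exact hs
    · exact absurd hm hne
  have hfilter : (Finset.univ.filter (fun x : Fin n => ∀ m : Fin n, σ.SameCycle x m → x ≤ m))
      = (Finset.univ.filter (fun x : Fin n => ∀ m : Fin n, τ.SameCycle x m → x ≤ m)).erase k' := by
    ext x
    simp only [Finset.mem_erase, Finset.mem_filter, Finset.mem_univ, true_and]
    constructor
    · intro hx
      have hxk : x ≠ k' := by
        rintro rfl
        have := hx i hσik.symm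
        exact absurd (by omega : ¬ (k ≤ i.val)) (fun h => h (Fin.le_def.mp this))
      refine ⟨hxk, fun m hm => ?_⟩
      by_cases hmk : m = k'
      · exact absurd (eq_of_sameCycle_fixed hτk (hmk ▸ hm).symm) hxk
      · exact hx m ((hc2 x m hxk hmk).mpr hm)
    · rintro ⟨hxk, hx⟩ m hm
      by_cases hmk : m = k'
      · have h1 : τ.SameCycle x i := hc1 x hxk (hmk ▸ hm)
        have h2 : x ≤ i := hx i h1
        subst hmk
        exact le_trans h2 (le_of_lt (Fin.lt_def.mpr hi))
      · exact hx m ((hc2 x m hxk hmk).mp hm)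
  have hk'mem : k' ∈ Finset.univ.filter (fun x : Fin n => ∀ m : Fin n, τ.SameCycle x m → x ≤ m) := by
    simp only [Finset.mem_filter, Finset.mem_univ, true_and]
    intro m hm
    rw [eq_of_sameCycle_fixed hτk hm]
  unfold permCyc
  rw [hfilter, Finset.card_erase_of_mem hk'mem]
  have : 0 < (Finset.univ.filter (fun x : Fin n => ∀ m : Fin n, τ.SameCycle x m → x ≤ m)).card :=
    Finset.card_pos.mpr ⟨k', hk'mem⟩
  omega

lemma permCyc_one : permCyc (1 : Equiv.Perm (Fin n)) = n := by
  unfold permCyc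
  have : (Finset.univ.filter (fun x : Fin n => ∀ m : Fin n, (1 : Equiv.Perm (Fin n)).SameCycle x m → x ≤ m))
      = Finset.univ := by
    ext x
    simp only [Finset.mem_filter, Finset.mem_univ, true_and, iff_true]
    intro m hm
    rw [Equiv.Perm.sameCycle_one] at hm
    exact hm ▸ le_rfl
  rw [this, Finset.card_univ, Fintype.card_fin]

lemma permCyc_ge {k : ℕ} (τ : Equiv.Perm (Fin n))
    (hτ : ∀ x : Fin n, k ≤ x.val → τ x = x) : n - k ≤ permCyc τ := by
  unfold permCyc
  have hsub : (Finset.univ.filter (fun x : Fin n => k ≤ x.val))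
      ⊆ (Finset.univ.filter (fun x : Fin n => ∀ m : Fin n, τ.SameCycle x m → x ≤ m)) := by
    intro x hx
    simp only [Finset.mem_filter, Finset.mem_univ, true_and] at hx ⊢
    intro m hm
    rw [eq_of_sameCycle_fixed (hτ x hx) hm]
  have hcard : (Finset.univ.filter (fun x : Fin n => k ≤ x.val)).card = n - k := by
    rw [← Fintype.card_fin (n - k), ← Finset.card_univ]
    refine Finset.card_bij'
      (fun x hx => (⟨x.val - k, by
        have h1 := (Finset.mem_filter.mp hx).2
        have h2 := x.isLt
        omega⟩ : Fin (n - k)))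
      (fun (a : Fin (n-k)) _ => (⟨k + a.val, by have := a.isLt; omega⟩ : Fin n))
      (fun a ha => Finset.mem_univ _)
      (fun a ha => by
        simp only [Finset.mem_filter, Finset.mem_univ, true_and]
        omega)
      (fun a ha => by
        have h1 := (Finset.mem_filter.mp ha).2
        apply Fin.ext
        simp
        omega)
      (fun a ha => by apply Fin.ext; simp)
  calc n - k = (Finset.univ.filter (fun x : Fin n => k ≤ x.val)).card := hcard.symm
    _ ≤ _ := Finset.card_le_card hsub

lemma exists_fact (k : ℕ) : ∀ τ : Equiv.Perm (Fin n),
    (∀ x : Fin n, k ≤ x.val → τ x = x) →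
    ∃ l : List (Fin n × Fin n), IsSortFact τ l ∧ ∀ p ∈ l, (p.2 : Fin n).val < k := by
  induction k with
  | zero =>
    intro τ hτ
    have : τ = 1 := Equiv.ext fun x => hτ x (Nat.zero_le _)
    exact ⟨[], ⟨by simp, by simp, by simp [this]⟩, by simp⟩
  | succ k ih =>
    intro τ hτ
    by_cases hk : k < n
    · set k' : Fin n := ⟨k, hk⟩ with hk'def
      by_cases hfix : τ k' = k'
      · have hτ' : ∀ x : Fin n, k ≤ x.val → τ x = x := by
          intro x hx
          rcases Nat.eq_or_lt_of_le hx with h | h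
          · have : x = k' := Fin.ext h.symm
            rw [this, hfix]
          · exact hτ x h
        obtain ⟨l, hl, hlt⟩ := ih τ hτ'
        exact ⟨l, hl, fun p hp => Nat.lt_succ_of_lt (hlt p hp)⟩
      · set i : Fin n := τ⁻¹ k' with hidef
        have hti : τ i = k' := by rw [hidef, (show ∀ (f : Equiv.Perm (Fin n)) x, f (f⁻¹ x) = x from fun f x => f.apply_symm_apply x)]
        have hik : i ≠ k' := fun h => hfix (h ▸ hti)
        have hilt : i.val < k := by
          rcases Nat.lt_or_ge i.val k with h | h
          · exact h
          · rcases Nat.eq_or_lt_of_le h with h' | h'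
            · exact absurd (Fin.ext h'.symm : i = k') hik
            · exact absurd (Fin.ext (by rw [hτ i h'] at hti; exact congrArg Fin.val hti) : i = k') hik
        set ρ : Equiv.Perm (Fin n) := τ * Equiv.swap i k' with hρdef
        have hρ : ∀ x : Fin n, k ≤ x.val → ρ x = x := by
          intro x hx
          by_cases hxk : x = k'
          · rw [hxk, hρdef, Equiv.Perm.mul_apply, Equiv.swap_apply_right, hti]
          · have hxk2 : k < x.val := by
              rcases Nat.eq_or_lt_of_le hx with h | h
              · exact absurd (Fin.ext h.symm) hxk
              · exact h
            have hxi : x ≠ i := fun h => by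
              have := congrArg Fin.val h
              omega
            rw [hρdef, Equiv.Perm.mul_apply, Equiv.swap_apply_of_ne_of_ne hxi hxk,
              hτ x hxk2]
        obtain ⟨l, ⟨hl1, hl2, hl3⟩, hlt⟩ := ih ρ hρ
        refine ⟨l ++ [(i, k')], ⟨?_, ?_, ?_⟩, ?_⟩
        · intro p hp
          rcases List.mem_append.mp hp with h | h
          · exact hl1 p h
          · simp only [List.mem_singleton] at h
            rw [h]
            exact Fin.lt_def.mpr hilt
        · rw [List.map_append]
          refine List.pairwise_append.mpr ⟨hl2, by simp, ?_⟩
          intro a ha b hb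
          simp only [List.map_cons, List.map_nil, List.mem_singleton] at hb
          obtain ⟨p, hp, rfl⟩ := List.mem_map.mp ha
          rw [hb]
          exact Fin.lt_def.mpr (hlt p hp)
        · rw [List.map_append, List.prod_append]
          simp only [List.map_cons, List.map_nil, List.prod_cons, List.prod_nil, mul_one]
          rw [← hl3, hρdef, mul_assoc, Equiv.swap_mul_self, mul_one]
        · intro p hp
          rcases List.mem_append.mp hp with h | h
          · exact Nat.lt_succ_of_lt (hlt p h)
          · simp only [List.mem_singleton] at h
            rw [h]
            exact Nat.lt_succ_self k
    · have hτ' : ∀ x : Fin n, k ≤ x.val → τ x = x := fun x hx =>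
        absurd (lt_of_le_of_lt hx x.isLt) hk
      obtain ⟨l, hl, hlt⟩ := ih τ hτ'
      exact ⟨l, hl, fun p hp => Nat.lt_succ_of_lt (hlt p hp)⟩

section Key

variable (sor : Equiv.Perm (Fin n) → ℕ)
  (hsor : ∀ (σ : Equiv.Perm (Fin n)) (l : List (Fin n × Fin n)),
    IsSortFact σ l → sor σ = (l.map (fun p => (p.2 : ℕ) - (p.1 : ℕ))).sum)

include hsor

lemma sor_one : sor 1 = 0 := by
  rw [hsor 1 [] ⟨by simp, by simp, by simp⟩]
  simp

lemma sor_swap {k : ℕ} (hk : k < n) (τ : Equiv.Perm (Fin n))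
    (hτ : ∀ x : Fin n, k ≤ x.val → τ x = x) (i : Fin n) (hi : i.val < k) :
    sor (τ * Equiv.swap i ⟨k, hk⟩) = sor τ + (k - i.val) := by
  obtain ⟨l, ⟨hl1, hl2, hl3⟩, hlt⟩ := exists_fact k τ hτ
  have h1 := hsor τ l ⟨hl1, hl2, hl3⟩
  have hIs : IsSortFact (τ * Equiv.swap i ⟨k, hk⟩) (l ++ [(i, ⟨k, hk⟩)]) := by
    refine ⟨?_, ?_, ?_⟩
    · intro p hp
      rcases List.mem_append.mp hp with h | h
      · exact hl1 p h
      · simp only [List.mem_singleton] at h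
        rw [h]
        exact Fin.lt_def.mpr hi
    · rw [List.map_append]
      refine List.pairwise_append.mpr ⟨hl2, by simp, ?_⟩
      intro a ha b hb
      simp only [List.map_cons, List.map_nil, List.mem_singleton] at hb
      obtain ⟨p, hp, rfl⟩ := List.mem_map.mp ha
      rw [hb]
      exact Fin.lt_def.mpr (hlt p hp)
    · rw [List.map_append, List.prod_append]
      simp only [List.map_cons, List.map_nil, List.prod_cons, List.prod_nil, mul_one]
      rw [← hl3]
  rw [hsor _ _ hIs, List.map_append, List.sum_append, ← h1]
  simp

variable {R : Type*} [CommRing R] (q t : R)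

lemma key : ∀ k : ℕ, k ≤ n →
    ∑ σ ∈ Finset.univ.filter
        (fun σ : Equiv.Perm (Fin n) => ∀ x : Fin n, k ≤ x.val → σ x = x),
      q ^ sor σ * t ^ (permCyc σ - (n - k))
    = ∏ j ∈ Finset.range k, (t + ∑ i ∈ Finset.Icc 1 j, q ^ i) := by
  intro k
  induction k with
  | zero =>
    intro _
    have hset : Finset.univ.filter
        (fun σ : Equiv.Perm (Fin n) => ∀ x : Fin n, 0 ≤ x.val → σ x = x) = {1} := by
      ext σ
      simp only [Finset.mem_filter, Finset.mem_univ, true_and, Finset.mem_singleton]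
      constructor
      · intro h
        exact Equiv.ext fun x => h x (Nat.zero_le _)
      · rintro rfl x _
        rfl
    rw [hset, Finset.sum_singleton, Finset.range_zero, Finset.prod_empty,
      sor_one sor hsor, permCyc_one]
    simp
  | succ k ih =>
    intro hk1
    have hk : k < n := hk1
    have hkn : k ≤ n := le_of_lt hk
    set k' : Fin n := ⟨k, hk⟩ with hk'def
    have hkv : k'.val = k := rfl
    have hbij : ∑ σ ∈ Finset.univ.filter
          (fun σ : Equiv.Perm (Fin n) => ∀ x : Fin n, k + 1 ≤ x.val → σ x = x),
        q ^ sor σ * t ^ (permCyc σ - (n - (k+1)))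
        = ∑ p ∈ (Finset.univ.filter (fun i : Fin n => i.val ≤ k)) ×ˢ
            (Finset.univ.filter
              (fun σ : Equiv.Perm (Fin n) => ∀ x : Fin n, k ≤ x.val → σ x = x)),
          q ^ sor (p.2 * Equiv.swap p.1 k') *
            t ^ (permCyc (p.2 * Equiv.swap p.1 k') - (n - (k+1))) := by
      refine Finset.sum_nbij' (fun σ => (σ⁻¹ k', σ * Equiv.swap (σ⁻¹ k') k'))
        (fun p => p.2 * Equiv.swap p.1 k') ?_ ?_ ?_ ?_ ?_
      · intro σ hσ
        simp only [Finset.mem_filter, Finset.mem_univ, true_and] at hσ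
        have hval : (σ⁻¹ k').val ≤ k := by
          by_contra h
          push_neg at h
          have h2 := hσ (σ⁻¹ k') h
          rw [(show ∀ (f : Equiv.Perm (Fin n)) x, f (f⁻¹ x) = x from fun f x => f.apply_symm_apply x)] at h2
          have h3 := congrArg Fin.val h2
          omega
        refine Finset.mem_product.mpr ⟨by simpa using hval, ?_⟩
        simp only [Finset.mem_filter, Finset.mem_univ, true_and]
        intro x hx
        by_cases hxk : x = k'
        · rw [hxk, Equiv.Perm.mul_apply, Equiv.swap_apply_right, (show ∀ (f : Equiv.Perm (Fin n)) x, f (f⁻¹ x) = x from fun f x => f.apply_symm_apply x)]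
        · have hx1 : k + 1 ≤ x.val := by
            have : x.val ≠ k := fun h => hxk (Fin.ext h)
            omega
          have hxj : x ≠ σ⁻¹ k' := by
            intro h
            apply hxk
            have h2 := hσ x hx1
            rw [h, (show ∀ (f : Equiv.Perm (Fin n)) x, f (f⁻¹ x) = x from fun f x => f.apply_symm_apply x)] at h2
            rw [h, ← h2]
          rw [Equiv.Perm.mul_apply, Equiv.swap_apply_of_ne_of_ne hxj hxk, hσ x hx1]
      · rintro ⟨i, τ⟩ hp
        obtain ⟨hpi, hpτ⟩ := Finset.mem_product.mp hp
        simp only [Finset.mem_filter, Finset.mem_univ, true_and] at hpi hpτ ⊢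
        intro x hx
        have hxi : x ≠ i := by
          intro h
          have := congrArg Fin.val h
          omega
        have hxk : x ≠ k' := by
          intro h
          have := congrArg Fin.val h
          simp only [hk'def] at this
          omega
        rw [Equiv.Perm.mul_apply, Equiv.swap_apply_of_ne_of_ne hxi hxk, hpτ x (by omega)]
      · intro σ hσ
        beta_reduce
        rw [mul_assoc, Equiv.swap_mul_self, mul_one]
      · rintro ⟨i, τ⟩ hp
        obtain ⟨hpi, hpτ⟩ := Finset.mem_product.mp hp
        simp only [Finset.mem_filter, Finset.mem_univ, true_and] at hpi hpτ
        have h1 : (τ * Equiv.swap i k') i = k' := by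
          rw [Equiv.Perm.mul_apply, Equiv.swap_apply_left]
          exact hpτ k' le_rfl
        have h2 : (τ * Equiv.swap i k')⁻¹ k' = i :=
          Equiv.Perm.inv_eq_iff_eq.mpr h1.symm
        beta_reduce
        simp only [Prod.mk.injEq]
        constructor
        · exact h2
        · rw [h2, mul_assoc, Equiv.swap_mul_self, mul_one]
      · intro σ hσ
        beta_reduce
        rw [mul_assoc, Equiv.swap_mul_self, mul_one]
    rw [hbij, Finset.sum_product]
    have hsplit : (Finset.univ.filter (fun i : Fin n => i.val ≤ k))
        = insert k' (Finset.univ.filter (fun i : Fin n => i.val < k)) := by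
      ext x
      simp only [Finset.mem_insert, Finset.mem_filter, Finset.mem_univ, true_and]
      constructor
      · intro h
        rcases Nat.eq_or_lt_of_le h with h' | h'
        · exact Or.inl (Fin.ext (by simpa using h'))
        · exact Or.inr (by omega)
      · rintro (rfl | h)
        · simp [hk'def]
        · omega
    have hknotmem : k' ∉ Finset.univ.filter (fun i : Fin n => i.val < k) := by
      simp [hk'def]
    rw [hsplit, Finset.sum_insert hknotmem]
    have hswapself : Equiv.swap k' k' = 1 := by
      rw [Equiv.swap_self]
      rfl
    have hterm1 : (∑ τ ∈ Finset.univ.filter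
          (fun σ : Equiv.Perm (Fin n) => ∀ x : Fin n, k ≤ x.val → σ x = x),
        q ^ sor (τ * Equiv.swap k' k') *
          t ^ (permCyc (τ * Equiv.swap k' k') - (n - (k+1))))
        = (∏ j ∈ Finset.range k, (t + ∑ i ∈ Finset.Icc 1 j, q ^ i)) * t := by
      rw [← ih hkn, Finset.sum_mul]
      refine Finset.sum_congr rfl ?_
      intro τ hτ
      simp only [Finset.mem_filter, Finset.mem_univ, true_and] at hτ
      have hA : n - k ≤ permCyc τ := permCyc_ge τ hτ
      have hE : permCyc τ - (n - (k+1)) = (permCyc τ - (n - k)) + 1 := by omega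
      rw [hswapself, mul_one, hE, pow_succ, ← mul_assoc]
    rw [hterm1]
    have hterm2 : (∑ i ∈ Finset.univ.filter (fun i : Fin n => i.val < k),
          ∑ τ ∈ Finset.univ.filter
            (fun σ : Equiv.Perm (Fin n) => ∀ x : Fin n, k ≤ x.val → σ x = x),
          q ^ sor (τ * Equiv.swap i k') *
            t ^ (permCyc (τ * Equiv.swap i k') - (n - (k+1))))
        = (∑ d ∈ Finset.Icc 1 k, q ^ d) *
            (∏ j ∈ Finset.range k, (t + ∑ i ∈ Finset.Icc 1 j, q ^ i)) := by
      have hinner : ∀ i ∈ Finset.univ.filter (fun i : Fin n => i.val < k),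
          (∑ τ ∈ Finset.univ.filter
            (fun σ : Equiv.Perm (Fin n) => ∀ x : Fin n, k ≤ x.val → σ x = x),
          q ^ sor (τ * Equiv.swap i k') *
            t ^ (permCyc (τ * Equiv.swap i k') - (n - (k+1))))
          = q ^ (k - i.val) *
              (∏ j ∈ Finset.range k, (t + ∑ i ∈ Finset.Icc 1 j, q ^ i)) := by
        intro i hi
        simp only [Finset.mem_filter, Finset.mem_univ, true_and] at hi
        rw [← ih hkn, Finset.mul_sum]
        refine Finset.sum_congr rfl ?_
        intro τ hτ
        simp only [Finset.mem_filter, Finset.mem_univ, true_and] at hτ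
        have hA : n - k ≤ permCyc τ := permCyc_ge τ hτ
        have hB := permCyc_succ hk τ hτ i hi
        rw [← hk'def] at hB
        have hE : permCyc (τ * Equiv.swap i k') - (n - (k+1)) = permCyc τ - (n - k) := by
          omega
        rw [sor_swap sor hsor hk τ hτ i hi, hE, pow_add]
        ring
      rw [Finset.sum_congr rfl hinner, ← Finset.sum_mul]
      congr 1
      refine Finset.sum_nbij' (fun x : Fin n => k - x.val)
        (fun d => (⟨k - d, by omega⟩ : Fin n)) ?_ ?_ ?_ ?_ ?_
      · intro x hx
        simp only [Finset.mem_filter, Finset.mem_univ, true_and] at hx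
        simp only [Finset.mem_Icc]
        omega
      · intro d hd
        simp only [Finset.mem_Icc] at hd
        simp only [Finset.mem_filter, Finset.mem_univ, true_and]
        omega
      · intro x hx
        simp only [Finset.mem_filter, Finset.mem_univ, true_and] at hx
        apply Fin.ext
        simp
        omega
      · intro d hd
        simp only [Finset.mem_Icc] at hd
        simp
        omega
      · intro x hx
        rfl
    rw [hterm2, Finset.prod_range_succ]
    ring

end Key
end SorAux

/-- `∑_{σ ∈ S_n} q^{sor σ} t^{cyc σ} = t(t+q)(t+q+q²)⋯(t+q+⋯+q^{n-1})`,
where `sor` is the sorting index, characterized by the unique factorization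
into transpositions with increasing larger entries. -/
theorem sor_cyc_generating_function (n : ℕ) (hn : 1 ≤ n)
    (sor : Equiv.Perm (Fin n) → ℕ)
    (hsor : ∀ (σ : Equiv.Perm (Fin n)) (l : List (Fin n × Fin n)),
      IsSortFact σ l → sor σ = (l.map (fun p => (p.2 : ℕ) - (p.1 : ℕ))).sum)
    (R : Type*) [CommRing R] (q t : R) :
    ∑ σ : Equiv.Perm (Fin n), q ^ sor σ * t ^ permCyc σ
      = ∏ k ∈ Finset.range n, (t + ∑ i ∈ Finset.Icc 1 k, q ^ i) := by
  have h := SorAux.key sor hsor q t n le_rfl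
  have hP : Finset.univ.filter
      (fun σ : Equiv.Perm (Fin n) => ∀ x : Fin n, n ≤ x.val → σ x = x) = Finset.univ := by
    ext σ
    simp only [Finset.mem_filter, Finset.mem_univ, true_and, iff_true]
    intro x hx
    exact absurd (lt_of_le_of_lt hx x.isLt) (lt_irrefl n)
  rw [hP] at h
  simpa using h
end

section
/- The pairs of statistics (inv, rlmin) and (sor, cyc) are equidistributed on S_n: the multiset of pairs (inv(σ), rlmin(σ)) over σ in S_n equals the multiset of pairs (sor(σ), cyc(σ)) over σ in S_n. -/
open Equiv Equiv.Perm Finset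

/-- Number of inversions. -/
def permInv {n : ℕ} (σ : Equiv.Perm (Fin n)) : ℕ :=
  (Finset.univ.filter (fun p : Fin n × Fin n => p.1 < p.2 ∧ σ p.2 < σ p.1)).card

/-- Number of right-to-left minimum letters: indices `i` with `σ i < σ j` for all `j > i`. -/
def permRlmin {n : ℕ} (σ : Equiv.Perm (Fin n)) : ℕ :=
  (Finset.univ.filter (fun i : Fin n => ∀ j : Fin n, i < j → σ i < σ j)).card

set_option linter.unusedSectionVars false

variable {α : Type*} [DecidableEq α] [Fintype α]

private lemma sc_step (σ : Perm α) (i m : α) (him : i ≠ m) (hm : σ m = m) (z : α) :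
    σ.SameCycle (if z = m then i else z) (if (σ * Equiv.swap i m) z = m then i else (σ * Equiv.swap i m) z) := by
  by_cases hz : z = m
  · have h1 : (σ * Equiv.swap i m) z = σ i := by simp [hz, Equiv.swap_apply_right]
    have h2 : σ i ≠ m := fun h => him (σ.injective (h.trans hm.symm))
    rw [h1, if_pos hz, if_neg h2]
    exact ⟨1, by simp⟩
  · by_cases hzi : z = i
    · have h1 : (σ * Equiv.swap i m) z = m := by simp [hzi, Equiv.swap_apply_left, hm]
      rw [if_neg hz, h1, if_pos rfl, hzi]
    · have h1 : (σ * Equiv.swap i m) z = σ z := by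
        simp [Equiv.swap_apply_of_ne_of_ne hzi hz]
      have h2 : σ z ≠ m := fun h => hz (σ.injective (h.trans hm.symm))
      rw [if_neg hz, h1, if_neg h2]
      exact ⟨1, by simp⟩

private lemma sc_fixed (σ : Perm α) {m y : α} (hm : σ m = m) (h : σ.SameCycle m y) : y = m := by
  obtain ⟨t, ht⟩ := h
  rw [Equiv.Perm.zpow_apply_eq_self_of_apply_eq_self hm] at ht
  exact ht.symm

/-- same-cycle characterization for σ * swap i m when σ fixes m -/
lemma sameCycle_mul_swap (σ : Perm α) (i m : α) (him : i ≠ m) (hm : σ m = m) (x y : α) :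
    (σ * Equiv.swap i m).SameCycle x y ↔
      σ.SameCycle (if x = m then i else x) (if y = m then i else y) := by
  set τ := σ * Equiv.swap i m with hτ
  constructor
  · intro h
    obtain ⟨t, ht, rfl⟩ := h.exists_pow_eq'
    clear ht h
    induction t with
    | zero => exact Equiv.Perm.SameCycle.refl _ _
    | succ t ih =>
        have hstep : (τ ^ (t+1)) x = τ ((τ ^ t) x) := by
          rw [pow_succ', Equiv.Perm.mul_apply]
        rw [hstep]
        exact ih.trans (sc_step σ i m him hm _)
  · intro h
    have key : ∀ z, z ≠ m → ∀ t : ℕ, (σ ^ t) z ≠ m ∧ τ.SameCycle z ((σ ^ t) z) := by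
      intro z hz t
      induction t with
      | zero => exact ⟨by simpa using hz, by rw [pow_zero]; exact Equiv.Perm.SameCycle.refl _ _⟩
      | succ t ih =>
          obtain ⟨hne, hsc⟩ := ih
          have hstep : (σ ^ (t+1)) z = σ ((σ ^ t) z) := by
            rw [pow_succ', Equiv.Perm.mul_apply]
          set w := (σ ^ t) z with hw
          have hσw : σ w ≠ m := fun h => hne (σ.injective (h.trans hm.symm))
          rw [hstep]
          refine ⟨hσw, hsc.trans ?_⟩
          by_cases hwi : w = i
          · have h1 : τ w = m := by simp [hτ, hwi, Equiv.swap_apply_left, hm]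
            have h2 : τ m = σ i := by simp [hτ, Equiv.swap_apply_right]
            refine ⟨2, ?_⟩
            have : ((2 : ℤ) : ℤ) = ((2 : ℕ) : ℤ) := by norm_num
            rw [show ((τ : Perm α) ^ (2:ℤ)) = τ ^ (2:ℕ) by norm_cast]
            rw [pow_two, Equiv.Perm.mul_apply, h1, h2, hwi]
          · have h1 : τ w = σ w := by simp [hτ, Equiv.swap_apply_of_ne_of_ne hwi hne]
            exact ⟨1, by simp [h1]⟩
    have key2 : ∀ a b, a ≠ m → σ.SameCycle a b → τ.SameCycle a b := by
      intro a b ha hab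
      obtain ⟨t, ht, rfl⟩ := hab.exists_pow_eq'
      exact (key a ha t).2
    have hmi : τ.SameCycle m i := by
      have h1 : τ i = m := by simp [hτ, Equiv.swap_apply_left, hm]
      exact Equiv.Perm.SameCycle.symm ⟨1, by simp [h1]⟩
    by_cases hx : x = m <;> by_cases hy : y = m
    · rw [hx, hy]
    · rw [if_pos hx, if_neg hy] at h
      rw [hx]
      exact hmi.trans (key2 i y him h)
    · rw [if_neg hx, if_pos hy] at h
      rw [hy]
      exact (key2 x i hx h).trans hmi.symm
    · rw [if_neg hx, if_neg hy] at h
      exact key2 x y hx h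
variable {n : ℕ}

private lemma minima_mul_swap (σ : Perm (Fin n)) (i m : Fin n) (him : i < m) (hm : σ m = m) :
    (univ.filter fun k => ∀ y, (σ * Equiv.swap i m).SameCycle k y → k ≤ y) =
      (univ.filter fun k => ∀ y, σ.SameCycle k y → k ≤ y).erase m := by
  have hne : i ≠ m := ne_of_lt him
  ext k
  simp only [mem_erase, mem_filter, mem_univ, true_and]
  constructor
  · intro hk
    have hkm : k ≠ m := by
      intro h
      have h1 : (σ * Equiv.swap i m) i = m := by simp [Equiv.swap_apply_left, hm]
      have hsc : (σ * Equiv.swap i m).SameCycle i m := ⟨1, by simp [h1]⟩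
      exact absurd (hk i (by rw [h]; exact hsc.symm)) (by rw [h]; exact not_le.mpr him)
    refine ⟨hkm, fun y hy => ?_⟩
    have hym : y ≠ m := by
      intro h
      apply hkm
      exact sc_fixed σ hm (by rw [h] at hy; exact hy.symm)
    exact hk y ((sameCycle_mul_swap σ i m hne hm k y).mpr
      (by rw [if_neg hkm, if_neg hym]; exact hy))
  · rintro ⟨hkm, hk⟩
    intro y hy
    have h2 := (sameCycle_mul_swap σ i m hne hm k y).mp hy
    rw [if_neg hkm] at h2
    by_cases hym : y = m
    · rw [if_pos hym] at h2
      exact le_of_lt (lt_of_le_of_lt (hk i h2) (hym ▸ him))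
    · rw [if_neg hym] at h2
      exact hk y h2
/-! ### sorting-word side -/

variable {n : ℕ}

/-- code space entry bound witness -/
private def swp (c : ∀ j : Fin n, Fin (j.1+1)) (j : Fin n) : Perm (Fin n) :=
  Equiv.swap ⟨j.1 - (c j).1, lt_of_le_of_lt (Nat.sub_le _ _) j.2⟩ j

private def pp (c : ∀ j : Fin n, Fin (j.1+1)) (m : ℕ) : Perm (Fin n) :=
  (((List.finRange n).take m).map (swp c)).prod

private lemma pp_succ (c : ∀ j : Fin n, Fin (j.1+1)) {m : ℕ} (hm : m < n) :
    pp c (m+1) = pp c m * swp c ⟨m, hm⟩ := by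
  unfold pp
  rw [List.take_succ]
  have h1 : (List.finRange n)[m]? = some ⟨m, hm⟩ := by
    rw [List.getElem?_eq_getElem (by simpa using hm)]
    simp
  rw [h1]
  simp

private lemma pp_fix (c : ∀ j : Fin n, Fin (j.1+1)) (m : ℕ) :
    ∀ x : Fin n, m ≤ x.1 → pp c m x = x := by
  induction m with
  | zero => intro x _; simp [pp]
  | succ m ih =>
      intro x hx
      have hm : m < n := by have := x.2; omega
      rw [pp_succ c hm, Equiv.Perm.mul_apply]
      have h1 : swp c ⟨m, hm⟩ x = x := by
        apply Equiv.swap_apply_of_ne_of_ne <;>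
          · intro h
            have hvv := congrArg Fin.val h
            simp only [] at hvv
            have : m - (c ⟨m, hm⟩).1 ≤ m := Nat.sub_le _ _
            omega
      rw [h1]
      exact ih x (by omega)

private lemma pp_inv (c : ∀ j : Fin n, Fin (j.1+1)) {m : ℕ} (hm : m < n) :
    (pp c (m+1))⁻¹ ⟨m, hm⟩ =
      ⟨m - (c ⟨m, hm⟩).1, lt_of_le_of_lt (Nat.sub_le _ _) hm⟩ := by
  rw [pp_succ c hm, mul_inv_rev, Equiv.Perm.mul_apply]
  have h1 : (pp c m)⁻¹ ⟨m, hm⟩ = ⟨m, hm⟩ := by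
    rw [Equiv.Perm.inv_eq_iff_eq]
    exact (pp_fix c m _ le_rfl).symm
  rw [h1]
  show (swp c ⟨m, hm⟩)⁻¹ _ = _
  simp only [swp, Equiv.swap_inv]
  rw [Equiv.swap_apply_right]

private lemma suffix_congr (c c' : ∀ j : Fin n, Fin (j.1+1)) (m : ℕ)
    (h : ∀ j : Fin n, m ≤ j.1 → c j = c' j) :
    ((List.finRange n).drop m).map (swp c) = ((List.finRange n).drop m).map (swp c') := by
  apply List.map_congr_left
  intro j hj
  have hjm : m ≤ j.1 := by
    obtain ⟨t, ht, hEq⟩ := List.mem_iff_getElem.mp hj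
    rw [List.getElem_drop] at hEq
    rw [← hEq]
    simp
  unfold swp
  have hv : (c j).1 = (c' j).1 := congrArg Fin.val (h j hjm)
  exact congrArg (fun t => Equiv.swap t j) (Fin.ext (by simp [hv]))

private lemma pp_congr (c c' : ∀ j : Fin n, Fin (j.1+1)) (m : ℕ)
    (hfull : pp c n = pp c' n)
    (h : ∀ j : Fin n, m ≤ j.1 → c j = c' j) :
    pp c m = pp c' m := by
  have key : ∀ d : ∀ j : Fin n, Fin (j.1+1),
      pp d n = pp d m * (((List.finRange n).drop m).map (swp d)).prod := by
    intro d
    unfold pp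
    rw [show ((List.finRange n).take n) = List.finRange n by
      apply List.take_of_length_le; simp]
    conv_lhs => rw [← List.take_append_drop m (List.finRange n)]
    rw [List.map_append, List.prod_append]
  have h1 := key c
  have h2 := key c'
  rw [hfull, suffix_congr c c' m h] at h1
  rw [h2] at h1
  exact mul_right_cancel h1.symm

private lemma pp_injective : Function.Injective (fun c : ∀ j : Fin n, Fin (j.1+1) => pp c n) := by
  intro c c' hcc
  simp only at hcc
  have key : ∀ k : ℕ, ∀ j : Fin n, n - k ≤ j.1 → c j = c' j := by
    intro k
    induction k with
    | zero => intro j hj; exact absurd j.2 (by omega)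
    | succ k ih =>
        intro j hj
        by_cases hk : n - k ≤ j.1
        · exact ih j hk
        · have hjv : j.1 = n - (k+1) := by omega
          have hm : j.1 < n := j.2
          have hagree : ∀ j' : Fin n, j.1 + 1 ≤ j'.1 → c j' = c' j' := by
            intro j' hj'
            exact ih j' (by omega)
          have heq : pp c (j.1 + 1) = pp c' (j.1 + 1) := pp_congr c c' _ hcc hagree
          have h1 := pp_inv c hm
          have h2 := pp_inv c' hm
          rw [heq] at h1
          have hji : (⟨j.1, hm⟩ : Fin n) = j := rfl
          rw [h2] at h1
          have hv : j.1 - (c ⟨j.1, hm⟩).1 = j.1 - (c' ⟨j.1, hm⟩).1 := congrArg Fin.val h1.symm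
          have hb1 : (c ⟨j.1, hm⟩).1 ≤ j.1 := Nat.lt_succ_iff.mp (c ⟨j.1, hm⟩).2
          have hb2 : (c' ⟨j.1, hm⟩).1 ≤ j.1 := Nat.lt_succ_iff.mp (c' ⟨j.1, hm⟩).2
          have : (c ⟨j.1, hm⟩).1 = (c' ⟨j.1, hm⟩).1 := by omega
          rw [← hji]
          exact Fin.ext this
  funext j
  exact key n j (by omega)
private lemma pp_cyc (c : ∀ j : Fin n, Fin (j.1+1)) :
    ∀ m : ℕ, m ≤ n →
    (univ.filter fun k : Fin n => ∀ y, (pp c m).SameCycle k y → k ≤ y).card +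
      (univ.filter fun j : Fin n => j.1 < m ∧ (c j).1 ≠ 0).card = n := by
  intro m
  induction m with
  | zero =>
      intro _
      have h0 : pp c 0 = 1 := by simp [pp]
      rw [h0]
      have h1 : (univ.filter fun k : Fin n => ∀ y, (1 : Perm (Fin n)).SameCycle k y → k ≤ y) = univ := by
        apply Finset.filter_true_of_mem
        intro k _ y hy
        rw [Equiv.Perm.sameCycle_one] at hy
        exact le_of_eq hy
      have h2 : (univ.filter fun j : Fin n => j.1 < 0 ∧ (c j).1 ≠ 0) = ∅ := by
        apply Finset.filter_false_of_mem
        intro j _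
        simp
      rw [h1, h2]
      simp
  | succ m ih =>
      intro hm1
      have hm : m < n := hm1
      have ihm := ih (le_of_lt hm)
      by_cases hc : (c ⟨m, hm⟩).1 = 0
      · have hswp : swp c ⟨m, hm⟩ = 1 := by
          unfold swp
          rw [show (⟨m - (c ⟨m, hm⟩).1, lt_of_le_of_lt (Nat.sub_le _ _) hm⟩ : Fin n) = ⟨m, hm⟩
            from Fin.ext (by simp [hc])]
          rw [Equiv.swap_self]
          rfl
        have hpp : pp c (m+1) = pp c m := by rw [pp_succ c hm, hswp, mul_one]
        have hfil : (univ.filter fun j : Fin n => j.1 < m + 1 ∧ (c j).1 ≠ 0) =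
            (univ.filter fun j : Fin n => j.1 < m ∧ (c j).1 ≠ 0) := by
          apply Finset.filter_congr
          intro j _
          constructor
          · rintro ⟨h1, h2⟩
            refine ⟨?_, h2⟩
            rcases Nat.lt_succ_iff_lt_or_eq.mp h1 with h | h
            · exact h
            · exfalso; apply h2
              have : j = ⟨m, hm⟩ := Fin.ext h
              rw [this]; exact hc
          · rintro ⟨h1, h2⟩; exact ⟨Nat.lt_succ_of_lt h1, h2⟩
        rw [hpp, hfil]
        exact ihm
      · set i : Fin n := ⟨m - (c ⟨m, hm⟩).1, lt_of_le_of_lt (Nat.sub_le _ _) hm⟩ with hi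
        have hcle : (c ⟨m, hm⟩).1 ≤ m := Nat.lt_succ_iff.mp (c ⟨m, hm⟩).2
        have him : i < (⟨m, hm⟩ : Fin n) := by
          rw [Fin.lt_def]
          show m - (c ⟨m, hm⟩).1 < m
          omega
        have hfixm : pp c m ⟨m, hm⟩ = ⟨m, hm⟩ := pp_fix c m _ le_rfl
        have hpp : pp c (m+1) = pp c m * Equiv.swap i ⟨m, hm⟩ := pp_succ c hm
        have hmin : (univ.filter fun k : Fin n => ∀ y, (pp c (m+1)).SameCycle k y → k ≤ y) =
            (univ.filter fun k : Fin n => ∀ y, (pp c m).SameCycle k y → k ≤ y).erase ⟨m, hm⟩ := by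
          rw [hpp]
          exact minima_mul_swap (pp c m) i ⟨m, hm⟩ him hfixm
        have hmem : (⟨m, hm⟩ : Fin n) ∈
            (univ.filter fun k : Fin n => ∀ y, (pp c m).SameCycle k y → k ≤ y) := by
          rw [mem_filter]
          refine ⟨mem_univ _, fun y hy => ?_⟩
          rw [sc_fixed (pp c m) hfixm hy]
        have hfil : (univ.filter fun j : Fin n => j.1 < m + 1 ∧ (c j).1 ≠ 0) =
            insert ⟨m, hm⟩ (univ.filter fun j : Fin n => j.1 < m ∧ (c j).1 ≠ 0) := by
          ext j
          simp only [mem_filter, mem_univ, true_and, mem_insert]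
          constructor
          · rintro ⟨h1, h2⟩
            rcases Nat.lt_succ_iff_lt_or_eq.mp h1 with h | h
            · exact Or.inr ⟨h, h2⟩
            · exact Or.inl (Fin.ext h)
          · rintro (h | ⟨h1, h2⟩)
            · rw [h]; exact ⟨Nat.lt_succ_self m, hc⟩
            · exact ⟨Nat.lt_succ_of_lt h1, h2⟩
        have hnotmem : (⟨m, hm⟩ : Fin n) ∉
            (univ.filter fun j : Fin n => j.1 < m ∧ (c j).1 ≠ 0) := by
          rw [mem_filter]
          rintro ⟨_, h1, _⟩
          exact absurd h1 (lt_irrefl m)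
        rw [hmin, hfil, Finset.card_erase_of_mem hmem, Finset.card_insert_of_notMem hnotmem]
        have hpos : 0 < (univ.filter fun k : Fin n => ∀ y, (pp c m).SameCycle k y → k ≤ y).card :=
          Finset.card_pos.mpr ⟨_, hmem⟩
        omega
private def Fc (c : ∀ j : Fin n, Fin (j.1+1)) (j : Fin n) : Option (Fin n × Fin n) :=
  if (c j).1 = 0 then none
  else some (⟨j.1 - (c j).1, lt_of_le_of_lt (Nat.sub_le _ _) j.2⟩, j)

private lemma Fc_prod (c : ∀ j : Fin n, Fin (j.1+1)) (L : List (Fin n)) :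
    ((L.filterMap (Fc c)).map (fun p => Equiv.swap p.1 p.2)).prod = (L.map (swp c)).prod := by
  induction L with
  | nil => simp
  | cons j L ih =>
      by_cases hc : (c j).1 = 0
      · have h1 : Fc c j = none := if_pos hc
        have h2 : swp c j = 1 := by
          unfold swp
          rw [show (⟨j.1 - (c j).1, lt_of_le_of_lt (Nat.sub_le _ _) j.2⟩ : Fin n) = j
            from Fin.ext (by simp [hc])]
          rw [Equiv.swap_self]
          rfl
        simp [List.filterMap_cons, h1, h2, ih]
      · have h1 : Fc c j = some (⟨j.1 - (c j).1, lt_of_le_of_lt (Nat.sub_le _ _) j.2⟩, j) :=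
          if_neg hc
        simp only [List.filterMap_cons, h1, List.map_cons, List.prod_cons, ih]
        rfl

private lemma Fc_snd_sublist (c : ∀ j : Fin n, Fin (j.1+1)) (L : List (Fin n)) :
    ((L.filterMap (Fc c)).map Prod.snd).Sublist L := by
  induction L with
  | nil => simp
  | cons j L ih =>
      by_cases hc : (c j).1 = 0
      · have h1 : Fc c j = none := if_pos hc
        rw [List.filterMap_cons, h1]
        exact ih.cons j
      · have h1 : Fc c j = some (⟨j.1 - (c j).1, lt_of_le_of_lt (Nat.sub_le _ _) j.2⟩, j) :=
          if_neg hc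
        rw [List.filterMap_cons, h1]
        rw [List.map_cons]; exact ih.cons₂ j

private lemma Fc_sum (c : ∀ j : Fin n, Fin (j.1+1)) (L : List (Fin n)) :
    ((L.filterMap (Fc c)).map (fun p => (p.2.1 : ℕ) - (p.1.1 : ℕ))).sum =
      (L.map fun j => (c j).1).sum := by
  induction L with
  | nil => simp
  | cons j L ih =>
      by_cases hc : (c j).1 = 0
      · have h1 : Fc c j = none := if_pos hc
        rw [List.filterMap_cons, h1]
        simp [ih, hc]
      · have h1 : Fc c j = some (⟨j.1 - (c j).1, lt_of_le_of_lt (Nat.sub_le _ _) j.2⟩, j) :=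
          if_neg hc
        rw [List.filterMap_cons, h1]
        simp only [List.map_cons, List.sum_cons, ih]
        congr 1
        have : (c j).1 ≤ j.1 := Nat.lt_succ_iff.mp (c j).2
        omega

private lemma isSortFact_pp (c : ∀ j : Fin n, Fin (j.1+1)) :
    IsSortFact (pp c n) ((List.finRange n).filterMap (Fc c)) := by
  refine ⟨?_, ?_, ?_⟩
  · intro p hp
    obtain ⟨j, _, hj⟩ := List.mem_filterMap.mp hp
    by_cases hc : (c j).1 = 0
    · rw [Fc, if_pos hc] at hj; exact absurd hj (by simp)
    · rw [Fc, if_neg hc] at hj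
      have hle : (c j).1 ≤ j.1 := Nat.lt_succ_iff.mp (c j).2
      rw [← Option.some_inj.mp hj]
      show (⟨j.1 - (c j).1, _⟩ : Fin n) < j
      rw [Fin.lt_def]
      show j.1 - (c j).1 < j.1
      omega
  · exact List.Pairwise.sublist (Fc_snd_sublist c (List.finRange n))
      (List.pairwise_lt_finRange n)
  · rw [Fc_prod c (List.finRange n)]
    unfold pp
    rw [List.take_of_length_le (by simp)]

private lemma sum_Fc (c : ∀ j : Fin n, Fin (j.1+1)) :
    ((((List.finRange n).filterMap (Fc c)).map (fun p => (p.2.1 : ℕ) - (p.1.1 : ℕ)))).sum =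
      ∑ j : Fin n, ((c j).1 : ℕ) := by
  rw [Fc_sum]
  rw [Fin.sum_univ_def]
/-! ### Lehmer side -/

private def lcode (σ : Perm (Fin n)) (j : Fin n) : ℕ :=
  (univ.filter fun i => j < i ∧ σ i < σ j).card

private lemma permInv_eq_sum_lcode (σ : Perm (Fin n)) :
    permInv σ = ∑ j : Fin n, lcode σ j := by
  unfold permInv lcode
  rw [Finset.card_eq_sum_card_fiberwise
    (f := Prod.fst) (t := univ) (fun x _ => mem_univ _)]
  apply Finset.sum_congr rfl
  intro j _
  rw [Finset.filter_filter]
  apply Finset.card_bij (fun p _ => p.2)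
  · intro p hp
    simp only [mem_filter, mem_univ, true_and] at hp ⊢
    obtain ⟨⟨h1, h2⟩, h3⟩ := hp
    rw [h3] at h1 h2
    exact ⟨h1, h2⟩
  · intro p hp q hq h
    simp only [mem_filter, mem_univ, true_and] at hp hq
    exact Prod.ext (hp.2.trans hq.2.symm) h
  · intro i hi
    simp only [mem_filter, mem_univ, true_and] at hi
    exact ⟨(j, i), by simp [hi.1, hi.2], rfl⟩

private lemma permRlmin_eq_card_lcode (σ : Perm (Fin n)) :
    permRlmin σ = (univ.filter fun j => lcode σ j = 0).card := by
  unfold permRlmin lcode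
  congr 1
  ext j
  simp only [mem_filter, mem_univ, true_and]
  constructor
  · intro h
    rw [Finset.card_eq_zero, Finset.filter_eq_empty_iff]
    intro i _
    rintro ⟨h1, h2⟩
    exact absurd (h i h1) (not_lt.mpr (le_of_lt h2))
  · intro h i hi
    rw [Finset.card_eq_zero, Finset.filter_eq_empty_iff] at h
    have h2 := h (mem_univ i)
    have h3 : ¬ σ i < σ j := fun hc => h2 ⟨hi, hc⟩
    have h4 : σ j ≠ σ i := fun hc => (ne_of_lt hi) (σ.injective hc)
    exact lt_of_le_of_ne (not_lt.mp h3) h4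
private lemma lcode_hval (σ : Perm (Fin n)) (j : Fin n) :
    (σ j).1 = (univ.filter fun i => i < j ∧ σ i < σ j).card + lcode σ j := by
  have hA : (univ.filter fun i => σ i < σ j).card = (σ j).1 := by
    have himg : (univ.filter fun i => σ i < σ j) = (Finset.Iio (σ j)).image σ.symm := by
      ext i
      simp only [mem_filter, mem_univ, true_and, mem_image, Finset.mem_Iio]
      constructor
      · intro h; exact ⟨σ i, h, by simp⟩
      · rintro ⟨a, ha, rfl⟩; simpa using ha
    rw [himg, Finset.card_image_of_injective _ σ.symm.injective, Fin.card_Iio]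
  have hsplit := Finset.card_filter_add_card_filter_not
    (s := univ.filter fun i => σ i < σ j) (p := fun i => i < j)
  rw [Finset.filter_filter, Finset.filter_filter] at hsplit
  have e1 : (univ.filter fun i => σ i < σ j ∧ i < j) =
      (univ.filter fun i => i < j ∧ σ i < σ j) := by
    apply Finset.filter_congr; intro i _; exact and_comm
  have e2 : (univ.filter fun i => σ i < σ j ∧ ¬ i < j) =
      (univ.filter fun i => j < i ∧ σ i < σ j) := by
    apply Finset.filter_congr
    intro i _
    constructor
    · rintro ⟨h1, h2⟩
      have : i ≠ j := fun hc => absurd (hc ▸ h1) (lt_irrefl _)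
      exact ⟨lt_of_le_of_ne (not_lt.mp h2) (Ne.symm this), h1⟩
    · rintro ⟨h1, h2⟩
      exact ⟨h2, not_lt.mpr (le_of_lt h1)⟩
  rw [e1, e2, hA] at hsplit
  unfold lcode
  omega

private lemma lcode_step (σ σ' : Perm (Fin n)) (j : Fin n)
    (hagree : ∀ i, i < j → σ i = σ' i) (hc : lcode σ j = lcode σ' j) :
    ¬ σ j < σ' j := by
  intro hlt
  set A := (univ.filter fun i : Fin n => i < j).image σ with hA
  have key : ∀ τ : Perm (Fin n), ((univ.filter fun i : Fin n => i < j).image τ = A) →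
      (τ j).1 = (A.filter fun a => a < τ j).card + lcode τ j := by
    intro τ hτ
    have h1 := lcode_hval τ j
    have h2 : (A.filter fun a => a < τ j) =
        (univ.filter fun i => i < j ∧ τ i < τ j).image τ := by
      rw [← hτ, Finset.filter_image]
      congr 1
      rw [Finset.filter_filter]
    have h3 : (A.filter fun a => a < τ j).card =
        (univ.filter fun i => i < j ∧ τ i < τ j).card := by
      rw [h2, Finset.card_image_of_injective _ τ.injective]
    omega
  have hAeq : (univ.filter fun i : Fin n => i < j).image σ' = A := by
    rw [hA]
    apply Finset.image_congr
    intro i hi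
    simp only [Finset.coe_filter, Set.mem_setOf_eq] at hi
    exact (hagree i hi.2).symm
  have k1 := key σ rfl
  have k2 := key σ' hAeq
  set u := σ j with hu
  set v := σ' j with hv
  have hunotA : u ∉ A := by
    rw [hA]
    intro hmem
    obtain ⟨i, hi, hieq⟩ := Finset.mem_image.mp hmem
    simp only [mem_filter, mem_univ, true_and] at hi
    exact absurd (σ.injective hieq ▸ hi) (lt_irrefl j)
  have hsplit := Finset.card_filter_add_card_filter_not
    (s := A.filter fun a => a < v) (p := fun a => a < u)
  rw [Finset.filter_filter, Finset.filter_filter] at hsplit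
  have e1 : (A.filter fun a => a < v ∧ a < u) = A.filter fun a => a < u := by
    apply Finset.filter_congr
    intro a _
    constructor
    · rintro ⟨_, h⟩; exact h
    · intro h; exact ⟨lt_trans h hlt, h⟩
  rw [e1] at hsplit
  have hsub : (A.filter fun a => a < v ∧ ¬ a < u) ⊆ (Finset.Ico u v).erase u := by
    intro a ha
    simp only [mem_filter] at ha
    obtain ⟨haA, h1, h2⟩ := ha
    rw [Finset.mem_erase, Finset.mem_Ico]
    exact ⟨fun hc => hunotA (hc ▸ haA), not_lt.mp h2, h1⟩
  have hcard := Finset.card_le_card hsub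
  have hico : ((Finset.Ico u v).erase u).card = (Finset.Ico u v).card - 1 :=
    Finset.card_erase_of_mem (Finset.mem_Ico.mpr ⟨le_refl u, hlt⟩)
  rw [Fin.card_Ico] at hico
  have hvu : u.1 < v.1 := hlt
  rw [hc] at k1
  omega

private lemma lcode_injective :
    Function.Injective (fun σ : Perm (Fin n) => lcode σ) := by
  intro σ σ' h
  have hpt : ∀ j, lcode σ j = lcode σ' j := fun j => congrFun h j
  have key : ∀ k : ℕ, ∀ j : Fin n, j.1 < k → σ j = σ' j := by
    intro k
    induction k with
    | zero => intro j hj; omega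
    | succ k ih =>
        intro j hj
        by_cases h2 : j.1 < k
        · exact ih j h2
        · have hjk : j.1 = k := by omega
          have hagree : ∀ i, i < j → σ i = σ' i := by
            intro i hi
            exact ih i (by rw [← hjk]; exact hi)
          have n1 := lcode_step σ σ' j hagree (hpt j)
          have n2 := lcode_step σ' σ j (fun i hi => (hagree i hi).symm) (hpt j).symm
          exact le_antisymm (not_lt.mp n2) (not_lt.mp n1)
  apply Equiv.ext
  intro j
  exact key n j j.2

private lemma lcode_le (σ : Perm (Fin n)) (j : Fin n) : lcode σ j ≤ n - 1 - j.1 := by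
  unfold lcode
  have h1 : (univ.filter fun i => j < i ∧ σ i < σ j) ⊆ Finset.Ioi j := by
    intro i hi
    simp only [mem_filter] at hi
    rw [Finset.mem_Ioi]
    exact hi.2.1
  calc (univ.filter fun i => j < i ∧ σ i < σ j).card
      ≤ (Finset.Ioi j).card := Finset.card_le_card h1
    _ = n - 1 - j.1 := Fin.card_Ioi j
private lemma card_code :
    Fintype.card (∀ j : Fin n, Fin (j.1+1)) = Fintype.card (Perm (Fin n)) := by
  rw [Fintype.card_pi, Fintype.card_perm, Fintype.card_fin]
  simp only [Fintype.card_fin]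
  rw [Fin.prod_univ_eq_prod_range (fun i => i + 1) n]
  exact Finset.prod_range_add_one_eq_factorial n

private def LC (σ : Perm (Fin n)) : ∀ j : Fin n, Fin (j.1+1) := fun j =>
  ⟨lcode σ (Fin.rev j), by
    have h1 := lcode_le σ (Fin.rev j)
    have h2 : (Fin.rev j).1 = n - (j.1 + 1) := rfl
    have h3 := j.2
    omega⟩

private lemma LC_injective : Function.Injective (LC : Perm (Fin n) → _) := by
  intro σ σ' h
  apply lcode_injective
  funext i
  have hv := congrArg Fin.val (congrFun h (Fin.rev i))
  show lcode σ i = lcode σ' i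
  rw [← Fin.rev_rev i]
  exact hv

private lemma LC_stat (σ : Perm (Fin n)) :
    (permInv σ, permRlmin σ) =
      (∑ j : Fin n, (LC σ j).1, (univ.filter fun j => (LC σ j).1 = 0).card) := by
  have h1 : permInv σ = ∑ j : Fin n, (LC σ j).1 := by
    rw [permInv_eq_sum_lcode]
    exact (Fintype.sum_equiv (Fin.revPerm) (fun j => (LC σ j).1) (lcode σ)
      (fun x => rfl)).symm
  have h2 : permRlmin σ = (univ.filter fun j => (LC σ j).1 = 0).card := by
    rw [permRlmin_eq_card_lcode]
    apply Finset.card_bij (fun j _ => Fin.rev j)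
    · intro j hj
      simp only [mem_filter, mem_univ, true_and] at hj ⊢
      show lcode σ (Fin.rev (Fin.rev j)) = 0
      rwa [Fin.rev_rev]
    · intro a _ b _ hab
      exact Fin.rev_injective hab
    · intro j hj
      simp only [mem_filter, mem_univ, true_and] at hj
      exact ⟨Fin.rev j, by simp only [mem_filter, mem_univ, true_and]; exact hj, Fin.rev_rev j⟩
  rw [h1, h2]

private lemma pp_cyc_final (c : ∀ j : Fin n, Fin (j.1+1)) :
    permCyc (pp c n) = (univ.filter fun j => (c j).1 = 0).card := by
  have h1 := pp_cyc c n le_rfl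
  have h2 := Finset.card_filter_add_card_filter_not
    (s := (univ : Finset (Fin n))) (p := fun j => (c j).1 = 0)
  rw [Finset.card_univ, Fintype.card_fin] at h2
  have h3 : (univ.filter fun j : Fin n => j.1 < n ∧ (c j).1 ≠ 0) =
      (univ.filter fun j : Fin n => ¬ (c j).1 = 0) := by
    apply Finset.filter_congr
    intro j _
    simp [j.2]
  rw [h3] at h1
  unfold permCyc
  omega
/-- The pairs `(inv, rlmin)` and `(sor, cyc)` are equidistributed on `S_n`:
the two multisets of pairs coincide. -/
theorem inv_rlmin_sor_cyc_equidistributed (n : ℕ)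
    (sor : Equiv.Perm (Fin n) → ℕ)
    (hsor : ∀ (σ : Equiv.Perm (Fin n)) (l : List (Fin n × Fin n)),
      IsSortFact σ l → sor σ = (l.map (fun p => (p.2 : ℕ) - (p.1 : ℕ))).sum) :
    (Finset.univ.val.map (fun σ : Equiv.Perm (Fin n) => (permInv σ, permRlmin σ)))
      = (Finset.univ.val.map (fun σ : Equiv.Perm (Fin n) => (sor σ, permCyc σ))) := by
  have hbijS : Function.Bijective (fun c : ∀ j : Fin n, Fin (j.1+1) => pp c n) :=
    (Fintype.bijective_iff_injective_and_card _).mpr ⟨pp_injective, card_code⟩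
  have hbijL : Function.Bijective (LC : Perm (Fin n) → ∀ j : Fin n, Fin (j.1+1)) :=
    (Fintype.bijective_iff_injective_and_card _).mpr ⟨LC_injective, card_code.symm⟩
  set G : (∀ j : Fin n, Fin (j.1+1)) → ℕ × ℕ := fun c =>
    (∑ j : Fin n, (c j).1, (univ.filter fun j => (c j).1 = 0).card) with hG
  have hL : (Finset.univ.val.map (fun σ : Equiv.Perm (Fin n) => (permInv σ, permRlmin σ)))
      = Finset.univ.val.map G := by
    have h1 : (fun σ : Equiv.Perm (Fin n) => (permInv σ, permRlmin σ)) = G ∘ LC := by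
      funext σ
      exact LC_stat σ
    rw [h1, ← Multiset.map_map]
    congr 1
    exact Multiset.map_univ_val_equiv (Equiv.ofBijective _ hbijL)
  have hR : (Finset.univ.val.map (fun σ : Equiv.Perm (Fin n) => (sor σ, permCyc σ)))
      = Finset.univ.val.map G := by
    have h2 : Finset.univ.val.map (Equiv.ofBijective _ hbijS) =
        (Finset.univ.val : Multiset (Perm (Fin n))) :=
      Multiset.map_univ_val_equiv (Equiv.ofBijective _ hbijS)
    rw [← h2, Multiset.map_map]
    congr 1
    funext c
    show (sor (pp c n), permCyc (pp c n)) = G c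
    rw [hG]
    have hs : sor (pp c n) = ∑ j : Fin n, (c j).1 := by
      rw [hsor (pp c n) _ (isSortFact_pp c)]
      exact sum_Fc c
    rw [hs, pp_cyc_final c]
  rw [hL, hR]
end

section
/- For all n ≥ 1, Σ_{σ ∈ S_n} q^{inv(σ)} Π_{i ∈ Rlminl(σ)} t_i = t_1(t_2+q)(t_3+q+q^2)···(t_n + q + ··· + q^{n-1}), where Rlminl(σ) is the set of right-to-left minimum letters of σ. -/
open Finset Equiv

/-- The set of right-to-left minimum letters (values) of `σ`:
values `σ i` such that `σ i < σ j` for all `j > i`.  Here the value `v : Fin n`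
stands for the letter `v + 1` of the paper. -/
def Rlminl {n : ℕ} (σ : Equiv.Perm (Fin n)) : Finset (Fin n) :=
  (Finset.univ.filter (fun i : Fin n => ∀ j : Fin n, i < j → σ i < σ j)).image σ

/-- Insertion: place the largest value `Fin.last n` at position `p`, the rest
according to `σ`. -/
def ins {n : ℕ} (σ : Equiv.Perm (Fin n)) (p : Fin (n + 1)) : Equiv.Perm (Fin (n + 1)) :=
  (finSuccEquiv' p).trans ((σ.optionCongr).trans (finSuccEquiv' (Fin.last n)).symm)

lemma ins_apply_self {n : ℕ} (σ : Equiv.Perm (Fin n)) (p : Fin (n + 1)) :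
    ins σ p p = Fin.last n := by
  simp [ins]

lemma ins_apply_succAbove {n : ℕ} (σ : Equiv.Perm (Fin n)) (p : Fin (n + 1)) (j : Fin n) :
    ins σ p (p.succAbove j) = (σ j).castSucc := by
  simp [ins, finSuccEquiv'_succAbove, finSuccEquiv'_symm_some, Fin.succAbove_last]

lemma ins_injective {n : ℕ} :
    Function.Injective (fun x : Equiv.Perm (Fin n) × Fin (n + 1) => ins x.1 x.2) := by
  rintro ⟨σ, p⟩ ⟨σ', p'⟩ h
  simp only at h
  have hp : p = p' := by
    have h1 : ins σ p p = Fin.last n := ins_apply_self σ p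
    have h2 : ins σ' p' p' = Fin.last n := ins_apply_self σ' p'
    rw [h] at h1
    exact (ins σ' p').injective (h1.trans h2.symm)
  subst hp
  have hσ : σ = σ' := by
    ext j
    have := congrArg (fun τ : Equiv.Perm (Fin (n+1)) => τ (p.succAbove j)) h
    simp only [ins_apply_succAbove] at this
    exact congrArg Fin.val (Fin.castSucc_injective n this)
  simp [hσ]

lemma permInv_eq_sum {n : ℕ} (σ : Equiv.Perm (Fin n)) :
    permInv σ = ∑ i : Fin n, ∑ j : Fin n, if i < j ∧ σ j < σ i then 1 else 0 := by
  rw [permInv, Finset.card_filter, Fintype.sum_prod_type]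

lemma card_ge {n v : ℕ} : (Finset.univ.filter fun b : Fin n => v ≤ (b : ℕ)).card = n - v := by
  induction n with
  | zero => simp
  | succ m ih =>
    rw [Finset.card_filter, Fin.sum_univ_castSucc, ← Finset.card_filter]
    simp only [Fin.coe_castSucc, Fin.val_last]
    rw [ih]
    by_cases h : v ≤ m
    · simp [h, Nat.succ_sub h]
    · simp only [h, if_false, add_zero]
      omega

lemma permInv_ins {n : ℕ} (σ : Equiv.Perm (Fin n)) (p : Fin (n + 1)) :
    permInv (ins σ p) = permInv σ + (n - (p : ℕ)) := by
  rw [permInv_eq_sum, Fin.sum_univ_succAbove _ p]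
  have h1 : ∑ j : Fin (n+1), (if p < j ∧ ins σ p j < ins σ p p then 1 else 0)
      = n - (p : ℕ) := by
    rw [Fin.sum_univ_succAbove _ p]
    have : ∀ j : Fin n, (if p < p.succAbove j ∧ ins σ p (p.succAbove j) < ins σ p p
        then 1 else 0) = (if (p : ℕ) ≤ (j : ℕ) then 1 else 0) := by
      intro j
      rw [ins_apply_self, ins_apply_succAbove]
      congr 1
      simp only [eq_iff_iff]
      constructor
      · rintro ⟨h, -⟩
        exact (Fin.lt_succAbove_iff_le_castSucc p j).1 h
      · intro h
        exact ⟨(Fin.lt_succAbove_iff_le_castSucc p j).2 h, Fin.castSucc_lt_last _⟩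
    rw [Finset.sum_congr rfl (fun j _ => this j)]
    simp only [lt_self_iff_false, false_and, if_false, zero_add]
    rw [← Finset.card_filter]
    exact card_ge
  rw [h1]
  have h2 : ∀ a : Fin n, ∑ j : Fin (n+1),
      (if p.succAbove a < j ∧ ins σ p j < ins σ p (p.succAbove a) then 1 else 0)
      = ∑ b : Fin n, if a < b ∧ σ b < σ a then 1 else 0 := by
    intro a
    rw [Fin.sum_univ_succAbove _ p]
    have hp : (if p.succAbove a < p ∧ ins σ p p < ins σ p (p.succAbove a) then 1 else 0) = 0 := by
      rw [ins_apply_self, ins_apply_succAbove]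
      simp [Fin.not_lt.2 (Fin.le_last _), (Fin.castSucc_lt_last (σ a)).not_gt]
    rw [hp, zero_add]
    apply Finset.sum_congr rfl
    intro b _
    rw [ins_apply_succAbove, ins_apply_succAbove]
    simp [Fin.succAbove_lt_succAbove_iff, Fin.castSucc_lt_castSucc_iff]
  rw [Finset.sum_congr rfl (fun a _ => h2 a), ← permInv_eq_sum, add_comm]

lemma prod_Rlminl {n : ℕ} {R : Type*} [CommRing R] (σ : Equiv.Perm (Fin n)) (t : Fin n → R) :
    ∏ i ∈ Rlminl σ, t i
      = ∏ i : Fin n, if (∀ j : Fin n, i < j → σ i < σ j) then t (σ i) else 1 := by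
  rw [Rlminl, Finset.prod_image (fun a _ b _ h => σ.injective h), Finset.prod_filter]

lemma prod_Rlminl_ins {n : ℕ} {R : Type*} [CommRing R] (σ : Equiv.Perm (Fin n))
    (p : Fin (n + 1)) (t : Fin (n + 1) → R) :
    ∏ i ∈ Rlminl (ins σ p), t i
      = (if p = Fin.last n then t (Fin.last n) else 1) * ∏ i ∈ Rlminl σ, t i.castSucc := by
  rw [prod_Rlminl, prod_Rlminl, Fin.prod_univ_succAbove _ p]
  congr 1
  · rw [ins_apply_self]
    congr 1
    simp only [eq_iff_iff]
    constructor
    · intro h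
      by_contra hne
      have hlt : p < Fin.last n := (Fin.le_last p).lt_of_ne hne
      have := h (Fin.last n) hlt
      exact absurd this (Fin.not_lt.2 (Fin.le_last _))
    · intro h j hj
      rw [h] at hj
      exact absurd hj (Fin.not_lt.2 (Fin.le_last _))
  · apply Finset.prod_congr rfl
    intro a _
    rw [ins_apply_succAbove]
    congr 1
    simp only [eq_iff_iff]
    constructor
    · intro h b hb
      have := h (p.succAbove b) (Fin.succAbove_lt_succAbove_iff.2 hb)
      rw [ins_apply_succAbove] at this
      exact Fin.castSucc_lt_castSucc_iff.1 this
    · intro h j hj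
      rcases eq_or_ne j p with rfl | hne
      · rw [ins_apply_self]; exact Fin.castSucc_lt_last _
      · obtain ⟨b, rfl⟩ := Fin.exists_succAbove_eq hne
        rw [ins_apply_succAbove]
        exact Fin.castSucc_lt_castSucc_iff.2 (h b (Fin.succAbove_lt_succAbove_iff.1 hj))

lemma aux (n : ℕ) (R : Type*) [CommRing R] (q : R) (t : Fin n → R) :
    ∑ σ : Equiv.Perm (Fin n), q ^ permInv σ * ∏ i ∈ Rlminl σ, t i
      = ∏ k : Fin n, (t k + ∑ i ∈ Finset.Icc 1 (k : ℕ), q ^ i) := by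
  induction n with
  | zero =>
    have : permInv (1 : Equiv.Perm (Fin 0)) = 0 := by simp [permInv]
    simp [Rlminl, this]
  | succ m ih =>
    have hbij : Function.Bijective
        (fun x : Equiv.Perm (Fin m) × Fin (m + 1) => ins x.1 x.2) := by
      rw [Fintype.bijective_iff_injective_and_card]
      refine ⟨ins_injective, ?_⟩
      simp [Fintype.card_perm, Nat.factorial_succ, mul_comm]
    rw [← Fintype.sum_bijective _ hbij
      (fun x => q ^ permInv (ins x.1 x.2) * ∏ i ∈ Rlminl (ins x.1 x.2), t i)
      (fun τ => q ^ permInv τ * ∏ i ∈ Rlminl τ, t i) (fun x => rfl)]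
    rw [Fintype.sum_prod_type]
    have key : ∀ σ : Equiv.Perm (Fin m), ∀ p : Fin (m+1),
        q ^ permInv (ins σ p) * ∏ i ∈ Rlminl (ins σ p), t i
        = (q ^ permInv σ * ∏ i ∈ Rlminl σ, t i.castSucc)
          * (q ^ (m - (p : ℕ)) * if p = Fin.last m then t (Fin.last m) else 1) := by
      intro σ p
      rw [permInv_ins, prod_Rlminl_ins, pow_add]
      ring
    simp only [key]
    rw [← Finset.sum_mul_sum]
    have h2 : ∑ p : Fin (m+1),
        (q ^ (m - (p : ℕ)) * if p = Fin.last m then t (Fin.last m) else 1)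
        = t (Fin.last m) + ∑ i ∈ Finset.Icc 1 m, q ^ i := by
      rw [Fin.sum_univ_castSucc]
      have hterm : ∀ a : Fin m, (q ^ (m - (a.castSucc : ℕ)) *
          if a.castSucc = Fin.last m then t (Fin.last m) else 1) = q ^ (m - (a : ℕ)) := by
        intro a
        rw [if_neg (Fin.castSucc_lt_last a).ne, mul_one, Fin.coe_castSucc]
      rw [Finset.sum_congr rfl (fun a _ => hterm a), if_pos rfl, Fin.val_last,
        Nat.sub_self, pow_zero, one_mul, add_comm]
      congr 1
      have hL : ∑ a : Fin m, q ^ (m - (a : ℕ)) = ∑ j ∈ Finset.range m, q ^ (j + 1) := by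
        rw [Fin.sum_univ_eq_sum_range (fun j => q ^ (m - j)) m,
          ← Finset.sum_range_reflect (fun j => q ^ (m - j)) m]
        apply Finset.sum_congr rfl
        intro j hj
        rw [Finset.mem_range] at hj
        congr 1
        omega
      have hR : ∑ i ∈ Finset.Icc 1 m, q ^ i = ∑ j ∈ Finset.range m, q ^ (j + 1) := by
        rw [← Finset.Ico_add_one_right_eq_Icc, Finset.sum_Ico_eq_sum_range]
        apply Finset.sum_congr (by congr 1) (fun j _ => by rw [add_comm])
      rw [hL, hR]
    rw [h2, ih (fun k => t k.castSucc), Fin.prod_univ_castSucc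
      (fun k : Fin (m+1) => t k + ∑ i ∈ Finset.Icc 1 (k : ℕ), q ^ i)]
    simp

/-- `∑_{σ ∈ S_n} q^{inv σ} ∏_{i ∈ Rlminl σ} t_i
      = t_1(t_2+q)(t_3+q+q²)⋯(t_n+q+⋯+q^{n-1})`,
where `t` is indexed by `Fin n` (so `t k` is the paper's `t_{k+1}`). -/
theorem inv_Rlminl_generating_function (n : ℕ) (hn : 1 ≤ n)
    (R : Type*) [CommRing R] (q : R) (t : Fin n → R) :
    ∑ σ : Equiv.Perm (Fin n), q ^ permInv σ * ∏ i ∈ Rlminl σ, t i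
      = ∏ k : Fin n, (t k + ∑ i ∈ Finset.Icc 1 (k : ℕ), q ^ i) := by
  exact aux n R q t
end

section
/- Let r = (r_1,...,r_n) be a nondecreasing sequence of integers with k ≤ r_k ≤ n for all k, and let S_r = {σ ∈ S_n : σ(k) ≤ r_k for all k}. Then Σ_{σ ∈ S_r} q^{inv(σ)} t^{rlmin(σ)} = Π_{k=1}^n (t + q + q^2 + ··· + q^{r_k − k}). -/
/-- The set `S_r` of restricted permutations: `σ(k) ≤ r_k` for all `k`
(indices `0`-based in Lean: paper's `σ(k) ≤ r_k` becomes `σ k + 1 ≤ r k`). -/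
def restrictedPerms (n : ℕ) (r : Fin n → ℕ) : Finset (Equiv.Perm (Fin n)) :=
  Finset.univ.filter (fun σ => ∀ k : Fin n, (σ k : ℕ) + 1 ≤ r k)

/- ### Auxiliary machinery -/

/-- Glue a first value `p` and a permutation of the remaining positions/values. -/
def myGlue {n : ℕ} (p : Fin (n+1)) (τ : Equiv.Perm (Fin n)) : Equiv.Perm (Fin (n+1)) :=
  ((finSuccEquiv n).trans (Equiv.optionCongr τ)).trans (finSuccEquiv' p).symm

lemma myGlue_zero {n : ℕ} (p : Fin (n+1)) (τ : Equiv.Perm (Fin n)) : myGlue p τ 0 = p := by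
  simp [myGlue]

lemma myGlue_succ {n : ℕ} (p : Fin (n+1)) (τ : Equiv.Perm (Fin n)) (k : Fin n) :
    myGlue p τ k.succ = p.succAbove (τ k) := by
  simp [myGlue, finSuccEquiv_succ, finSuccEquiv'_symm_some]

lemma succAbove_val {n : ℕ} (p : Fin (n+1)) (v : Fin n) :
    (p.succAbove v : ℕ) = if (v : ℕ) < (p : ℕ) then (v : ℕ) else (v : ℕ) + 1 := by
  rcases lt_or_ge (v.castSucc) p with h | h
  · rw [Fin.succAbove_of_castSucc_lt _ _ h]
    have h' : (v : ℕ) < (p : ℕ) := h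
    simp [h']
  · rw [Fin.succAbove_of_le_castSucc _ _ h]
    have h' : (p : ℕ) ≤ (v : ℕ) := h
    rw [if_neg (not_lt.2 h'), Fin.val_succ]

lemma succAbove_lt_left_iff {n : ℕ} (p : Fin (n+1)) (v : Fin n) :
    p.succAbove v < p ↔ (v : ℕ) < (p : ℕ) := by
  rw [Fin.lt_iff_val_lt_val, succAbove_val]
  split_ifs with h <;> omega

/-- Un-glue: recover the permutation of remaining positions. -/
def unGlue {n : ℕ} (σ : Equiv.Perm (Fin (n+1))) : Equiv.Perm (Fin n) :=
  Equiv.removeNone ((finSuccEquiv n).symm.trans (σ.trans (finSuccEquiv' (σ 0))))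

lemma myGlue_unGlue {n : ℕ} (σ : Equiv.Perm (Fin (n+1))) :
    myGlue (σ 0) (unGlue σ) = σ := by
  apply Equiv.ext
  intro i
  refine Fin.cases ?_ (fun k => ?_) i
  · rw [myGlue_zero]
  · rw [myGlue_succ]
    set e := (finSuccEquiv n).symm.trans (σ.trans (finSuccEquiv' (σ 0))) with he
    have hne : σ k.succ ≠ σ 0 := by
      intro h
      exact (Fin.succ_ne_zero k) (σ.injective h)
    obtain ⟨v, hv⟩ := Fin.exists_succAbove_eq hne
    have hsome : e (some k) = some v := by
      simp only [he, Equiv.trans_apply, finSuccEquiv_symm_some]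
      rw [← hv, finSuccEquiv'_succAbove]
    have := Equiv.removeNone_some e ⟨v, hsome⟩
    rw [hsome] at this
    have hk : unGlue σ k = v := Option.some_injective _ this
    rw [hk, hv]

lemma myGlue_right_inj {n : ℕ} (p : Fin (n+1)) (τ τ' : Equiv.Perm (Fin n))
    (h : myGlue p τ = myGlue p τ') : τ = τ' := by
  ext k
  have := congrArg (fun σ : Equiv.Perm (Fin (n+1)) => σ k.succ) h
  simp only [myGlue_succ] at this
  exact congrArg Fin.val ((Fin.succAbove_right_injective (p := p)) this)

lemma unGlue_myGlue {n : ℕ} (p : Fin (n+1)) (τ : Equiv.Perm (Fin n)) :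
    unGlue (myGlue p τ) = τ := by
  have h0 : myGlue p τ 0 = p := myGlue_zero p τ
  have := myGlue_unGlue (myGlue p τ)
  rw [h0] at this
  exact myGlue_right_inj p _ _ this

/- ### Statistics of a glued permutation -/

lemma permInv_eq_sum_s6 {n : ℕ} (σ : Equiv.Perm (Fin n)) :
    permInv σ = ∑ x : Fin n, (Finset.univ.filter fun y => x < y ∧ σ y < σ x).card := by
  rw [permInv, Finset.card_filter, Fintype.sum_prod_type]
  exact Finset.sum_congr rfl fun x _ => (Finset.card_filter _ _).symm

lemma card_filter_val_lt {n m : ℕ} (h : m ≤ n) :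
    (Finset.univ.filter fun v : Fin n => (v : ℕ) < m).card = m := by
  have : (Finset.univ.filter fun v : Fin n => (v : ℕ) < m)
      = (Finset.range m).attachFin (fun i hi => lt_of_lt_of_le (Finset.mem_range.1 hi) h) := by
    ext v; simp [Finset.mem_attachFin]
  rw [this, Finset.card_attachFin, Finset.card_range]

lemma card_filter_perm_lt {n : ℕ} (τ : Equiv.Perm (Fin n)) (m : ℕ) :
    (Finset.univ.filter fun j : Fin n => ((τ j : ℕ) < m)).card
      = (Finset.univ.filter fun v : Fin n => (v : ℕ) < m).card := by
  have : (Finset.univ.filter fun j : Fin n => ((τ j : ℕ) < m))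
      = (Finset.univ.filter fun v : Fin n => (v : ℕ) < m).image τ.symm := by
    ext j
    simp only [Finset.mem_image, Finset.mem_filter, Finset.mem_univ, true_and]
    constructor
    · intro hj; exact ⟨τ j, hj, τ.symm_apply_apply j⟩
    · rintro ⟨v, hv, rfl⟩; simpa using hv
  rw [this, Finset.card_image_of_injective _ τ.symm.injective]

lemma permInv_myGlue {n : ℕ} (p : Fin (n+1)) (τ : Equiv.Perm (Fin n)) :
    permInv (myGlue p τ) = (p : ℕ) + permInv τ := by
  rw [permInv_eq_sum_s6, Fin.sum_univ_succ]
  congr 1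
  · -- pairs with first coordinate 0
    have h1 : (Finset.univ.filter fun y => (0 : Fin (n+1)) < y ∧ myGlue p τ y < myGlue p τ 0)
        = (Finset.univ.filter fun j : Fin n => ((τ j : ℕ) < (p : ℕ))).image Fin.succ := by
      ext y
      refine Fin.cases ?_ (fun j => ?_) y
      · simp [lt_irrefl, Fin.succ_ne_zero]
      · simp only [Finset.mem_filter, Finset.mem_univ, true_and, Finset.mem_image,
          myGlue_zero, myGlue_succ]
        constructor
        · rintro ⟨-, h⟩
          exact ⟨j, (succAbove_lt_left_iff p (τ j)).1 h, rfl⟩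
        · rintro ⟨j', hj', hj''⟩
          obtain rfl : j' = j := Fin.succ_injective _ hj''
          exact ⟨Fin.succ_pos j', (succAbove_lt_left_iff p (τ j')).2 hj'⟩
    rw [h1, Finset.card_image_of_injective _ (Fin.succ_injective _),
      card_filter_perm_lt, card_filter_val_lt (by omega : (p : ℕ) ≤ n)]
  · -- pairs with both coordinates successors
    rw [permInv_eq_sum_s6]
    refine Finset.sum_congr rfl fun k _ => ?_
    have h2 : (Finset.univ.filter fun y => k.succ < y ∧ myGlue p τ y < myGlue p τ k.succ)
        = (Finset.univ.filter fun j : Fin n => k < j ∧ τ j < τ k).image Fin.succ := by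
      ext y
      refine Fin.cases ?_ (fun j => ?_) y
      · simp [Fin.not_lt_zero, Fin.succ_ne_zero]
      · simp only [Finset.mem_filter, Finset.mem_univ, true_and, Finset.mem_image,
          myGlue_succ, Fin.succ_lt_succ_iff, Fin.succAbove_lt_succAbove_iff]
        constructor
        · rintro ⟨h1, h2⟩; exact ⟨j, ⟨h1, h2⟩, rfl⟩
        · rintro ⟨j', hj', hj''⟩
          obtain rfl : j' = j := Fin.succ_injective _ hj''
          exact hj'
    rw [h2, Finset.card_image_of_injective _ (Fin.succ_injective _)]

lemma permRlmin_myGlue {n : ℕ} (p : Fin (n+1)) (τ : Equiv.Perm (Fin n)) :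
    permRlmin (myGlue p τ) = (if (p : ℕ) = 0 then 1 else 0) + permRlmin τ := by
  rw [permRlmin, Finset.card_filter, Fin.sum_univ_succ]
  congr 1
  · -- position 0
    have : (∀ j : Fin (n+1), (0 : Fin (n+1)) < j → myGlue p τ 0 < myGlue p τ j) ↔ (p : ℕ) = 0 := by
      constructor
      · intro h
        by_contra hp
        have hn : 0 < n := by
          rcases Nat.eq_zero_or_pos n with h0 | h0
          · subst h0; omega
          · exact h0
        set v : Fin n := ⟨0, hn⟩ with hv
        have hval : (p.succAbove v : ℕ) = 0 := by
          rw [succAbove_val]; simp only [hv, Fin.val_mk]; split_ifs <;> omega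
        have := h (τ.symm v).succ (Fin.succ_pos _)
        rw [myGlue_zero, myGlue_succ, Equiv.apply_symm_apply] at this
        rw [Fin.lt_iff_val_lt_val, hval] at this
        omega
      · intro hp j hj
        refine Fin.cases ?_ (fun k => fun _ => ?_) j hj
        · intro h; exact absurd h (lt_irrefl _)
        · rw [myGlue_zero, myGlue_succ, Fin.lt_iff_val_lt_val, succAbove_val]
          split_ifs <;> omega
    simp only [this]
  · -- positions ≥ 1
    rw [permRlmin, Finset.card_filter]
    refine Finset.sum_congr rfl fun k _ => ?_
    have : (∀ j : Fin (n+1), k.succ < j → myGlue p τ k.succ < myGlue p τ j)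
        ↔ (∀ j : Fin n, k < j → τ k < τ j) := by
      constructor
      · intro h j hj
        have := h j.succ (by rwa [Fin.succ_lt_succ_iff])
        rwa [myGlue_succ, myGlue_succ, Fin.succAbove_lt_succAbove_iff] at this
      · intro h j hj
        refine Fin.cases ?_ (fun j' => fun hj' => ?_) j hj
        · intro h'; exact absurd h' (Fin.not_lt_zero _)
        · rw [myGlue_succ, myGlue_succ, Fin.succAbove_lt_succAbove_iff]
          exact h j' (Fin.succ_lt_succ_iff.1 hj')
    simp only [this]

/- ### Membership -/

lemma myGlue_mem_iff {n : ℕ} (r : Fin (n+1) → ℕ) (hmono : Monotone r)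
    (hr : ∀ k : Fin (n+1), (k : ℕ) + 1 ≤ r k ∧ r k ≤ n + 1)
    (p : Fin (n+1)) (τ : Equiv.Perm (Fin n)) :
    myGlue p τ ∈ restrictedPerms (n+1) r ↔
      ((p : ℕ) + 1 ≤ r 0 ∧ ∀ k : Fin n, (τ k : ℕ) + 1 ≤ r k.succ - 1) := by
  simp only [restrictedPerms, Finset.mem_filter, Finset.mem_univ, true_and]
  rw [Fin.forall_fin_succ]
  simp only [myGlue_zero, myGlue_succ]
  constructor
  · rintro ⟨h0, hs⟩
    refine ⟨h0, fun k => ?_⟩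
    have hk := hs k
    rw [succAbove_val] at hk
    have hm : r 0 ≤ r k.succ := hmono (Fin.zero_le _)
    split_ifs at hk <;> omega
  · rintro ⟨h0, hs⟩
    refine ⟨h0, fun k => ?_⟩
    have hk := hs k
    rw [succAbove_val]
    have hm : r 0 ≤ r k.succ := hmono (Fin.zero_le _)
    have hrk := (hr k.succ).1
    rw [Fin.val_succ] at hrk
    split_ifs <;> omega

/- ### Small sums -/

lemma sum_range_ite {R : Type*} [CommRing R] (q t : R) (m : ℕ) :
    ∑ i ∈ Finset.range (m+1), (if i = 0 then t else q ^ i)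
      = t + ∑ i ∈ Finset.Icc 1 m, q ^ i := by
  have h1 : Finset.range (m+1) = insert 0 (Finset.Icc 1 m) := by
    ext i; simp [Finset.mem_range, Finset.mem_Icc]; omega
  rw [h1, Finset.sum_insert (by simp)]
  simp only [if_pos rfl]
  congr 1
  refine Finset.sum_congr rfl fun i hi => ?_
  have : i ≠ 0 := by simp [Finset.mem_Icc] at hi; omega
  rw [if_neg this]

/- ### Main theorem -/

lemma inv_rlmin_aux (R : Type*) [CommRing R] (q t : R) :
    ∀ n : ℕ, ∀ r : Fin n → ℕ, Monotone r →
    (∀ k : Fin n, (k : ℕ) + 1 ≤ r k ∧ r k ≤ n) →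
    ∑ σ ∈ restrictedPerms n r, q ^ permInv σ * t ^ permRlmin σ
      = ∏ k : Fin n, (t + ∑ i ∈ Finset.Icc 1 (r k - ((k : ℕ) + 1)), q ^ i) := by
  intro n
  induction n with
  | zero =>
    intro r _ _
    have h1 : restrictedPerms 0 r = Finset.univ := by
      simp only [restrictedPerms]
      exact Finset.filter_true_of_mem fun σ _ => fun k => k.elim0
    have h2 : ∀ σ : Equiv.Perm (Fin 0), q ^ permInv σ * t ^ permRlmin σ = 1 := by
      intro σ
      have : permInv σ = 0 := by simp [permInv]
      have h' : permRlmin σ = 0 := by simp [permRlmin]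
      rw [this, h', pow_zero, pow_zero, one_mul]
    rw [h1, Finset.sum_congr rfl fun σ _ => h2 σ, Finset.sum_const]
    simp
  | succ n ih =>
    intro r hmono hr
    set r' : Fin n → ℕ := fun k => r k.succ - 1 with hr'def
    have hmono' : Monotone r' := by
      intro a b hab
      exact Nat.sub_le_sub_right (hmono (by rwa [Fin.succ_le_succ_iff])) 1
    have hrcond' : ∀ k : Fin n, (k : ℕ) + 1 ≤ r' k ∧ r' k ≤ n := by
      intro k
      have h1 := (hr k.succ).1
      have h2 := (hr k.succ).2
      rw [Fin.val_succ] at h1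
      constructor <;> simp only [hr'def] <;> omega
    have IH := ih r' hmono' hrcond'
    have hr0 : 1 ≤ r 0 := by
      have := (hr 0).1; simpa using this
    have hr0n : r 0 ≤ n + 1 := (hr 0).2
    -- the bijection
    have key : ∑ σ ∈ restrictedPerms (n+1) r, q ^ permInv σ * t ^ permRlmin σ
        = ∑ pr ∈ (Finset.univ.filter fun p : Fin (n+1) => (p : ℕ) + 1 ≤ r 0) ×ˢ
            restrictedPerms n r',
            q ^ permInv (myGlue pr.1 pr.2) * t ^ permRlmin (myGlue pr.1 pr.2) := by
      refine Finset.sum_nbij' (i := fun σ => (σ 0, unGlue σ))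
        (j := fun pr => myGlue pr.1 pr.2) ?_ ?_ ?_ ?_ ?_
      · intro σ hσ
        have hσ' := hσ
        rw [← myGlue_unGlue σ, myGlue_mem_iff r hmono hr] at hσ'
        rw [Finset.mem_product]
        constructor
        · simpa using hσ'.1
        · simp only [restrictedPerms, Finset.mem_filter, Finset.mem_univ, true_and]
          intro k
          exact hσ'.2 k
      · intro pr hpr
        rw [Finset.mem_product] at hpr
        rw [myGlue_mem_iff r hmono hr]
        refine ⟨by simpa using hpr.1, fun k => ?_⟩
        have := hpr.2
        simp only [restrictedPerms, Finset.mem_filter, Finset.mem_univ, true_and] at this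
        exact this k
      · intro σ _; exact myGlue_unGlue σ
      · intro pr _
        exact Prod.ext (myGlue_zero _ _) (unGlue_myGlue _ _)
      · intro σ _
        rw [myGlue_unGlue]
    rw [key, Finset.sum_product]
    have step : ∀ p : Fin (n+1),
        ∑ τ ∈ restrictedPerms n r',
            q ^ permInv (myGlue p τ) * t ^ permRlmin (myGlue p τ)
          = (q ^ (p : ℕ) * (if (p : ℕ) = 0 then t else 1)) *
              ∑ τ ∈ restrictedPerms n r', q ^ permInv τ * t ^ permRlmin τ := by
      intro p
      rw [Finset.mul_sum]
      refine Finset.sum_congr rfl fun τ _ => ?_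
      rw [permInv_myGlue, permRlmin_myGlue, pow_add, pow_add]
      have ht : t ^ (if (p : ℕ) = 0 then 1 else 0) = (if (p : ℕ) = 0 then t else 1) := by
        split_ifs <;> simp
      rw [ht]
      ring
    rw [Finset.sum_congr rfl fun p _ => step p, ← Finset.sum_mul, IH]
    -- sum over first coordinate
    have hsum0 : ∑ p ∈ Finset.univ.filter (fun p : Fin (n+1) => (p : ℕ) + 1 ≤ r 0),
        (q ^ (p : ℕ) * (if (p : ℕ) = 0 then t else 1))
        = t + ∑ i ∈ Finset.Icc 1 (r 0 - 1), q ^ i := by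
      have hre : ∑ p ∈ Finset.univ.filter (fun p : Fin (n+1) => (p : ℕ) + 1 ≤ r 0),
          (q ^ (p : ℕ) * (if (p : ℕ) = 0 then t else 1))
          = ∑ i ∈ Finset.range (r 0), (if i = 0 then t else q ^ i) := by
        refine Finset.sum_nbij' (i := fun p => (p : ℕ))
          (j := fun i => (⟨i % (n+1), Nat.mod_lt _ (Nat.succ_pos n)⟩ : Fin (n+1)))
          ?_ ?_ ?_ ?_ ?_
        · intro p hp
          simp only [Finset.mem_filter] at hp
          simp only [Finset.mem_range]
          omega
        · intro i hi
          simp only [Finset.mem_range] at hi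
          simp only [Finset.mem_filter, Finset.mem_univ, true_and]
          have : i % (n+1) = i := Nat.mod_eq_of_lt (by omega)
          simp [this]; omega
        · intro p _
          have : (p : ℕ) % (n+1) = (p : ℕ) := Nat.mod_eq_of_lt p.isLt
          exact Fin.ext (by simp [this])
        · intro i hi
          simp only [Finset.mem_range] at hi
          simp [Nat.mod_eq_of_lt (by omega : i < n + 1)]
        · intro p _
          split_ifs with h1
          · rw [h1]; simp
          · rw [mul_one]
      rw [hre]
      obtain ⟨m, hm⟩ : ∃ m, r 0 = m + 1 := ⟨r 0 - 1, by omega⟩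
      rw [hm]
      have : (m + 1) - 1 = m := by omega
      rw [this, sum_range_ite]
    rw [hsum0, Fin.prod_univ_succ]
    congr 1
    refine Finset.prod_congr rfl fun k _ => ?_
    have hk : r' k - ((k : ℕ) + 1) = r k.succ - ((k.succ : ℕ) + 1) := by
      simp only [hr'def, Fin.val_succ]
      omega
    rw [hk]

/-- For a nondecreasing `r` with `k ≤ r_k ≤ n`,
`∑_{σ ∈ S_r} q^{inv σ} t^{rlmin σ} = ∏_{k=1}^n (t + q + ⋯ + q^{r_k - k})`. -/
theorem inv_rlmin_restricted (n : ℕ) (r : Fin n → ℕ) (hmono : Monotone r)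
    (hr : ∀ k : Fin n, (k : ℕ) + 1 ≤ r k ∧ r k ≤ n)
    (R : Type*) [CommRing R] (q t : R) :
    ∑ σ ∈ restrictedPerms n r, q ^ permInv σ * t ^ permRlmin σ
      = ∏ k : Fin n, (t + ∑ i ∈ Finset.Icc 1 (r k - ((k : ℕ) + 1)), q ^ i) := by
  exact inv_rlmin_aux R q t n r hmono hr
end

section
/- Let r = (r_1,...,r_n) be a nondecreasing sequence of integers with k ≤ r_k ≤ n for all k, and S_r = {σ ∈ S_n : σ(k) ≤ r_k for all k}. Then Σ_{σ ∈ S_r} q^{sor(σ)} t^{cyc(σ)} = Σ_{σ ∈ S_r} q^{inv(σ)} t^{rlmin(σ)}. -/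
namespace SCIR
open Equiv Finset

def eLast {n : ℕ} (τ : Equiv.Perm (Fin n)) : Equiv.Perm (Fin (n + 1)) where
  toFun := Fin.lastCases (Fin.last n) (fun k => (τ k).castSucc)
  invFun := Fin.lastCases (Fin.last n) (fun k => (τ⁻¹ k).castSucc)
  left_inv := by
    intro i
    induction i using Fin.lastCases with
    | last => simp
    | cast k => simp
  right_inv := by
    intro i
    induction i using Fin.lastCases with
    | last => simp
    | cast k => simp

@[simp] lemma eLast_last {n : ℕ} (τ : Equiv.Perm (Fin n)) : eLast τ (Fin.last n) = Fin.last n := by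
  simp [eLast]

@[simp] lemma eLast_castSucc {n : ℕ} (τ : Equiv.Perm (Fin n)) (k : Fin n) :
    eLast τ k.castSucc = (τ k).castSucc := by
  simp [eLast]

def eHom (n : ℕ) : Equiv.Perm (Fin n) →* Equiv.Perm (Fin (n + 1)) where
  toFun := eLast
  map_one' := by
    ext i
    induction i using Fin.lastCases with
    | last => simp
    | cast k => simp
  map_mul' := fun τ π => by
    ext i
    induction i using Fin.lastCases with
    | last => simp [Equiv.Perm.mul_apply]
    | cast k => simp [Equiv.Perm.mul_apply]

lemma eLast_swap {n : ℕ} (a b : Fin n) :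
    eLast (Equiv.swap a b) = Equiv.swap a.castSucc b.castSucc := by
  ext i
  induction i using Fin.lastCases with
  | last =>
    rw [eLast_last, Equiv.swap_apply_of_ne_of_ne] <;>
      exact (Fin.castSucc_lt_last _).ne'
  | cast k =>
    rw [eLast_castSucc]
    rcases eq_or_ne k a with rfl | ha
    · simp
    · rcases eq_or_ne k b with rfl | hb
      · simp
      · rw [Equiv.swap_apply_of_ne_of_ne ha hb, Equiv.swap_apply_of_ne_of_ne]
        · exact fun h => ha (Fin.castSucc_injective _ h)
        · exact fun h => hb (Fin.castSucc_injective _ h)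


def mapCS {n : ℕ} (l : List (Fin n × Fin n)) : List (Fin (n+1) × Fin (n+1)) :=
  l.map (fun p => (p.1.castSucc, p.2.castSucc))

lemma isSortFact_eLast {n : ℕ} {τ : Equiv.Perm (Fin n)} {l : List (Fin n × Fin n)}
    (h : IsSortFact τ l) : IsSortFact (eLast τ) (mapCS l) := by
  obtain ⟨h1, h2, h3⟩ := h
  refine ⟨?_, ?_, ?_⟩
  · intro p hp
    simp only [mapCS, List.mem_map] at hp
    obtain ⟨p', hp', rfl⟩ := hp
    exact Fin.castSucc_lt_castSucc_iff.2 (h1 p' hp')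
  · have : (mapCS l).map Prod.snd = (l.map Prod.snd).map Fin.castSucc := by
      simp [mapCS, Function.comp]
    rw [this]
    exact List.Pairwise.map _ (fun a b h => Fin.castSucc_lt_castSucc_iff.2 h) h2
  · have : (mapCS l).map (fun p => Equiv.swap p.1 p.2)
        = (l.map (fun p => Equiv.swap p.1 p.2)).map (eHom n) := by
      simp only [mapCS, List.map_map, Function.comp]
      apply List.map_congr_left
      intro p _
      exact (eLast_swap p.1 p.2).symm
    rw [this, ← MonoidHom.map_list_prod, ← h3]
    rfl

lemma isSortFact_eLast_swap {n : ℕ} {τ : Equiv.Perm (Fin n)} {l : List (Fin n × Fin n)}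
    (h : IsSortFact τ l) (i : Fin n) :
    IsSortFact (eLast τ * Equiv.swap i.castSucc (Fin.last n))
      (mapCS l ++ [(i.castSucc, Fin.last n)]) := by
  obtain ⟨h1', h2', h3'⟩ := isSortFact_eLast h
  refine ⟨?_, ?_, ?_⟩
  · intro p hp
    rcases List.mem_append.1 hp with hp | hp
    · exact h1' p hp
    · simp at hp; subst hp; exact Fin.castSucc_lt_last i
  · rw [List.map_append, List.pairwise_append]
    refine ⟨h2', by simp, ?_⟩
    intro x hx y hy
    simp only [List.map_cons, List.map_nil, List.mem_singleton] at hy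
    subst hy
    simp only [mapCS, List.map_map, List.mem_map] at hx
    obtain ⟨p, _, rfl⟩ := hx
    exact Fin.castSucc_lt_last _
  · rw [List.map_append, List.prod_append, ← h3']
    simp

lemma exists_isSortFact : ∀ (n : ℕ) (σ : Equiv.Perm (Fin n)), ∃ l, IsSortFact σ l := by
  intro n
  induction n with
  | zero =>
    intro σ
    refine ⟨[], ?_, ?_, ?_⟩ <;> simp
    · ext i; exact absurd i.2 (by omega)
  | succ n ih =>
    intro σ
    set i := σ⁻¹ (Fin.last n) with hi
    have hσi : σ i = Fin.last n := by simp [hi]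
    have hπ : (σ * Equiv.swap i (Fin.last n)) (Fin.last n) = Fin.last n := by
      simp [Equiv.Perm.mul_apply, hσi]
    -- restriction
    set π := σ * Equiv.swap i (Fin.last n) with hπdef
    have hπk : ∀ k : Fin n, π k.castSucc ≠ Fin.last n := by
      intro k h
      have := π.injective (h.trans hπ.symm)
      exact (Fin.castSucc_lt_last k).ne this
    set τ : Equiv.Perm (Fin n) :=
      ⟨fun k => (π k.castSucc).castPred (hπk k),
       fun k => (π⁻¹ k.castSucc).castPred (by
          intro h
          have : k.castSucc = Fin.last n := by
            have := congrArg π h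
            simpa [hπ] using this
          exact (Fin.castSucc_lt_last k).ne this),
       fun k => by simp,
       fun k => by simp⟩ with hτ
    have heq : eLast τ = π := by
      ext x
      induction x using Fin.lastCases with
      | last => simp [hπ]
      | cast k => simp [eLast, hτ]
    obtain ⟨l, hl⟩ := ih τ
    rcases eq_or_ne i (Fin.last n) with hil | hil
    · refine ⟨mapCS l, ?_⟩
      have : σ = eLast τ := by
        rw [heq, hπdef, ← hil]
        simp
        rfl
      rw [this]
      exact isSortFact_eLast hl
    · obtain ⟨i', hi'⟩ := Fin.exists_castSucc_eq.2 hil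
      have hσeq : σ = eLast τ * Equiv.swap i'.castSucc (Fin.last n) := by
        rw [heq, hπdef, mul_assoc, hi']
        simp
      rw [hσeq]
      exact ⟨_, isSortFact_eLast_swap hl i'⟩


lemma sameCycle_of_pow {n : ℕ} {σ : Equiv.Perm (Fin n)} {x y : Fin n} {k : ℕ}
    (h : (σ ^ k) x = y) : σ.SameCycle x y :=
  ⟨(k : ℤ), by simpa [zpow_natCast] using h⟩

lemma eLast_pow {n : ℕ} (τ : Equiv.Perm (Fin n)) (z : ℤ) :
    (eLast τ) ^ z = eLast (τ ^ z) := by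
  have : eLast τ = eHom n τ := rfl
  rw [this, ← map_zpow]
  rfl

lemma sameCycle_eLast_iff {n : ℕ} {τ : Equiv.Perm (Fin n)} {a b : Fin n} :
    (eLast τ).SameCycle a.castSucc b.castSucc ↔ τ.SameCycle a b := by
  constructor
  · rintro ⟨z, hz⟩
    rw [eLast_pow] at hz
    exact ⟨z, Fin.castSucc_injective n (by simpa using hz)⟩
  · rintro ⟨z, hz⟩
    exact ⟨z, by rw [eLast_pow]; simpa using congrArg Fin.castSucc hz⟩

lemma sameCycle_eLast_last {n : ℕ} {τ : Equiv.Perm (Fin n)} {y : Fin (n + 1)} :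
    (eLast τ).SameCycle (Fin.last n) y ↔ y = Fin.last n := by
  constructor
  · rintro ⟨z, hz⟩
    rw [eLast_pow] at hz
    simpa using hz.symm
  · rintro rfl; exact ⟨0, by simp⟩

lemma permCyc_eLast {n : ℕ} (τ : Equiv.Perm (Fin n)) :
    permCyc (eLast τ) = permCyc τ + 1 := by
  unfold permCyc
  rw [Finset.card_filter, Finset.card_filter, Fin.sum_univ_castSucc]
  congr 1
  · apply Finset.sum_congr rfl
    intro a _
    congr 1
    apply propext
    constructor
    · intro h b hb
      have := h b.castSucc (sameCycle_eLast_iff.2 hb)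
      exact Fin.castSucc_le_castSucc_iff.1 this
    · intro h m hm
      induction m using Fin.lastCases with
      | last => exact (Fin.castSucc_lt_last a).le
      | cast b => exact Fin.castSucc_le_castSucc_iff.2 (h b (sameCycle_eLast_iff.1 hm))
  · rw [if_pos]
    intro m hm
    rw [sameCycle_eLast_last.1 hm]

section merged

variable {n : ℕ} (τ : Equiv.Perm (Fin n)) (i' : Fin n)

def mg : Equiv.Perm (Fin (n + 1)) := eLast τ * Equiv.swap i'.castSucc (Fin.last n)

lemma mg_castSucc_ne {a : Fin n} (ha : a ≠ i') : mg τ i' a.castSucc = (τ a).castSucc := by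
  unfold mg
  rw [Equiv.Perm.mul_apply, Equiv.swap_apply_of_ne_of_ne
    (fun h => ha (Fin.castSucc_injective n h)) (Fin.castSucc_lt_last a).ne]
  simp

lemma mg_castSucc_self : mg τ i' i'.castSucc = Fin.last n := by
  unfold mg
  rw [Equiv.Perm.mul_apply, Equiv.swap_apply_left]
  simp

lemma mg_last : mg τ i' (Fin.last n) = (τ i').castSucc := by
  unfold mg
  rw [Equiv.Perm.mul_apply, Equiv.swap_apply_right]
  simp

lemma mg_claimPQ : ∀ k : ℕ,
    (∀ a b : Fin n, ((mg τ i') ^ k) a.castSucc = b.castSucc → τ.SameCycle a b) ∧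
    (∀ a : Fin n, ((mg τ i') ^ k) a.castSucc = Fin.last n → τ.SameCycle a i') := by
  intro k
  induction k with
  | zero =>
    constructor
    · intro a b h
      simp only [pow_zero, Equiv.Perm.one_apply] at h
      exact ⟨0, by simp [Fin.castSucc_injective n h]⟩
    · intro a h
      simp only [pow_zero, Equiv.Perm.one_apply] at h
      exact absurd h (Fin.castSucc_lt_last a).ne
  | succ k ih =>
    have hstep : ∀ x, ((mg τ i') ^ (k + 1)) x = (mg τ i') (((mg τ i') ^ k) x) := by
      intro x
      rw [pow_succ', Equiv.Perm.mul_apply]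
    constructor
    · intro a b h
      rw [hstep] at h
      rcases Fin.eq_castSucc_or_eq_last (((mg τ i') ^ k) a.castSucc) with ⟨c, hc⟩ | hl
      · rw [hc] at h
        have h1 : τ.SameCycle a c := ih.1 a c hc
        rcases eq_or_ne c i' with rfl | hcne
        · rw [mg_castSucc_self] at h
          exact absurd h.symm (Fin.castSucc_lt_last b).ne
        · rw [mg_castSucc_ne τ i' hcne] at h
          have hb : b = τ c := Fin.castSucc_injective n h.symm
          subst hb
          exact h1.trans ⟨1, by simp⟩
      · rw [hl, mg_last] at h
        have h1 : τ.SameCycle a i' := ih.2 a hl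
        have hb : b = τ i' := Fin.castSucc_injective n h.symm
        subst hb
        exact h1.trans ⟨1, by simp⟩
    · intro a h
      rw [hstep] at h
      rcases Fin.eq_castSucc_or_eq_last (((mg τ i') ^ k) a.castSucc) with ⟨c, hc⟩ | hl
      · rw [hc] at h
        have h1 : τ.SameCycle a c := ih.1 a c hc
        rcases eq_or_ne c i' with rfl | hcne
        · exact h1
        · rw [mg_castSucc_ne τ i' hcne] at h
          exact absurd h (Fin.castSucc_lt_last _).ne
      · rw [hl, mg_last] at h
        exact absurd h (Fin.castSucc_lt_last _).ne

lemma mg_claimR : ∀ (k : ℕ) (a : Fin n),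
    (mg τ i').SameCycle a.castSucc ((τ ^ k) a).castSucc := by
  intro k
  induction k with
  | zero => intro a; exact ⟨0, by simp⟩
  | succ k ih =>
    intro a
    have hck : (τ ^ (k + 1)) a = τ ((τ ^ k) a) := by
      rw [pow_succ', Equiv.Perm.mul_apply]
    rw [hck]
    refine (ih a).trans ?_
    set c := (τ ^ k) a with hc
    rcases eq_or_ne c i' with rfl | hc'
    · refine sameCycle_of_pow (k := 2) ?_
      have h2 : ((mg τ c) ^ 2) c.castSucc = (mg τ c) ((mg τ c) c.castSucc) := by
        rw [pow_succ', pow_one, Equiv.Perm.mul_apply]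
      rw [h2, mg_castSucc_self, mg_last]
    · exact sameCycle_of_pow (k := 1) (by rw [pow_one, mg_castSucc_ne τ i' hc'])

lemma mg_sameCycle_iff {a b : Fin n} :
    (mg τ i').SameCycle a.castSucc b.castSucc ↔ τ.SameCycle a b := by
  constructor
  · intro h
    obtain ⟨k, _, hk⟩ := h.exists_pow_eq'
    exact (mg_claimPQ τ i' k).1 a b hk
  · rintro ⟨z, hz⟩
    obtain ⟨k, _, hk⟩ := (Equiv.Perm.SameCycle.exists_pow_eq' ⟨z, hz⟩)
    have := mg_claimR τ i' k a
    rwa [hk] at this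

lemma permCyc_mg : permCyc (mg τ i') = permCyc τ := by
  unfold permCyc
  rw [Finset.card_filter, Finset.card_filter, Fin.sum_univ_castSucc]
  have hlast : ¬ (∀ m : Fin (n+1), (mg τ i').SameCycle (Fin.last n) m → Fin.last n ≤ m) := by
    intro h
    have h1 : (mg τ i').SameCycle i'.castSucc (Fin.last n) :=
      sameCycle_of_pow (k := 1) (by rw [pow_one, mg_castSucc_self])
    have := h i'.castSucc h1.symm
    exact absurd this (not_le.2 (Fin.castSucc_lt_last i'))
  rw [if_neg hlast, add_zero]
  apply Finset.sum_congr rfl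
  intro a _
  congr 1
  apply propext
  constructor
  · intro h b hb
    exact Fin.castSucc_le_castSucc_iff.1 (h b.castSucc ((mg_sameCycle_iff τ i').2 hb))
  · intro h m hm
    induction m using Fin.lastCases with
    | last => exact (Fin.castSucc_lt_last a).le
    | cast b => exact Fin.castSucc_le_castSucc_iff.2 (h b ((mg_sameCycle_iff τ i').1 hm))

end merged




def Einv {n : ℕ} (a : Fin (n + 1)) (τ : Equiv.Perm (Fin n)) : Equiv.Perm (Fin (n + 1)) :=
  a.cycleRange.symm * Equiv.Perm.decomposeFin.symm (0, τ)

@[simp] lemma Einv_zero {n : ℕ} (a : Fin (n + 1)) (τ : Equiv.Perm (Fin n)) :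
    Einv a τ 0 = a := by
  simp [Einv, Equiv.Perm.mul_apply]

@[simp] lemma Einv_succ {n : ℕ} (a : Fin (n + 1)) (τ : Equiv.Perm (Fin n)) (k : Fin n) :
    Einv a τ k.succ = a.succAbove (τ k) := by
  simp [Einv, Equiv.Perm.mul_apply, Equiv.Perm.decomposeFin_symm_apply_succ,
    Fin.cycleRange_symm_succ]

lemma card_filter_val_lt {n : ℕ} (a : Fin (n + 1)) :
    ∑ x : Fin n, (if (x : ℕ) < (a : ℕ) then 1 else 0) = (a : ℕ) := by
  rw [Fin.sum_univ_eq_sum_range (fun v => if v < (a : ℕ) then 1 else 0) n]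
  rw [← Finset.card_filter]
  have : Finset.filter (fun v => v < (a : ℕ)) (Finset.range n) = Finset.range (a : ℕ) := by
    ext v
    simp only [Finset.mem_filter, Finset.mem_range]
    omega
  rw [this, Finset.card_range]

lemma permInv_Einv {n : ℕ} (a : Fin (n + 1)) (τ : Equiv.Perm (Fin n)) :
    permInv (Einv a τ) = (a : ℕ) + permInv τ := by
  unfold permInv
  rw [Finset.card_filter, Finset.card_filter, Fintype.sum_prod_type, Fin.sum_univ_succ]
  have h0 : ∑ y : Fin (n + 1),
      (if (0 : Fin (n + 1)) < y ∧ Einv a τ y < Einv a τ 0 then 1 else 0) = (a : ℕ) := by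
    rw [Fin.sum_univ_succ]
    simp only [lt_self_iff_false, false_and, if_false, zero_add]
    have : ∀ j : Fin n,
        (if (0 : Fin (n+1)) < j.succ ∧ Einv a τ j.succ < Einv a τ 0 then 1 else 0)
        = (if ((τ j : ℕ)) < (a : ℕ) then 1 else 0) := by
      intro j
      congr 1
      simp only [Einv_zero, Einv_succ]
      rw [eq_iff_iff]
      constructor
      · rintro ⟨-, h⟩
        have := (Fin.succAbove_lt_iff_castSucc_lt a (τ j)).1 h
        simpa [Fin.lt_iff_val_lt_val] using this
      · intro h
        refine ⟨Fin.succ_pos _, (Fin.succAbove_lt_iff_castSucc_lt a (τ j)).2 ?_⟩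
        simpa [Fin.lt_iff_val_lt_val] using h
    rw [Finset.sum_congr rfl (fun j _ => this j)]
    rw [Equiv.sum_comp τ (fun x => if ((x : ℕ)) < (a : ℕ) then 1 else 0)]
    exact card_filter_val_lt a
  rw [h0]
  congr 1
  rw [Fintype.sum_prod_type]
  apply Finset.sum_congr rfl
  intro i _
  rw [Fin.sum_univ_succ]
  simp only [Fin.not_lt_zero, false_and, if_false, zero_add]
  apply Finset.sum_congr rfl
  intro j _
  congr 1
  rw [eq_iff_iff]
  simp only [Einv_succ, Fin.succ_lt_succ_iff, Fin.succAbove_lt_succAbove_iff]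

lemma permRlmin_Einv {n : ℕ} (a : Fin (n + 1)) (τ : Equiv.Perm (Fin n)) :
    permRlmin (Einv a τ) = (if (a : ℕ) = 0 then 1 else 0) + permRlmin τ := by
  unfold permRlmin
  rw [Finset.card_filter, Finset.card_filter, Fin.sum_univ_succ]
  congr 1
  · congr 1
    rw [eq_iff_iff]
    constructor
    · intro h
      by_contra ha
      have hn : 0 < n := by
        have := a.isLt
        omega
      set z : Fin n := ⟨0, hn⟩ with hz
      have h1 : a.succAbove (τ (τ.symm z)) = z.castSucc := by
        rw [Equiv.apply_symm_apply, Fin.succAbove_of_castSucc_lt]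
        rw [Fin.lt_iff_val_lt_val]
        simp [hz]
        exact Fin.lt_iff_val_lt_val.2 (by rw [Fin.val_zero]; omega)
      have h2 := h ((τ.symm z).succ) (Fin.succ_pos _)
      rw [Einv_zero, Einv_succ, h1, Fin.lt_iff_val_lt_val] at h2
      simp [hz] at h2
    · intro ha j hj
      have ha0 : a = 0 := Fin.ext (by simpa using ha)
      subst ha0
      induction j using Fin.cases with
      | zero => exact absurd hj (lt_irrefl _)
      | succ k =>
        rw [Einv_zero, Einv_succ, Fin.zero_succAbove]
        exact Fin.succ_pos _
  · apply Finset.sum_congr rfl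
    intro i _
    congr 1
    rw [eq_iff_iff]
    constructor
    · intro h m hm
      have := h m.succ (Fin.succ_lt_succ_iff.2 hm)
      rw [Einv_succ, Einv_succ, Fin.succAbove_lt_succAbove_iff] at this
      exact this
    · intro h j hj
      induction j using Fin.cases with
      | zero => exact absurd hj (Fin.not_lt_zero _).elim
      | succ m =>
        rw [Einv_succ, Einv_succ, Fin.succAbove_lt_succAbove_iff]
        exact h m (Fin.succ_lt_succ_iff.1 hj)

lemma mem_restricted_Einv {n : ℕ} (a : Fin (n + 1)) (τ : Equiv.Perm (Fin n))
    (r : Fin (n + 1) → ℕ) (hmono : Monotone r) (hr : ∀ k : Fin (n+1), (k : ℕ) + 1 ≤ r k) :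
    Einv a τ ∈ restrictedPerms (n + 1) r ↔
      ((a : ℕ) + 1 ≤ r 0 ∧ τ ∈ restrictedPerms n (fun k => r k.succ - 1)) := by
  simp only [restrictedPerms, Finset.mem_filter, Finset.mem_univ, true_and]
  constructor
  · intro h
    have ha := h 0
    rw [Einv_zero] at ha
    refine ⟨ha, ?_⟩
    intro k
    have hk := h k.succ
    rw [Einv_succ] at hk
    have hmon := hmono (Fin.zero_le k.succ)
    rcases lt_or_ge ((τ k).castSucc) a with hlt | hle
    · rw [Fin.succAbove_of_castSucc_lt _ _ hlt] at hk
      simp only [Fin.coe_castSucc] at hk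
      have : ((τ k : ℕ)) < (a : ℕ) := by simpa [Fin.lt_iff_val_lt_val] using hlt
      omega
    · rw [Fin.succAbove_of_le_castSucc _ _ hle] at hk
      simp only [Fin.val_succ] at hk
      omega
  · rintro ⟨ha, hτ⟩
    intro k
    induction k using Fin.cases with
    | zero => rw [Einv_zero]; exact ha
    | succ k =>
      rw [Einv_succ]
      have hmon := hmono (Fin.zero_le k.succ)
      have hb := hr k.succ
      have hτk := hτ k
      rcases lt_or_ge ((τ k).castSucc) a with hlt | hle
      · rw [Fin.succAbove_of_castSucc_lt _ _ hlt]
        simp only [Fin.coe_castSucc]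
        have : ((τ k : ℕ)) < (a : ℕ) := by simpa [Fin.lt_iff_val_lt_val] using hlt
        omega
      · rw [Fin.succAbove_of_le_castSucc _ _ hle]
        simp only [Fin.val_succ]
        omega

lemma sortSum_mapCS {n : ℕ} (l : List (Fin n × Fin n)) :
    ((mapCS l).map (fun p => (p.2 : ℕ) - (p.1 : ℕ))).sum
      = (l.map (fun p => (p.2 : ℕ) - (p.1 : ℕ))).sum := by
  rw [mapCS, List.map_map]
  congr 1

lemma eLast_mul_swap_last {n : ℕ} (τ : Equiv.Perm (Fin n)) :
    eLast τ * Equiv.swap (Fin.last n) (Fin.last n) = eLast τ := by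
  rw [Equiv.swap_self]
  rfl

lemma s_eLast {n : ℕ} (s : Equiv.Perm (Fin (n + 1)) → ℕ)
    (hs : ∀ σ l, IsSortFact σ l → s σ = (l.map (fun p => (p.2 : ℕ) - (p.1 : ℕ))).sum)
    (τ : Equiv.Perm (Fin n)) {l : List (Fin n × Fin n)} (hl : IsSortFact τ l) :
    s (eLast τ) = (l.map (fun p => (p.2 : ℕ) - (p.1 : ℕ))).sum := by
  rw [hs _ _ (isSortFact_eLast hl), sortSum_mapCS]

lemma s_mul_swap {n : ℕ} (s : Equiv.Perm (Fin (n + 1)) → ℕ)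
    (hs : ∀ σ l, IsSortFact σ l → s σ = (l.map (fun p => (p.2 : ℕ) - (p.1 : ℕ))).sum)
    (τ : Equiv.Perm (Fin n)) (i : Fin (n + 1)) :
    s (eLast τ * Equiv.swap i (Fin.last n)) = (n - (i : ℕ)) + s (eLast τ) := by
  obtain ⟨l, hl⟩ := exists_isSortFact n τ
  have h1 : s (eLast τ) = (l.map (fun p => (p.2 : ℕ) - (p.1 : ℕ))).sum := s_eLast s hs τ hl
  rcases eq_or_ne i (Fin.last n) with rfl | hi
  · rw [eLast_mul_swap_last]
    simp
  · obtain ⟨i', hi'⟩ := Fin.exists_castSucc_eq.2 hi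
    subst hi'
    rw [hs _ _ (isSortFact_eLast_swap hl i')]
    rw [List.map_append, List.sum_append, sortSum_mapCS, ← h1]
    simp [add_comm]

lemma mem_restricted_sor {n : ℕ} (τ : Equiv.Perm (Fin n)) (i : Fin (n + 1))
    (r : Fin (n + 1) → ℕ)
    (hr : ∀ k : Fin (n + 1), (k : ℕ) + 1 ≤ r k ∧ r k ≤ n + 1) :
    eLast τ * Equiv.swap i (Fin.last n) ∈ restrictedPerms (n + 1) r ↔
      (n + 1 ≤ r i ∧ τ ∈ restrictedPerms n (fun k => min (r k.castSucc) n)) := by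
  set σ := eLast τ * Equiv.swap i (Fin.last n) with hσ
  have happ_i : σ i = Fin.last n := by
    rw [hσ, Equiv.Perm.mul_apply, Equiv.swap_apply_left, eLast_last]
  have happ_last : σ (Fin.last n) = eLast τ i := by
    rw [hσ, Equiv.Perm.mul_apply, Equiv.swap_apply_right]
  have happ_cs : ∀ a : Fin n, a.castSucc ≠ i → σ a.castSucc = (τ a).castSucc := by
    intro a ha
    rw [hσ, Equiv.Perm.mul_apply,
      Equiv.swap_apply_of_ne_of_ne ha (Fin.castSucc_lt_last a).ne, eLast_castSucc]
  simp only [restrictedPerms, Finset.mem_filter, Finset.mem_univ, true_and]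
  constructor
  · intro h
    constructor
    · have := h i
      rw [happ_i] at this
      simpa using this
    · intro a
      rcases eq_or_ne a.castSucc i with hai | hai
      · have hri : n + 1 ≤ r i := by
          have := h i
          rw [happ_i] at this
          simpa using this
        have : min (r a.castSucc) n = n := by
          rw [hai]
          omega
        rw [this]
        exact (τ a).isLt
      · have := h a.castSucc
        rw [happ_cs a hai] at this
        simp only [Fin.coe_castSucc] at this
        have h2 : (τ a : ℕ) + 1 ≤ n := (τ a).isLt
        omega
  · rintro ⟨hi, hτ⟩
    intro k
    induction k using Fin.lastCases with
    | last =>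
      rcases eq_or_ne (Fin.last n) i with hli | hli
      · rw [← hli] at happ_i hi
        rw [happ_i]
        simpa using hi
      · have hrlast : n + 1 ≤ r (Fin.last n) := by
          have := (hr (Fin.last n)).1
          simpa using this
        rw [happ_last]
        rcases eq_or_ne i (Fin.last n) with h' | h'
        · exact absurd h'.symm hli
        · obtain ⟨i', hi'⟩ := Fin.exists_castSucc_eq.2 h'
          rw [← hi', eLast_castSucc]
          simp only [Fin.coe_castSucc]
          have := (τ i').isLt
          omega
    | cast a =>
      rcases eq_or_ne a.castSucc i with hai | hai
      · rw [hai, happ_i]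
        simp only [Fin.val_last]
        rw [← hai] at hi ⊢
        exact hi
      · rw [happ_cs a hai]
        simp only [Fin.coe_castSucc]
        have := hτ a
        omega

-- ## inverse maps for the two decompositions

def Dinv {n : ℕ} (σ : Equiv.Perm (Fin (n + 1))) : Equiv.Perm (Fin n) :=
  (Equiv.Perm.decomposeFin ((σ 0).cycleRange * σ)).2

lemma Einv_Dinv {n : ℕ} (σ : Equiv.Perm (Fin (n + 1))) : Einv (σ 0) (Dinv σ) = σ := by
  set a := σ 0 with ha
  set π := a.cycleRange * σ with hπ
  have hπ0 : π 0 = 0 := by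
    rw [hπ, Equiv.Perm.mul_apply, ← ha, Fin.cycleRange_self]
  have hfst : (Equiv.Perm.decomposeFin π).1 = 0 := by
    have h2 := Equiv.Perm.decomposeFin_symm_apply_zero
      (Equiv.Perm.decomposeFin π).1 (Equiv.Perm.decomposeFin π).2
    rw [Prod.mk.eta, Equiv.symm_apply_apply] at h2
    rw [← h2, hπ0]
  have hsymm : Equiv.Perm.decomposeFin.symm (0, Dinv σ) = π := by
    have : ((0 : Fin (n+1)), Dinv σ) = Equiv.Perm.decomposeFin π := by
      rw [Dinv]
      rw [← hπ, ← hfst]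
    rw [this, Equiv.symm_apply_apply]
  rw [Einv, hsymm, hπ]
  rw [← mul_assoc]
  have : a.cycleRange.symm * a.cycleRange = 1 := by
    ext x
    simp [Equiv.Perm.mul_apply]
  rw [this, one_mul]

lemma Einv_zero_eq {n : ℕ} (a : Fin (n + 1)) (τ : Equiv.Perm (Fin n)) : (Einv a τ) 0 = a :=
  Einv_zero a τ

lemma Dinv_Einv {n : ℕ} (a : Fin (n + 1)) (τ : Equiv.Perm (Fin n)) : Dinv (Einv a τ) = τ := by
  rw [Dinv, Einv_zero]
  have : a.cycleRange * Einv a τ = Equiv.Perm.decomposeFin.symm (0, τ) := by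
    rw [Einv, ← mul_assoc]
    have h1 : a.cycleRange * a.cycleRange.symm = 1 := by
      ext x
      simp [Equiv.Perm.mul_apply]
    rw [h1, one_mul]
  rw [this, Equiv.apply_symm_apply]

def restrictLast {n : ℕ} (π : Equiv.Perm (Fin (n + 1))) : Equiv.Perm (Fin n) :=
  if h : π (Fin.last n) = Fin.last n then
    { toFun := fun k => (π k.castSucc).castPred (by
        intro hc
        exact (Fin.castSucc_lt_last k).ne (π.injective (hc.trans h.symm)))
      invFun := fun k => (π⁻¹ k.castSucc).castPred (by
        intro hc
        have : k.castSucc = Fin.last n := by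
          have := congrArg π hc
          simpa [h] using this
        exact (Fin.castSucc_lt_last k).ne this)
      left_inv := fun k => by simp
      right_inv := fun k => by simp }
  else 1

lemma eLast_restrictLast {n : ℕ} (π : Equiv.Perm (Fin (n + 1))) (h : π (Fin.last n) = Fin.last n) :
    eLast (restrictLast π) = π := by
  ext x
  induction x using Fin.lastCases with
  | last => rw [eLast_last, h]
  | cast k =>
    rw [eLast_castSucc, restrictLast, dif_pos h]
    simp [eLast]

lemma restrictLast_eLast {n : ℕ} (τ : Equiv.Perm (Fin n)) : restrictLast (eLast τ) = τ := by
  ext k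
  rw [restrictLast, dif_pos (eLast_last τ)]
  simp only [Equiv.coe_fn_mk, eLast_castSucc]
  simp

def DS {n : ℕ} (σ : Equiv.Perm (Fin (n + 1))) : Fin (n + 1) × Equiv.Perm (Fin n) :=
  (σ⁻¹ (Fin.last n), restrictLast (σ * Equiv.swap (σ⁻¹ (Fin.last n)) (Fin.last n)))

def ES {n : ℕ} (p : Fin (n + 1) × Equiv.Perm (Fin n)) : Equiv.Perm (Fin (n + 1)) :=
  eLast p.2 * Equiv.swap p.1 (Fin.last n)

lemma ES_DS {n : ℕ} (σ : Equiv.Perm (Fin (n + 1))) : ES (DS σ) = σ := by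
  set i := σ⁻¹ (Fin.last n) with hi
  have hfix : (σ * Equiv.swap i (Fin.last n)) (Fin.last n) = Fin.last n := by
    rw [Equiv.Perm.mul_apply, Equiv.swap_apply_right, hi, ← Equiv.Perm.mul_apply, mul_inv_cancel, Equiv.Perm.one_apply]
  rw [ES, DS]
  rw [eLast_restrictLast _ hfix]
  rw [mul_assoc]
  simp [hi, Equiv.Perm.inv_def]

lemma DS_ES {n : ℕ} (p : Fin (n + 1) × Equiv.Perm (Fin n)) : DS (ES p) = p := by
  obtain ⟨i, τ⟩ := p
  have h1 : (ES (i, τ)) i = Fin.last n := by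
    rw [ES, Equiv.Perm.mul_apply, Equiv.swap_apply_left, eLast_last]
  have h2 : (ES (i, τ))⁻¹ (Fin.last n) = i := by
    rw [← h1, ← Equiv.Perm.mul_apply, inv_mul_cancel, Equiv.Perm.one_apply]
  rw [DS, h2]
  have h3 : ES (i, τ) * Equiv.swap i (Fin.last n) = eLast τ := by
    rw [ES, mul_assoc]
    simp
  rw [h3, restrictLast_eLast]

-- ## the algebra layer

variable {R : Type*} [CommRing R]

def factor (q t : R) (k rk : ℕ) : R := t + ∑ d ∈ Finset.range (rk - (k + 1)), q ^ (d + 1)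

lemma outer_sum_inv {n : ℕ} (q t : R) (r0 : ℕ) (h1 : 1 ≤ r0) (h2 : r0 ≤ n + 1) :
    ∑ a ∈ Finset.univ.filter (fun a : Fin (n + 1) => (a : ℕ) + 1 ≤ r0),
      q ^ (a : ℕ) * t ^ (if (a : ℕ) = 0 then 1 else 0)
    = factor q t 0 r0 := by
  rw [Finset.sum_filter]
  rw [Fin.sum_univ_eq_sum_range
    (fun v => if v + 1 ≤ r0 then q ^ v * t ^ (if v = 0 then 1 else 0) else 0) (n + 1)]
  have hsub : Finset.range r0 ⊆ Finset.range (n + 1) := Finset.range_subset_range.2 h2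
  rw [← Finset.sum_subset hsub (fun x _ hx => by
    have hx' := Finset.mem_range.not.1 hx
    rw [if_neg (by omega)])]
  have hstep : ∀ v ∈ Finset.range r0,
      (if v + 1 ≤ r0 then q ^ v * t ^ (if v = 0 then 1 else 0) else 0)
      = q ^ v * t ^ (if v = 0 then 1 else 0) := by
    intro v hv
    have := Finset.mem_range.1 hv
    rw [if_pos (by omega)]
  rw [Finset.sum_congr rfl hstep]
  rw [show Finset.range r0 = Finset.range ((r0 - 1) + 1) by congr 1; omega]
  rw [Finset.sum_range_succ']
  have e1 : ∀ d, q ^ (d + 1) * t ^ (if d + 1 = 0 then 1 else 0) = q ^ (d + 1) := by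
    intro d
    rw [if_neg (by omega), pow_zero, mul_one]
  rw [Finset.sum_congr rfl (fun d _ => e1 d)]
  have e2 : q ^ 0 * t ^ (if (0 : ℕ) = 0 then 1 else 0) = t := by
    rw [if_pos rfl, pow_zero, pow_one, one_mul]
  rw [e2, factor, add_comm]

lemma outer_sum_sor {n : ℕ} (q t : R) (r : Fin (n + 1) → ℕ) (m : Fin (n + 1))
    (hA : ∀ i : Fin (n + 1), n + 1 ≤ r i ↔ m ≤ i) :
    ∑ i ∈ Finset.univ.filter (fun i : Fin (n + 1) => n + 1 ≤ r i),
      q ^ (n - (i : ℕ)) * t ^ (if i = Fin.last n then 1 else 0)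
    = t + ∑ d ∈ Finset.range (n - (m : ℕ)), q ^ (d + 1) := by
  have hm : (m : ℕ) ≤ n := by omega
  rw [Finset.sum_nbij' (i := fun i : Fin (n + 1) => n - (i : ℕ))
    (j := fun d => (⟨n - d, by omega⟩ : Fin (n + 1)))
    (t := Finset.range (n + 1 - (m : ℕ)))
    (g := fun d => q ^ d * t ^ (if d = 0 then 1 else 0))
    ?_ ?_ ?_ ?_ ?_]
  · rw [show Finset.range (n + 1 - (m : ℕ)) = Finset.range ((n - (m : ℕ)) + 1) by
      congr 1; omega]
    rw [Finset.sum_range_succ']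
    have e1 : ∀ d, q ^ (d + 1) * t ^ (if d + 1 = 0 then 1 else 0) = q ^ (d + 1) := by
      intro d
      rw [if_neg (by omega), pow_zero, mul_one]
    rw [Finset.sum_congr rfl (fun d _ => e1 d)]
    have e2 : q ^ 0 * t ^ (if (0 : ℕ) = 0 then 1 else 0) = t := by
      rw [if_pos rfl, pow_zero, pow_one, one_mul]
    rw [e2, add_comm]
  · intro a hain
    simp only [Finset.mem_filter, Finset.mem_univ, true_and] at hain
    have := (hA a).1 hain
    have hma : (m : ℕ) ≤ (a : ℕ) := this
    simp only [Finset.mem_range]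
    omega
  · intro d hd
    simp only [Finset.mem_range] at hd
    simp only [Finset.mem_filter, Finset.mem_univ, true_and]
    refine (hA _).2 ?_
    rw [Fin.le_def]
    simp only
    omega
  · intro a hain
    simp only [Finset.mem_filter, Finset.mem_univ, true_and] at hain
    have ha : (a : ℕ) ≤ n := by omega
    apply Fin.ext
    simp only
    omega
  · intro d hd
    simp only [Finset.mem_range] at hd
    simp only
    omega
  · intro a hain
    simp only [Finset.mem_filter, Finset.mem_univ, true_and] at hain
    congr 1
    have ha : (a : ℕ) ≤ n := by omega
    have : a = Fin.last n ↔ n - (a : ℕ) = 0 := by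
      rw [Fin.ext_iff]
      simp only [Fin.val_last]
      omega
    by_cases h : a = Fin.last n
    · rw [if_pos h, if_pos (this.1 h)]
    · rw [if_neg h, if_neg (fun hc => h (this.2 hc))]

lemma prod_factor_inv {n : ℕ} (q t : R) (r : Fin (n + 1) → ℕ) :
    ∏ k : Fin (n + 1), factor q t (k : ℕ) (r k)
    = factor q t 0 (r 0) * ∏ k : Fin n, factor q t (k : ℕ) (r k.succ - 1) := by
  rw [Fin.prod_univ_succ]
  congr 1
  apply Finset.prod_congr rfl
  intro k _
  rw [factor, factor, Fin.val_succ]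
  have : r k.succ - ((k : ℕ) + 1 + 1) = r k.succ - 1 - ((k : ℕ) + 1) := by omega
  rw [this]

lemma prod_factor_sor {n : ℕ} (q t : R) (r : Fin (n + 1) → ℕ) (m : Fin (n + 1))
    (hA : ∀ i : Fin (n + 1), n + 1 ≤ r i ↔ m ≤ i)
    (hr : ∀ k : Fin (n + 1), (k : ℕ) + 1 ≤ r k ∧ r k ≤ n + 1) :
    ∏ k : Fin (n + 1), factor q t (k : ℕ) (r k)
    = (t + ∑ d ∈ Finset.range (n - (m : ℕ)), q ^ (d + 1))
      * ∏ k : Fin n, factor q t (k : ℕ) (min (r k.castSucc) n) := by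
  rw [Fin.prod_univ_succAbove _ m]
  congr 1
  · have hrm : r m = n + 1 := by
      have := (hA m).2 (le_refl m)
      have := (hr m).2
      omega
    rw [factor, hrm]
    have : n + 1 - ((m : ℕ) + 1) = n - (m : ℕ) := by omega
    rw [this]
  · apply Finset.prod_congr rfl
    intro k _
    rcases lt_or_ge k.castSucc m with hk | hk
    · rw [Fin.succAbove_of_castSucc_lt _ _ hk]
      have hnk : ¬ (n + 1 ≤ r k.castSucc) := by
        intro hc
        exact absurd ((hA _).1 hc) (not_le.2 hk)
      have hmin : min (r k.castSucc) n = r k.castSucc := min_eq_left (by omega)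
      rw [hmin, Fin.coe_castSucc]
    · rw [Fin.succAbove_of_le_castSucc _ _ hk]
      have h1 : n + 1 ≤ r k.succ := by
        refine (hA _).2 ?_
        exact le_trans hk Fin.castSucc_lt_succ.le
      have h2 : r k.succ = n + 1 := by
        have := (hr k.succ).2
        omega
      have h3 : n + 1 ≤ r k.castSucc := (hA _).2 hk
      have h4 : r k.castSucc = n + 1 := by
        have := (hr k.castSucc).2
        omega
      have h5 : min (r k.castSucc) n = n := min_eq_right (by omega)
      rw [h5, factor, factor, h2, Fin.val_succ]
      have : n + 1 - ((k : ℕ) + 1 + 1) = n - ((k : ℕ) + 1) := by omega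
      rw [this]

lemma permCyc_ES {n : ℕ} (p : Fin (n + 1) × Equiv.Perm (Fin n)) :
    permCyc (ES p) = (if p.1 = Fin.last n then 1 else 0) + permCyc p.2 := by
  obtain ⟨i, τ⟩ := p
  rcases eq_or_ne i (Fin.last n) with rfl | hi
  · have : ES (Fin.last n, τ) = eLast τ := eLast_mul_swap_last τ
    rw [this, permCyc_eLast, if_pos rfl, add_comm]
  · obtain ⟨i', hi'⟩ := Fin.exists_castSucc_eq.2 hi
    have : ES (i, τ) = mg τ i' := by
      rw [ES, mg, hi']
    rw [this, permCyc_mg, if_neg hi, zero_add]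

lemma invSide (q t : R) : ∀ (n : ℕ) (r : Fin n → ℕ), Monotone r →
    (∀ k : Fin n, (k : ℕ) + 1 ≤ r k ∧ r k ≤ n) →
    ∑ σ ∈ restrictedPerms n r, q ^ permInv σ * t ^ permRlmin σ
      = ∏ k : Fin n, factor q t (k : ℕ) (r k) := by
  intro n
  induction n with
  | zero =>
    intro r _ _
    rw [Fin.prod_univ_zero]
    have h1 : restrictedPerms 0 r = Finset.univ := by
      rw [restrictedPerms]
      apply Finset.filter_true_of_mem
      intro σ _ k
      exact absurd k.2 (by omega)
    rw [h1, Finset.univ_unique, Finset.sum_singleton]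
    have h2 : permInv (default : Equiv.Perm (Fin 0)) = 0 :=
      Nat.le_zero.1 (le_trans (Finset.card_filter_le _ _) (by simp))
    have h3 : permRlmin (default : Equiv.Perm (Fin 0)) = 0 :=
      Nat.le_zero.1 (le_trans (Finset.card_filter_le _ _) (by simp))
    rw [h2, h3, pow_zero, pow_zero, one_mul]
  | succ n ih =>
    intro r hmono hr
    have hmono' : Monotone (fun k : Fin n => r k.succ - 1) := by
      intro a b hab
      exact Nat.sub_le_sub_right (hmono (Fin.succ_le_succ_iff.2 hab)) 1
    have hr'b : ∀ k : Fin n, (k : ℕ) + 1 ≤ r k.succ - 1 ∧ r k.succ - 1 ≤ n := by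
      intro k
      have h1 := (hr k.succ).1
      have h2 := (hr k.succ).2
      rw [Fin.val_succ] at h1
      constructor <;> omega
    have hsum : ∑ σ ∈ restrictedPerms (n + 1) r, q ^ permInv σ * t ^ permRlmin σ
        = ∑ p ∈ (Finset.univ.filter (fun a : Fin (n + 1) => (a : ℕ) + 1 ≤ r 0))
            ×ˢ restrictedPerms n (fun k => r k.succ - 1),
            q ^ permInv (Einv p.1 p.2) * t ^ permRlmin (Einv p.1 p.2) := by
      refine Finset.sum_nbij' (fun σ => (σ 0, Dinv σ)) (fun p => Einv p.1 p.2)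
        ?_ ?_ ?_ ?_ ?_
      · intro σ hσ
        rw [← Einv_Dinv σ] at hσ
        have h := (mem_restricted_Einv (σ 0) (Dinv σ) r hmono (fun k => (hr k).1)).1 hσ
        rw [Finset.mem_product]
        exact ⟨Finset.mem_filter.2 ⟨Finset.mem_univ _, h.1⟩, h.2⟩
      · intro p hp
        rw [Finset.mem_product] at hp
        exact (mem_restricted_Einv p.1 p.2 r hmono (fun k => (hr k).1)).2
          ⟨(Finset.mem_filter.1 hp.1).2, hp.2⟩
      · intro σ _
        exact Einv_Dinv σ
      · intro p _
        exact Prod.ext (Einv_zero p.1 p.2) (Dinv_Einv p.1 p.2)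
      · intro σ _
        rw [Einv_Dinv σ]
    rw [hsum]
    have hpt : ∀ p ∈ (Finset.univ.filter (fun a : Fin (n + 1) => (a : ℕ) + 1 ≤ r 0))
        ×ˢ restrictedPerms n (fun k => r k.succ - 1),
        q ^ permInv (Einv p.1 p.2) * t ^ permRlmin (Einv p.1 p.2)
        = (q ^ (p.1 : ℕ) * t ^ (if (p.1 : ℕ) = 0 then 1 else 0))
          * (q ^ permInv p.2 * t ^ permRlmin p.2) := by
      intro p _
      rw [permInv_Einv, permRlmin_Einv, pow_add, pow_add]
      ring
    rw [Finset.sum_congr rfl hpt]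
    rw [Finset.sum_product]
    dsimp only
    rw [← Finset.sum_mul_sum (f := fun a : Fin (n + 1) => q ^ (a : ℕ) * t ^ (if (a : ℕ) = 0 then 1 else 0)) (g := fun τ : Equiv.Perm (Fin n) => q ^ permInv τ * t ^ permRlmin τ)]
    rw [outer_sum_inv q t (r 0) (by have := (hr 0).1; omega) (hr 0).2]
    rw [ih _ hmono' hr'b]
    rw [prod_factor_inv q t r]

lemma sorSide (q t : R) : ∀ (n : ℕ) (r : Fin n → ℕ), Monotone r →
    (∀ k : Fin n, (k : ℕ) + 1 ≤ r k ∧ r k ≤ n) →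
    ∀ s : Equiv.Perm (Fin n) → ℕ,
    (∀ σ l, IsSortFact σ l → s σ = (l.map (fun p => (p.2 : ℕ) - (p.1 : ℕ))).sum) →
    ∑ σ ∈ restrictedPerms n r, q ^ s σ * t ^ permCyc σ
      = ∏ k : Fin n, factor q t (k : ℕ) (r k) := by
  intro n
  induction n with
  | zero =>
    intro r _ _ s hs
    rw [Fin.prod_univ_zero]
    have h1 : restrictedPerms 0 r = Finset.univ := by
      rw [restrictedPerms]
      apply Finset.filter_true_of_mem
      intro σ _ k
      exact absurd k.2 (by omega)
    rw [h1, Finset.univ_unique, Finset.sum_singleton]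
    have h2 : s (default : Equiv.Perm (Fin 0)) = 0 := by
      rw [hs default []]
      · rfl
      · exact ⟨by simp, by simp, Subsingleton.elim _ _⟩
    have h3 : permCyc (default : Equiv.Perm (Fin 0)) = 0 :=
      Nat.le_zero.1 (le_trans (Finset.card_filter_le _ _) (by simp))
    rw [h2, h3, pow_zero, pow_zero, one_mul]
  | succ n ih =>
    intro r hmono hr s hs
    have hmono'' : Monotone (fun k : Fin n => min (r k.castSucc) n) := by
      intro a b hab
      exact min_le_min (hmono (Fin.castSucc_le_castSucc_iff.2 hab)) le_rfl
    have hr''b : ∀ k : Fin n, (k : ℕ) + 1 ≤ min (r k.castSucc) n ∧ min (r k.castSucc) n ≤ n := by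
      intro k
      have h1 := (hr k.castSucc).1
      rw [Fin.coe_castSucc] at h1
      have h2 : (k : ℕ) < n := k.isLt
      exact ⟨le_min (by omega) (by omega), min_le_right _ _⟩
    have hAlast : Fin.last n ∈ Finset.univ.filter (fun i : Fin (n + 1) => n + 1 ≤ r i) := by
      rw [Finset.mem_filter]
      refine ⟨Finset.mem_univ _, ?_⟩
      have := (hr (Fin.last n)).1
      rwa [Fin.val_last] at this
    set A := Finset.univ.filter (fun i : Fin (n + 1) => n + 1 ≤ r i) with hAdef
    set m := A.min' ⟨Fin.last n, hAlast⟩ with hmdef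
    have hA : ∀ i : Fin (n + 1), n + 1 ≤ r i ↔ m ≤ i := by
      intro i
      constructor
      · intro h
        exact Finset.min'_le A i (Finset.mem_filter.2 ⟨Finset.mem_univ _, h⟩)
      · intro h
        have hm' : n + 1 ≤ r m := (Finset.mem_filter.1 (A.min'_mem _)).2
        exact le_trans hm' (hmono h)
    have hsum : ∑ σ ∈ restrictedPerms (n + 1) r, q ^ s σ * t ^ permCyc σ
        = ∑ p ∈ A ×ˢ restrictedPerms n (fun k => min (r k.castSucc) n),
            q ^ s (ES p) * t ^ permCyc (ES p) := by
      refine Finset.sum_nbij' DS ES ?_ ?_ ?_ ?_ ?_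
      · intro σ hσ
        rw [← ES_DS σ] at hσ
        have h := (mem_restricted_sor (DS σ).2 (DS σ).1 r hr).1 hσ
        rw [Finset.mem_product]
        exact ⟨Finset.mem_filter.2 ⟨Finset.mem_univ _, h.1⟩, h.2⟩
      · intro p hp
        rw [Finset.mem_product] at hp
        exact (mem_restricted_sor p.2 p.1 r hr).2 ⟨(Finset.mem_filter.1 hp.1).2, hp.2⟩
      · intro σ _
        exact ES_DS σ
      · intro p _
        exact DS_ES p
      · intro σ _
        rw [ES_DS σ]
    rw [hsum]
    have hpt : ∀ p ∈ A ×ˢ restrictedPerms n (fun k => min (r k.castSucc) n),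
        q ^ s (ES p) * t ^ permCyc (ES p)
        = (q ^ (n - (p.1 : ℕ)) * t ^ (if p.1 = Fin.last n then 1 else 0))
          * (q ^ s (eLast p.2) * t ^ permCyc p.2) := by
      intro p _
      rw [show ES p = eLast p.2 * Equiv.swap p.1 (Fin.last n) from rfl]
      rw [s_mul_swap s hs p.2 p.1]
      have := permCyc_ES p
      rw [show ES p = eLast p.2 * Equiv.swap p.1 (Fin.last n) from rfl] at this
      rw [this, pow_add, pow_add]
      ring
    rw [Finset.sum_congr rfl hpt]
    rw [Finset.sum_product]
    dsimp only
    rw [← Finset.sum_mul_sum (f := fun a : Fin (n + 1) => q ^ (n - (a : ℕ)) * t ^ (if a = Fin.last n then 1 else 0)) (g := fun τ : Equiv.Perm (Fin n) => q ^ s (eLast τ) * t ^ permCyc τ)]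
    rw [outer_sum_sor q t r m hA]
    rw [ih _ hmono'' hr''b (fun τ => s (eLast τ)) (fun τ l hl => s_eLast s hs τ hl)]
    rw [prod_factor_sor q t r m hA hr]

theorem final (n : ℕ) (r : Fin n → ℕ) (hmono : Monotone r)
    (hr : ∀ k : Fin n, (k : ℕ) + 1 ≤ r k ∧ r k ≤ n)
    (sor : Equiv.Perm (Fin n) → ℕ)
    (hsor : ∀ (σ : Equiv.Perm (Fin n)) (l : List (Fin n × Fin n)),
      IsSortFact σ l → sor σ = (l.map (fun p => (p.2 : ℕ) - (p.1 : ℕ))).sum)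
    (R : Type*) [CommRing R] (q t : R) :
    ∑ σ ∈ restrictedPerms n r, q ^ sor σ * t ^ permCyc σ
      = ∑ σ ∈ restrictedPerms n r, q ^ permInv σ * t ^ permRlmin σ := by
  rw [sorSide q t n r hmono hr sor hsor, invSide q t n r hmono hr]

end SCIR

/-- On `S_r`, `(sor, cyc)` and `(inv, rlmin)` have the same joint distribution. -/
theorem sor_cyc_eq_inv_rlmin_restricted (n : ℕ) (r : Fin n → ℕ) (hmono : Monotone r)
    (hr : ∀ k : Fin n, (k : ℕ) + 1 ≤ r k ∧ r k ≤ n)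
    (sor : Equiv.Perm (Fin n) → ℕ)
    (hsor : ∀ (σ : Equiv.Perm (Fin n)) (l : List (Fin n × Fin n)),
      IsSortFact σ l → sor σ = (l.map (fun p => (p.2 : ℕ) - (p.1 : ℕ))).sum)
    (R : Type*) [CommRing R] (q t : R) :
    ∑ σ ∈ restrictedPerms n r, q ^ sor σ * t ^ permCyc σ
      = ∑ σ ∈ restrictedPerms n r, q ^ permInv σ * t ^ permRlmin σ :=
  SCIR.final n r hmono hr sor hsor R q t
end

section
/- Let r = (r_1,...,r_n) be a nondecreasing sequence of integers with k ≤ r_k ≤ n for all k. For any fixed σ_0 in S_r, the sum over σ in S_r of t^{cyc(σ σ_0^{-1})} equals Π_{k=1}^n (t + r_k − k). In particular, this sum does not depend on the choice of σ_0 ∈ S_r. -/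
open Equiv Equiv.Perm Finset

section Aux
variable {n : ℕ}

lemma sameCycle_iff_nat (σ : Perm (Fin n)) (x y : Fin n) :
    σ.SameCycle x y ↔ ∃ i : ℕ, (σ ^ i) x = y := by
  constructor
  · intro h
    obtain ⟨i, _, hi⟩ := h.exists_pow_eq'
    exact ⟨i, hi⟩
  · rintro ⟨i, rfl⟩
    exact ⟨(i : ℤ), by rw [zpow_natCast]⟩

lemma sameCycle_map {m : ℕ} (σ : Perm (Fin n)) (τ : Perm (Fin m)) (g : Fin n → Fin m)
    (hg : ∀ x, τ.SameCycle (g x) (g (σ x))) :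
    ∀ {x y}, σ.SameCycle x y → τ.SameCycle (g x) (g y) := by
  have key : ∀ (i : ℕ) (x), τ.SameCycle (g x) (g ((σ ^ i) x)) := by
    intro i
    induction i with
    | zero => intro x; simp [Equiv.Perm.SameCycle.refl]
    | succ i ih =>
      intro x
      have h1 : (σ ^ (i+1)) x = (σ ^ i) (σ x) := by
        rw [pow_succ, Equiv.Perm.mul_apply]
      rw [h1]
      exact (hg x).trans (ih (σ x))
  intro x y h
  rw [sameCycle_iff_nat] at h
  obtain ⟨i, rfl⟩ := h
  exact key i x

lemma card_filter_fin_succ (P : Fin (n+1) → Prop) [DecidablePred P] :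
    (univ.filter P).card
      = (if P 0 then 1 else 0) + (univ.filter (fun j : Fin n => P j.succ)).card := by
  rw [Finset.card_filter, Finset.card_filter, Fin.sum_univ_succ]

lemma card_fin_lt (v : ℕ) (hv : v ≤ n) :
    (univ.filter (fun j : Fin n => (j : ℕ) < v)).card = v := by
  have h := Finset.card_bij' (s := univ.filter (fun j : Fin n => (j : ℕ) < v))
    (t := Finset.range v)
    (fun j _ => (j : ℕ)) (fun m hm => (⟨m, lt_of_lt_of_le (Finset.mem_range.mp hm) hv⟩ : Fin n))
    (fun a ha => Finset.mem_range.mpr (Finset.mem_filter.mp ha).2)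
    (fun m hm => by simp [Finset.mem_range.mp hm])
    (fun a ha => rfl) (fun m hm => rfl)
  rw [h, Finset.card_range]

end Aux

section Dec
variable {n : ℕ}

lemma decomposeFin_succ_succ (σ' : Perm (Fin n)) (q : Fin n) (j : Fin n) :
    decomposeFin.symm (q.succ, σ') j.succ = if σ' j = q then 0 else (σ' j).succ := by
  rw [Equiv.Perm.decomposeFin_symm_apply_succ]
  rcases eq_or_ne (σ' j) q with h | h
  · simp [h, Equiv.swap_apply_right]
  · rw [Equiv.swap_apply_of_ne_of_ne (Fin.succ_ne_zero _) (by simpa [Fin.succ_inj] using h),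
      if_neg h]

lemma permCyc_decompose_zero (σ' : Perm (Fin n)) :
    permCyc (decomposeFin.symm (0, σ')) = permCyc σ' + 1 := by
  set σ := decomposeFin.symm ((0 : Fin (n+1)), σ') with hσ
  have h0 : σ 0 = 0 := by simp [hσ]
  have hs : ∀ x : Fin n, σ x.succ = (σ' x).succ := by
    intro x; simp [hσ]
  have hpow : ∀ (i : ℕ) (j : Fin n), (σ ^ i) j.succ = ((σ' ^ i) j).succ := by
    intro i
    induction i with
    | zero => simp
    | succ i ih =>
      intro j
      have h1 : (σ ^ (i+1)) j.succ = (σ ^ i) (σ j.succ) := by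
        rw [pow_succ, Equiv.Perm.mul_apply]
      have h2 : ((σ' ^ (i+1)) j) = (σ' ^ i) (σ' j) := by
        rw [pow_succ, Equiv.Perm.mul_apply]
      rw [h1, h2, hs, ih]
  have hpow0 : ∀ i : ℕ, (σ ^ i) 0 = 0 := by
    intro i
    induction i with
    | zero => simp
    | succ i ih =>
      have h1 : (σ ^ (i+1)) 0 = (σ ^ i) (σ 0) := by rw [pow_succ, Equiv.Perm.mul_apply]
      rw [h1, h0, ih]
  have hzero : ∀ y, σ.SameCycle 0 y → y = 0 := by
    intro y h
    rw [sameCycle_iff_nat] at h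
    obtain ⟨i, rfl⟩ := h
    exact hpow0 i
  have hsucc : ∀ j m : Fin n, σ.SameCycle j.succ m.succ ↔ σ'.SameCycle j m := by
    intro j m
    rw [sameCycle_iff_nat, sameCycle_iff_nat]
    constructor
    · rintro ⟨i, hi⟩
      refine ⟨i, ?_⟩
      rw [hpow] at hi
      exact Fin.succ_injective _ hi
    · rintro ⟨i, hi⟩
      exact ⟨i, by rw [hpow, hi]⟩
  unfold permCyc
  rw [card_filter_fin_succ]
  rw [if_pos (fun m _ => Fin.zero_le m)]
  rw [add_comm]
  congr 1
  have hfilt : (univ.filter (fun j : Fin n => ∀ m : Fin (n+1), σ.SameCycle j.succ m → j.succ ≤ m))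
       = (univ.filter (fun j : Fin n => ∀ m : Fin n, σ'.SameCycle j m → j ≤ m)) := by
    apply Finset.filter_congr
    intro j _
    constructor
    · intro H m hm
      have := H m.succ ((hsucc j m).mpr hm)
      exact Fin.succ_le_succ_iff.mp this
    · intro H m hm
      rcases Fin.eq_zero_or_eq_succ m with rfl | ⟨m', rfl⟩
      · exact absurd (hzero j.succ hm.symm) (Fin.succ_ne_zero j)
      · exact Fin.succ_le_succ_iff.mpr (H m' ((hsucc j m').mp hm))
  rw [hfilt]


lemma permCyc_decompose_succ (σ' : Perm (Fin n)) (q : Fin n) :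
    permCyc (decomposeFin.symm (q.succ, σ')) = permCyc σ' := by
  set σ := decomposeFin.symm (q.succ, σ') with hσdef
  have h0 : σ 0 = q.succ := by simp [hσdef]
  have hs : ∀ x : Fin n, σ x.succ = if σ' x = q then 0 else (σ' x).succ :=
    fun x => decomposeFin_succ_succ σ' q x
  set f : Fin (n+1) → Fin n := Fin.cases q id with hfdef
  have hf0 : f 0 = q := rfl
  have hfs : ∀ j : Fin n, f j.succ = j := fun j => by simp [hfdef]
  have fwd : ∀ {x y}, σ.SameCycle x y → σ'.SameCycle (f x) (f y) := by
    apply sameCycle_map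
    intro x
    rcases Fin.eq_zero_or_eq_succ x with rfl | ⟨j, rfl⟩
    · rw [h0, hf0, hfs]
    · rw [hs, hfs]
      rcases eq_or_ne (σ' j) q with h | h
      · rw [if_pos h, hf0, ← h]
        exact ⟨1, by simp⟩
      · rw [if_neg h, hfs]
        exact ⟨1, by simp⟩
  have bwd : ∀ {a b}, σ'.SameCycle a b → σ.SameCycle a.succ b.succ := by
    apply sameCycle_map
    intro x
    rcases eq_or_ne (σ' x) q with h | h
    · refine (sameCycle_iff_nat σ _ _).mpr ⟨2, ?_⟩
      have : (σ ^ 2) x.succ = σ (σ x.succ) := by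
        rw [pow_two, Equiv.Perm.mul_apply]
      rw [this, hs, if_pos h, h0, h]
    · exact (sameCycle_iff_nat σ _ _).mpr ⟨1, by rw [pow_one, hs, if_neg h]⟩
  have hxf : ∀ x : Fin (n+1), σ.SameCycle x (f x).succ := by
    intro x
    rcases Fin.eq_zero_or_eq_succ x with rfl | ⟨j, rfl⟩
    · rw [hf0]
      exact (sameCycle_iff_nat σ _ _).mpr ⟨1, by rw [pow_one, h0]⟩
    · rw [hfs]
  have hiff : ∀ x y, σ.SameCycle x y ↔ σ'.SameCycle (f x) (f y) := by
    intro x y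
    constructor
    · exact fwd
    · intro h
      exact (hxf x).trans ((bwd h).trans (hxf y).symm)
  -- count minima
  unfold permCyc
  rw [card_filter_fin_succ]
  rw [if_pos (fun m _ => Fin.zero_le m)]
  have hPs : (univ.filter (fun j : Fin n => ∀ m : Fin (n+1), σ.SameCycle j.succ m → j.succ ≤ m))
      = (univ.filter (fun j : Fin n =>
          (∀ m : Fin n, σ'.SameCycle j m → j ≤ m) ∧ ¬ σ'.SameCycle j q)) := by
    apply Finset.filter_congr
    intro j _
    constructor
    · intro H
      constructor
      · intro m hm
        have := H m.succ ((hiff j.succ m.succ).mpr (by rwa [hfs, hfs]))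
        exact Fin.succ_le_succ_iff.mp this
      · intro hq
        have := H 0 ((hiff j.succ 0).mpr (by rwa [hfs, hf0]))
        exact absurd (Fin.le_zero_iff.mp this) (Fin.succ_ne_zero j)
    · rintro ⟨H, hq⟩ m hm
      rw [hiff, hfs] at hm
      rcases Fin.eq_zero_or_eq_succ m with rfl | ⟨m', rfl⟩
      · rw [hf0] at hm
        exact absurd hm hq
      · rw [hfs] at hm
        exact Fin.succ_le_succ_iff.mpr (H m' hm)
  rw [hPs]
  -- split minima of σ' by whether in cycle of q
  have hsplit : (univ.filter (fun j : Fin n =>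
          (∀ m : Fin n, σ'.SameCycle j m → j ≤ m) ∧ σ'.SameCycle j q)).card
      + (univ.filter (fun j : Fin n =>
          (∀ m : Fin n, σ'.SameCycle j m → j ≤ m) ∧ ¬ σ'.SameCycle j q)).card
      = (univ.filter (fun k : Fin n => ∀ m : Fin n, σ'.SameCycle k m → k ≤ m)).card := by
    rw [← Finset.filter_filter, ← Finset.filter_filter]
    exact Finset.card_filter_add_card_filter_not _
  -- the first filter is a singleton
  have hne : (univ.filter (fun m : Fin n => σ'.SameCycle q m)).Nonempty :=
    ⟨q, Finset.mem_filter.mpr ⟨Finset.mem_univ _, Equiv.Perm.SameCycle.refl _ _⟩⟩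
  set c := (univ.filter (fun m : Fin n => σ'.SameCycle q m)).min' hne with hcdef
  have hcq : σ'.SameCycle q c :=
    (Finset.mem_filter.mp ((univ.filter (fun m : Fin n => σ'.SameCycle q m)).min'_mem hne)).2
  have hcmin : ∀ m : Fin n, σ'.SameCycle c m → c ≤ m := by
    intro m hm
    exact Finset.min'_le _ m (Finset.mem_filter.mpr ⟨Finset.mem_univ _, hcq.trans hm⟩)
  have hsing : (univ.filter (fun j : Fin n =>
          (∀ m : Fin n, σ'.SameCycle j m → j ≤ m) ∧ σ'.SameCycle j q)) = {c} := by
    ext j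
    simp only [Finset.mem_filter, Finset.mem_univ, true_and, Finset.mem_singleton]
    constructor
    · rintro ⟨H, hq⟩
      exact le_antisymm (H c (hq.trans hcq)) (hcmin j (hcq.symm.trans hq.symm))
    · rintro rfl
      exact ⟨hcmin, hcq.symm⟩
  rw [hsing] at hsplit
  simp only [Finset.card_singleton] at hsplit
  omega

lemma permCyc_rev_conj (τ : Perm (Fin n)) :
    permCyc (Fin.revPerm * τ * Fin.revPerm) = permCyc τ := by
  have hinv : (Fin.revPerm : Perm (Fin n))⁻¹ = Fin.revPerm := Fin.revPerm_symm
  have hconj : ∀ x y : Fin n, (Fin.revPerm * τ * Fin.revPerm).SameCycle x y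
      ↔ τ.SameCycle x.rev y.rev := by
    intro x y
    conv_lhs => rw [show (Fin.revPerm * τ * Fin.revPerm : Perm (Fin n))
      = Fin.revPerm * τ * Fin.revPerm⁻¹ by rw [hinv]]
    rw [Equiv.Perm.sameCycle_conj, hinv]
    rfl
  -- minima of conjugate = maxima of τ
  have h1 : permCyc (Fin.revPerm * τ * Fin.revPerm)
      = (univ.filter (fun k : Fin n => ∀ m : Fin n, τ.SameCycle k m → m ≤ k)).card := by
    unfold permCyc
    apply Finset.card_bij' (fun k _ => k.rev) (fun k _ => k.rev)
    · intro k _; exact Fin.rev_rev k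
    · intro k _; exact Fin.rev_rev k
    · intro k hk
      simp only [Finset.mem_filter, Finset.mem_univ, true_and] at hk ⊢
      intro m hm
      have h2 := hk m.rev ((hconj k m.rev).mpr (by rwa [Fin.rev_rev]))
      rw [← Fin.rev_rev m, Fin.rev_le_rev]
      exact h2
    · intro k hk
      simp only [Finset.mem_filter, Finset.mem_univ, true_and] at hk ⊢
      intro m hm
      rw [hconj, Fin.rev_rev] at hm
      have h2 := hk m.rev hm
      rw [← Fin.rev_rev m, Fin.rev_le_rev]
      exact h2
  rw [h1]
  -- maxima count = minima count
  unfold permCyc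
  have hne : ∀ k : Fin n, (univ.filter (fun m : Fin n => τ.SameCycle k m)).Nonempty :=
    fun k => ⟨k, Finset.mem_filter.mpr ⟨Finset.mem_univ _, Equiv.Perm.SameCycle.refl _ _⟩⟩
  set mn : Fin n → Fin n := fun k => (univ.filter (fun m : Fin n => τ.SameCycle k m)).min' (hne k)
    with hmndef
  set mx : Fin n → Fin n := fun k => (univ.filter (fun m : Fin n => τ.SameCycle k m)).max' (hne k)
    with hmxdef
  have hmn_cyc : ∀ k, τ.SameCycle k (mn k) :=
    fun k => (Finset.mem_filter.mp (Finset.min'_mem _ (hne k))).2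
  have hmx_cyc : ∀ k, τ.SameCycle k (mx k) :=
    fun k => (Finset.mem_filter.mp (Finset.max'_mem _ (hne k))).2
  have hmn_le : ∀ k m, τ.SameCycle k m → mn k ≤ m :=
    fun k m hm => Finset.min'_le _ m (Finset.mem_filter.mpr ⟨Finset.mem_univ _, hm⟩)
  have hmx_ge : ∀ k m, τ.SameCycle k m → m ≤ mx k :=
    fun k m hm => Finset.le_max' _ m (Finset.mem_filter.mpr ⟨Finset.mem_univ _, hm⟩)
  have hmn_congr : ∀ k k', τ.SameCycle k k' → mn k = mn k' := by
    intro k k' h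
    have : (univ.filter (fun m : Fin n => τ.SameCycle k m))
        = (univ.filter (fun m : Fin n => τ.SameCycle k' m)) := by
      apply Finset.filter_congr
      intro m _
      exact ⟨fun hm => h.symm.trans hm, fun hm => h.trans hm⟩
    simp only [hmndef]
    congr 1
  have hmx_congr : ∀ k k', τ.SameCycle k k' → mx k = mx k' := by
    intro k k' h
    have : (univ.filter (fun m : Fin n => τ.SameCycle k m))
        = (univ.filter (fun m : Fin n => τ.SameCycle k' m)) := by
      apply Finset.filter_congr
      intro m _
      exact ⟨fun hm => h.symm.trans hm, fun hm => h.trans hm⟩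
    simp only [hmxdef]
    congr 1
  apply Finset.card_bij' (fun k _ => mn k) (fun k _ => mx k)
  case hi =>
    intro k hk
    simp only [Finset.mem_filter, Finset.mem_univ, true_and] at hk ⊢
    intro m hm
    exact hmn_le k m ((hmn_cyc k).trans hm)
  case hj =>
    intro k hk
    simp only [Finset.mem_filter, Finset.mem_univ, true_and] at hk ⊢
    intro m hm
    exact hmx_ge k m ((hmx_cyc k).trans hm)
  · intro k hk
    simp only [Finset.mem_filter, Finset.mem_univ, true_and] at hk
    rw [hmx_congr _ _ (hmn_cyc k).symm]
    exact le_antisymm (hk (mx k) (hmx_cyc k)) (hmx_ge k k (Equiv.Perm.SameCycle.refl _ _))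
  · intro k hk
    simp only [Finset.mem_filter, Finset.mem_univ, true_and] at hk
    rw [hmn_congr _ _ (hmx_cyc k).symm]
    exact le_antisymm (hmn_le k k (Equiv.Perm.SameCycle.refl _ _)) (hk (mn k) (hmn_cyc k))

lemma key_lower (R : Type*) [CommRing R] (t : R) :
    ∀ (n : ℕ) (b : Fin n → ℕ), (∀ i : Fin n, b i ≤ (i : ℕ)) →
    ∑ σ ∈ univ.filter (fun σ : Perm (Fin n) => ∀ i : Fin n, b i ≤ (σ i : ℕ)), t ^ permCyc σ
      = ∏ k : Fin n,
          (t + ((univ.filter (fun i : Fin n => (k : ℕ) < (i : ℕ) ∧ b i ≤ (k : ℕ))).card : R)) := by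
  intro n
  induction n with
  | zero =>
    intro b hb
    rw [Fintype.prod_empty]
    rw [Finset.filter_true_of_mem (fun σ _ => fun i => i.elim0)]
    rw [show (univ : Finset (Perm (Fin 0))) = {1} from Finset.univ_unique]
    rw [Finset.sum_singleton]
    have h2 : permCyc (1 : Perm (Fin 0)) = 0 := by
      unfold permCyc
      rw [Finset.univ_eq_empty, Finset.filter_empty, Finset.card_empty]
    rw [h2, pow_zero]
  | succ n IH =>
    intro b hb
    set b' : Fin n → ℕ := fun j => b j.succ - 1 with hb'def
    have hb' : ∀ j : Fin n, b' j ≤ (j : ℕ) := by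
      intro j
      have := hb j.succ
      rw [Fin.val_succ] at this
      simp only [hb'def]
      omega
    set m : ℕ := (univ.filter (fun j : Fin n => b j.succ = 0)).card with hmdef
    -- transport sum through decomposeFin
    have hsum1 : ∑ σ ∈ univ.filter (fun σ : Perm (Fin (n+1)) => ∀ i, b i ≤ (σ i : ℕ)),
          t ^ permCyc σ
        = ∑ x : Fin (n+1) × Perm (Fin n),
            (if (∀ i, b i ≤ ((decomposeFin.symm x) i : ℕ))
              then t ^ permCyc (decomposeFin.symm x) else 0) := by
      rw [Finset.sum_filter]
      exact Fintype.sum_equiv decomposeFin _ _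
        (fun σ => by rw [Equiv.symm_apply_apply])
    rw [hsum1, Fintype.sum_prod_type, Finset.sum_comm]
    -- conditions
    have hcond0 : ∀ σ' : Perm (Fin n),
        (∀ i, b i ≤ ((decomposeFin.symm ((0 : Fin (n+1)), σ')) i : ℕ))
          ↔ (∀ j : Fin n, b' j ≤ (σ' j : ℕ)) := by
      intro σ'
      constructor
      · intro H j
        have := H j.succ
        rw [Equiv.Perm.decomposeFin_symm_apply_succ] at this
        simp only [Equiv.swap_self, Equiv.refl_apply, Fin.val_succ] at this
        simp only [hb'def]
        omega
      · intro H i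
        rcases Fin.eq_zero_or_eq_succ i with rfl | ⟨j, rfl⟩
        · have := hb 0
          simp only [Fin.val_zero] at this ⊢
          omega
        · have := H j
          rw [Equiv.Perm.decomposeFin_symm_apply_succ]
          simp only [Equiv.swap_self, Equiv.refl_apply, Fin.val_succ]
          simp only [hb'def] at this
          omega
    have hconds : ∀ (σ' : Perm (Fin n)) (q : Fin n),
        (∀ i, b i ≤ ((decomposeFin.symm (q.succ, σ')) i : ℕ))
          ↔ ((∀ j : Fin n, b' j ≤ (σ' j : ℕ)) ∧ b (σ'⁻¹ q).succ = 0) := by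
      intro σ' q
      constructor
      · intro H
        constructor
        · intro j
          have := H j.succ
          rw [decomposeFin_succ_succ] at this
          simp only [hb'def]
          rcases eq_or_ne (σ' j) q with h | h
          · rw [if_pos h] at this
            simp only [Fin.val_zero] at this
            omega
          · rw [if_neg h] at this
            rw [Fin.val_succ] at this
            omega
        · have := H (σ'⁻¹ q).succ
          rw [decomposeFin_succ_succ, if_pos (show σ' (σ'⁻¹ q) = q from Equiv.apply_symm_apply σ' q)] at this
          simp only [Fin.val_zero] at this
          omega
      · rintro ⟨H, Hq⟩ i
        rcases Fin.eq_zero_or_eq_succ i with rfl | ⟨j, rfl⟩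
        · have := hb 0
          simp only [Fin.val_zero] at this ⊢
          omega
        · rw [decomposeFin_succ_succ]
          rcases eq_or_ne (σ' j) q with h | h
          · rw [if_pos h]
            have hj2 : j = σ'⁻¹ q := by rw [← h, Equiv.Perm.coe_inv, Equiv.symm_apply_apply]
            rw [hj2, Hq]
            exact Nat.zero_le _
          · rw [if_neg h]
            have := H j
            simp only [hb'def] at this
            rw [Fin.val_succ]
            omega
    -- inner sum over p
    have hinner : ∀ σ' : Perm (Fin n),
        (∑ p : Fin (n+1), if (∀ i, b i ≤ ((decomposeFin.symm (p, σ')) i : ℕ))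
            then t ^ permCyc (decomposeFin.symm (p, σ')) else 0)
        = (if (∀ j : Fin n, b' j ≤ (σ' j : ℕ)) then t ^ permCyc σ' * (t + (m : R)) else 0) := by
      intro σ'
      rw [Fin.sum_univ_succ]
      have e0 : (if (∀ i, b i ≤ ((decomposeFin.symm ((0 : Fin (n+1)), σ')) i : ℕ))
            then t ^ permCyc (decomposeFin.symm ((0 : Fin (n+1)), σ')) else 0)
          = (if (∀ j : Fin n, b' j ≤ (σ' j : ℕ)) then t ^ permCyc σ' * t else 0) := by
        rw [if_congr (hcond0 σ') (by rw [permCyc_decompose_zero, pow_succ]) rfl]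
      have eq' : ∀ q : Fin n, (if (∀ i, b i ≤ ((decomposeFin.symm (q.succ, σ')) i : ℕ))
            then t ^ permCyc (decomposeFin.symm (q.succ, σ')) else 0)
          = (if ((∀ j : Fin n, b' j ≤ (σ' j : ℕ)) ∧ b (σ'⁻¹ q).succ = 0)
            then t ^ permCyc σ' else 0) := by
        intro q
        rw [if_congr (hconds σ' q) (by rw [permCyc_decompose_succ]) rfl]
      rw [e0]
      rw [Finset.sum_congr rfl (fun q _ => eq' q)]
      by_cases hc : (∀ j : Fin n, b' j ≤ (σ' j : ℕ))
      · rw [if_pos hc, if_pos hc]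
        have hcard : (univ.filter (fun q : Fin n => b (σ'⁻¹ q).succ = 0)).card = m := by
          rw [hmdef]
          apply Finset.card_bij' (fun q _ => σ'⁻¹ q) (fun j _ => σ' j)
          · intro a ha
            simp only [Finset.mem_filter, Finset.mem_univ, true_and] at ha ⊢
            exact ha
          · intro a ha
            simp only [Finset.mem_filter, Finset.mem_univ, true_and] at ha ⊢
            rwa [Equiv.Perm.coe_inv, Equiv.symm_apply_apply]
          · intro a _; exact Equiv.apply_symm_apply σ' a
          · intro a _; exact Equiv.symm_apply_apply σ' a
        have hsum2 : (∑ q : Fin n, if ((∀ j : Fin n, b' j ≤ (σ' j : ℕ)) ∧ b (σ'⁻¹ q).succ = 0)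
              then t ^ permCyc σ' else 0)
            = ∑ q : Fin n, (if b (σ'⁻¹ q).succ = 0 then t ^ permCyc σ' else 0) :=
          Finset.sum_congr rfl (fun q _ => if_congr (and_iff_right hc) rfl rfl)
        rw [hsum2, ← Finset.sum_filter, Finset.sum_const, hcard, nsmul_eq_mul]
        ring
      · rw [if_neg hc, if_neg hc]
        simp only [hc, false_and, if_false]
        rw [Finset.sum_const_zero, add_zero]
    rw [Finset.sum_congr rfl (fun σ' _ => hinner σ')]
    rw [← Finset.sum_filter]
    rw [← Finset.sum_mul]
    rw [IH b' hb']
    -- now the product side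
    rw [Fin.prod_univ_succ]
    have hc0 : (univ.filter (fun i : Fin (n+1) => ((0 : Fin (n+1)) : ℕ) < (i : ℕ) ∧ b i ≤ ((0 : Fin (n+1)) : ℕ))).card = m := by
      rw [card_filter_fin_succ (fun i : Fin (n+1) => ((0 : Fin (n+1)) : ℕ) < (i : ℕ) ∧ b i ≤ ((0 : Fin (n+1)) : ℕ))]
      rw [if_neg (by simp)]
      rw [hmdef, zero_add]
      congr 1
      apply Finset.filter_congr
      intro j _
      simp only [Fin.val_succ, Fin.val_zero]
      constructor
      · rintro ⟨_, h⟩; omega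
      · intro h; exact ⟨by omega, by omega⟩
    have hcsucc : ∀ k : Fin n,
        (univ.filter (fun i : Fin (n+1) => ((k.succ : Fin (n+1)) : ℕ) < (i : ℕ) ∧ b i ≤ ((k.succ : Fin (n+1)) : ℕ))).card
        = (univ.filter (fun i : Fin n => (k : ℕ) < (i : ℕ) ∧ b' i ≤ (k : ℕ))).card := by
      intro k
      rw [card_filter_fin_succ (fun i : Fin (n+1) => ((k.succ : Fin (n+1)) : ℕ) < (i : ℕ) ∧ b i ≤ ((k.succ : Fin (n+1)) : ℕ))]
      rw [if_neg (by simp)]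
      rw [zero_add]
      congr 1
      apply Finset.filter_congr
      intro j _
      simp only [Fin.val_succ, hb'def]
      constructor
      · rintro ⟨h1, h2⟩; exact ⟨by omega, by omega⟩
      · rintro ⟨h1, h2⟩
        have := hb j.succ
        rw [Fin.val_succ] at this
        exact ⟨by omega, by omega⟩
    rw [hc0]
    have hprod : (∏ k : Fin n, (t + ((univ.filter (fun i : Fin (n+1) =>
            ((k.succ : Fin (n+1)) : ℕ) < (i : ℕ) ∧ b i ≤ ((k.succ : Fin (n+1)) : ℕ))).card : R)))
        = ∏ k : Fin n, (t + ((univ.filter (fun i : Fin n =>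
            (k : ℕ) < (i : ℕ) ∧ b' i ≤ (k : ℕ))).card : R)) :=
      Finset.prod_congr rfl (fun k _ => by rw [hcsucc k])
    rw [hprod]
    ring

lemma prod_aux (R : Type*) [CommRing R] (t : R) :
    ∀ (n : ℕ) (r : Fin n → ℕ), Monotone r → (∀ k : Fin n, (k : ℕ) + 1 ≤ r k) →
    (∀ k : Fin n, r k ≤ n) →
    (∏ u : Fin n, (t + (((u : ℕ) - (univ.filter (fun j : Fin n => r j ≤ (u : ℕ))).card : ℕ) : R)))
      = ∏ k : Fin n, (t + ((r k - ((k : ℕ) + 1) : ℕ) : R)) := by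
  intro n
  induction n with
  | zero => intro r _ _ _; rw [Fintype.prod_empty, Fintype.prod_empty]
  | succ n IH =>
    intro r hmono h1 h2
    have ha1 : 1 ≤ r 0 := h1 0
    have han : r 0 ≤ n + 1 := h2 0
    set p : Fin (n+1) := ⟨r 0 - 1, by omega⟩ with hpdef
    set r' : Fin n → ℕ := fun k => r k.succ - 1 with hr'def
    have hmono' : Monotone r' := by
      intro x y hxy
      simp only [hr'def]
      have := hmono (Fin.succ_le_succ_iff.mpr hxy)
      omega
    have h1' : ∀ k : Fin n, (k : ℕ) + 1 ≤ r' k := by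
      intro k
      have := h1 k.succ
      rw [Fin.val_succ] at this
      simp only [hr'def]
      omega
    have h2' : ∀ k : Fin n, r' k ≤ n := by
      intro k
      have := h2 k.succ
      simp only [hr'def]
      omega
    have hr0le : ∀ j : Fin (n+1), r 0 ≤ r j := fun j => hmono (Fin.zero_le j)
    have hN0 : ∀ v : ℕ, v < r 0 →
        (univ.filter (fun j : Fin (n+1) => r j ≤ v)).card = 0 := by
      intro v hv
      rw [Finset.card_eq_zero, Finset.filter_eq_empty_iff]
      intro j _
      have := hr0le j
      omega
    have hNN : ∀ v : ℕ,
        (univ.filter (fun j : Fin (n+1) => r j ≤ v + 1)).card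
          = (if r 0 ≤ v + 1 then 1 else 0)
            + (univ.filter (fun j : Fin n => r' j ≤ v)).card := by
      intro v
      rw [card_filter_fin_succ (fun j : Fin (n+1) => r j ≤ v + 1)]
      congr 1
      refine congrArg Finset.card (Finset.filter_congr ?_)
      intro j _
      have := h1 j.succ
      simp only [hr'def]
      constructor
      · intro h; omega
      · intro h; omega
    -- LHS
    rw [Fin.prod_univ_succAbove _ p]
    have hfp : (t + (((p : ℕ) - (univ.filter (fun j : Fin (n+1) => r j ≤ (p : ℕ))).card : ℕ) : R))
        = t + ((r 0 - (((0 : Fin (n+1)) : ℕ) + 1) : ℕ) : R) := by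
      have hp1 : (p : ℕ) = r 0 - 1 := rfl
      rw [hp1, hN0 (r 0 - 1) (by omega)]
      simp
    rw [hfp]
    have hterm : ∀ u : Fin n,
        (t + (((p.succAbove u : ℕ)
            - (univ.filter (fun j : Fin (n+1) => r j ≤ (p.succAbove u : ℕ))).card : ℕ) : R))
        = (t + (((u : ℕ) - (univ.filter (fun j : Fin n => r' j ≤ (u : ℕ))).card : ℕ) : R)) := by
      intro u
      by_cases hcase : (u : ℕ) < r 0 - 1
      · have hsa : p.succAbove u = u.castSucc := by
          apply Fin.succAbove_of_castSucc_lt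
          rw [Fin.lt_def]
          exact hcase
        rw [hsa]
        have hval : ((u.castSucc : Fin (n+1)) : ℕ) = (u : ℕ) := rfl
        rw [hval, hN0 (u : ℕ) (by omega)]
        have : (univ.filter (fun j : Fin n => r' j ≤ (u : ℕ))).card = 0 := by
          rw [Finset.card_eq_zero, Finset.filter_eq_empty_iff]
          intro j _
          have := hr0le j.succ
          simp only [hr'def]
          omega
        rw [this]
      · have hsa : p.succAbove u = u.succ := by
          apply Fin.succAbove_of_le_castSucc
          rw [Fin.le_def]
          simp only [Fin.coe_castSucc]
          show r 0 - 1 ≤ (u : ℕ)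
          omega
        rw [hsa]
        have hval : ((u.succ : Fin (n+1)) : ℕ) = (u : ℕ) + 1 := rfl
        rw [hval, hNN (u : ℕ), if_pos (by omega)]
        congr 2
        omega
    rw [Finset.prod_congr rfl (fun u _ => hterm u)]
    rw [IH r' hmono' h1' h2']
    -- RHS
    rw [Fin.prod_univ_succ fun k : Fin (n+1) => t + ((r k - ((k : ℕ) + 1) : ℕ) : R)]
    congr 1
    apply Finset.prod_congr rfl
    intro k _
    have := h1 k.succ
    rw [Fin.val_succ]
    simp only [hr'def]
    congr 2
    omega

/-- For any fixed `σ₀ ∈ S_r`,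
`∑_{σ ∈ S_r} t^{cyc(σ σ₀⁻¹)} = ∏_{k=1}^n (t + r_k − k)`;
in particular the sum does not depend on `σ₀`. -/
theorem cyc_shifted_restricted (n : ℕ) (r : Fin n → ℕ) (hmono : Monotone r)
    (hr : ∀ k : Fin n, (k : ℕ) + 1 ≤ r k ∧ r k ≤ n)
    (σ₀ : Equiv.Perm (Fin n)) (hσ₀ : σ₀ ∈ restrictedPerms n r)
    (R : Type*) [CommRing R] (t : R) :
    ∑ σ ∈ restrictedPerms n r, t ^ permCyc (σ * σ₀⁻¹)
      = ∏ k : Fin n, (t + ((r k - ((k : ℕ) + 1) : ℕ) : R)) := by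
  have hσ₀' : ∀ k : Fin n, (σ₀ k : ℕ) + 1 ≤ r k := by
    rw [restrictedPerms, Finset.mem_filter] at hσ₀
    exact hσ₀.2
  set s : Fin n → ℕ := fun j => r (σ₀⁻¹ j) with hsdef
  have hs_ge : ∀ j : Fin n, (j : ℕ) + 1 ≤ s j := by
    intro j
    have := hσ₀' (σ₀⁻¹ j)
    rwa [Equiv.Perm.coe_inv, Equiv.apply_symm_apply] at this
  have hs_le : ∀ j : Fin n, s j ≤ n := fun j => (hr _).2
  set b : Fin n → ℕ := fun i => n - s i.rev with hbdef
  have hval_rev : ∀ i : Fin n, ((i.rev : Fin n) : ℕ) = n - 1 - (i : ℕ) := by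
    intro i
    rw [Fin.val_rev]
    omega
  have hb : ∀ i : Fin n, b i ≤ (i : ℕ) := by
    intro i
    have h1 := hs_ge i.rev
    rw [hval_rev] at h1
    have h2 : (i : ℕ) < n := i.is_lt
    simp only [hbdef]
    omega
  have hstep1 : ∑ σ ∈ restrictedPerms n r, t ^ permCyc (σ * σ₀⁻¹)
      = ∑ υ ∈ univ.filter (fun υ : Perm (Fin n) => ∀ i : Fin n, b i ≤ (υ i : ℕ)),
          t ^ permCyc υ := by
    refine Finset.sum_bij' (fun σ _ => Fin.revPerm * (σ * σ₀⁻¹) * Fin.revPerm)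
      (fun υ _ => (Fin.revPerm * υ * Fin.revPerm) * σ₀) ?_ ?_ ?_ ?_ ?_
    · intro σ hσ
      rw [restrictedPerms, Finset.mem_filter] at hσ
      rw [Finset.mem_filter]
      refine ⟨Finset.mem_univ _, ?_⟩
      intro i
      have happ : (Fin.revPerm * (σ * σ₀⁻¹) * Fin.revPerm : Equiv.Perm (Fin n)) i
          = (σ (σ₀⁻¹ i.rev)).rev := by
        simp [Equiv.Perm.mul_apply]
      rw [happ]
      have h1 := hσ.2 (σ₀⁻¹ i.rev)
      have h2 : (σ (σ₀⁻¹ i.rev) : ℕ) < n := (σ (σ₀⁻¹ i.rev)).is_lt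
      rw [hval_rev]
      simp only [hbdef, hsdef]
      omega
    · intro υ hυ
      rw [Finset.mem_filter] at hυ
      rw [restrictedPerms, Finset.mem_filter]
      refine ⟨Finset.mem_univ _, ?_⟩
      intro k
      have happ : ((Fin.revPerm * υ * Fin.revPerm) * σ₀ : Equiv.Perm (Fin n)) k
          = (υ (σ₀ k).rev).rev := by
        simp [Equiv.Perm.mul_apply]
      rw [happ]
      have h1 := hυ.2 (σ₀ k).rev
      simp only [hbdef, hsdef, Fin.rev_rev, Equiv.Perm.coe_inv, Equiv.symm_apply_apply] at h1
      have h2 : (υ (σ₀ k).rev : ℕ) < n := (υ (σ₀ k).rev).is_lt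
      have h3 := (hr k).1
      have h4 := (hr k).2
      rw [hval_rev]
      omega
    · intro σ _
      ext x
      simp [Equiv.Perm.mul_apply]
    · intro υ _
      ext x
      simp [Equiv.Perm.mul_apply]
    · intro σ _
      rw [permCyc_rev_conj]
  rw [hstep1, key_lower R t n b hb]
  have hN : ∀ v : ℕ, (univ.filter (fun j : Fin n => s j ≤ v)).card
      = (univ.filter (fun l : Fin n => r l ≤ v)).card := by
    intro v
    refine Finset.card_bij' (fun j _ => σ₀⁻¹ j) (fun l _ => σ₀ l) ?_ ?_
      (fun a _ => Equiv.apply_symm_apply σ₀ a) (fun a _ => Equiv.symm_apply_apply σ₀ a)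
    · intro a ha
      simp only [Finset.mem_filter, Finset.mem_univ, true_and, hsdef] at ha ⊢
      exact ha
    · intro a ha
      simp only [Finset.mem_filter, Finset.mem_univ, true_and, hsdef,
        Equiv.Perm.coe_inv, Equiv.symm_apply_apply] at ha ⊢
      exact ha
  have hterm : ∀ k : Fin n, (univ.filter (fun i : Fin n => (k : ℕ) < (i : ℕ) ∧ b i ≤ (k : ℕ))).card
      = (n - 1 - (k : ℕ)) - (univ.filter (fun l : Fin n => r l ≤ n - 1 - (k : ℕ))).card := by
    intro k
    have hkn : (k : ℕ) < n := k.is_lt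
    have hA : (univ.filter (fun i : Fin n => (k : ℕ) < (i : ℕ) ∧ b i ≤ (k : ℕ))).card
        = (univ.filter (fun j : Fin n =>
            (j : ℕ) < n - 1 - (k : ℕ) ∧ n - (k : ℕ) ≤ s j)).card := by
      refine Finset.card_bij' (fun a _ => a.rev) (fun a _ => a.rev) ?_ ?_
        (fun a _ => Fin.rev_rev a) (fun a _ => Fin.rev_rev a)
      · intro a ha
        simp only [Finset.mem_filter, Finset.mem_univ, true_and, hbdef] at ha ⊢
        have h1 := hs_le a.rev
        have h2 : (a : ℕ) < n := a.is_lt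
        rw [hval_rev]
        constructor
        · omega
        · omega
      · intro a ha
        simp only [Finset.mem_filter, Finset.mem_univ, true_and, hbdef, Fin.rev_rev] at ha ⊢
        have h2 : (a : ℕ) < n := a.is_lt
        rw [hval_rev]
        constructor
        · omega
        · omega
    have hB : (univ.filter (fun j : Fin n =>
            (j : ℕ) < n - 1 - (k : ℕ) ∧ n - (k : ℕ) ≤ s j)).card
        + (univ.filter (fun j : Fin n => s j ≤ n - 1 - (k : ℕ))).card
        = n - 1 - (k : ℕ) := by
      have hsplit := Finset.card_filter_add_card_filter_not
        (s := univ.filter (fun j : Fin n => (j : ℕ) < n - 1 - (k : ℕ)))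
        (p := fun j => n - (k : ℕ) ≤ s j)
      rw [Finset.filter_filter, Finset.filter_filter] at hsplit
      have hcomp : (univ.filter (fun j : Fin n =>
            (j : ℕ) < n - 1 - (k : ℕ) ∧ ¬(n - (k : ℕ) ≤ s j)))
          = (univ.filter (fun j : Fin n => s j ≤ n - 1 - (k : ℕ))) := by
        apply Finset.filter_congr
        intro j _
        have h1 := hs_ge j
        have h2 := hs_le j
        constructor
        · rintro ⟨ha, hb'⟩
          omega
        · intro h
          exact ⟨by omega, by omega⟩
      rw [hcomp] at hsplit
      rw [card_fin_lt (n - 1 - (k : ℕ)) (by omega)] at hsplit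
      exact hsplit
    have hC := hN (n - 1 - (k : ℕ))
    omega
  have hprod1 : (∏ k : Fin n, (t + ((univ.filter (fun i : Fin n =>
          (k : ℕ) < (i : ℕ) ∧ b i ≤ (k : ℕ))).card : R)))
      = ∏ u : Fin n, (t + (((u : ℕ)
          - (univ.filter (fun l : Fin n => r l ≤ (u : ℕ))).card : ℕ) : R)) := by
    apply Fintype.prod_equiv Fin.revPerm
    intro k
    rw [hterm k]
    have hrk : ((Fin.revPerm k : Fin n) : ℕ) = n - 1 - (k : ℕ) := by
      simp only [Fin.revPerm_apply]
      exact hval_rev k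
    rw [hrk]
  rw [hprod1]
  exact prod_aux R t n r hmono (fun k => (hr k).1) (fun k => (hr k).2)
end Dec
end

section
/- Σ_{σ ∈ S_n} q^{sor(σ)} Π_{i ∈ Cyc(σ)} t_i = t_1(t_2+q)(t_3+q+q^2)···(t_n + q + ··· + q^{n-1}), where Cyc(σ) is the set of minimal elements in the cycles of σ. -/
/-- Set of minimal elements of the cycles of `σ`. -/
def CycSet {n : ℕ} (σ : Equiv.Perm (Fin n)) : Finset (Fin n) :=
  Finset.univ.filter (fun k : Fin n => ∀ m : Fin n, σ.SameCycle k m → k ≤ m)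

namespace SorProof

open Equiv Equiv.Perm Fin Finset

variable {n : ℕ}

/-- Extend a permutation of `Fin n` to `Fin (n+1)`, fixing the last element. -/
def extp (τ : Equiv.Perm (Fin n)) : Equiv.Perm (Fin (n + 1)) :=
  Equiv.permCongr finSuccEquivLast.symm τ.optionCongr

@[simp] lemma extp_castSucc (τ : Equiv.Perm (Fin n)) (x : Fin n) :
    extp τ (Fin.castSucc x) = Fin.castSucc (τ x) := by
  simp [extp]

@[simp] lemma extp_last (τ : Equiv.Perm (Fin n)) : extp τ (Fin.last n) = Fin.last n := by
  simp [extp]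

lemma extp_pow_castSucc (τ : Equiv.Perm (Fin n)) (k : ℕ) (x : Fin n) :
    (extp τ ^ k) (Fin.castSucc x) = Fin.castSucc ((τ ^ k) x) := by
  induction k with
  | zero => simp
  | succ k ih => rw [pow_succ', Equiv.Perm.mul_apply, ih, extp_castSucc, pow_succ',
      Equiv.Perm.mul_apply]

lemma extp_pow_last (τ : Equiv.Perm (Fin n)) (k : ℕ) :
    (extp τ ^ k) (Fin.last n) = Fin.last n := by
  induction k with
  | zero => simp
  | succ k ih => rw [pow_succ', Equiv.Perm.mul_apply, ih, extp_last]

lemma sameCycle_extp_last {τ : Equiv.Perm (Fin n)} {m : Fin (n+1)} :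
    (extp τ).SameCycle (Fin.last n) m ↔ m = Fin.last n := by
  constructor
  · intro h
    obtain ⟨k, -, hk⟩ := h.exists_pow_eq'
    rw [extp_pow_last] at hk
    exact hk.symm
  · rintro rfl
    exact ⟨0, by simp⟩

lemma sameCycle_extp_iff {τ : Equiv.Perm (Fin n)} {a b : Fin n} :
    (extp τ).SameCycle (Fin.castSucc a) (Fin.castSucc b) ↔ τ.SameCycle a b := by
  constructor
  · intro h
    obtain ⟨k, -, hk⟩ := h.exists_pow_eq'
    rw [extp_pow_castSucc, Fin.castSucc_inj] at hk
    exact ⟨(k : ℤ), by rw [zpow_natCast, hk]⟩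
  · intro h
    obtain ⟨k, -, hk⟩ := h.exists_pow_eq'
    exact ⟨(k : ℤ), by rw [zpow_natCast, extp_pow_castSucc, hk]⟩

lemma swap_apply_castSucc (τ : Equiv.Perm (Fin n)) (i₀ x : Fin n) :
    (extp τ * Equiv.swap (Fin.castSucc i₀) (Fin.last n)) (Fin.castSucc x)
      = if x = i₀ then Fin.last n else Fin.castSucc (τ x) := by
  rcases eq_or_ne x i₀ with rfl | hx
  · simp [Equiv.Perm.mul_apply]
  · rw [if_neg hx, Equiv.Perm.mul_apply,
      Equiv.swap_apply_of_ne_of_ne (by simpa [Fin.castSucc_inj] using hx)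
        (Fin.castSucc_lt_last x).ne, extp_castSucc]

lemma swap_apply_last (τ : Equiv.Perm (Fin n)) (i₀ : Fin n) :
    (extp τ * Equiv.swap (Fin.castSucc i₀) (Fin.last n)) (Fin.last n)
      = Fin.castSucc (τ i₀) := by
  rw [Equiv.Perm.mul_apply, Equiv.swap_apply_right, extp_castSucc]

lemma pow_invariant (τ : Equiv.Perm (Fin n)) (i₀ a : Fin n) (k : ℕ) :
    ∃ m : ℕ,
      ((extp τ * Equiv.swap (Fin.castSucc i₀) (Fin.last n)) ^ k) (Fin.castSucc a)
          = Fin.castSucc ((τ ^ m) a)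
      ∨ (((extp τ * Equiv.swap (Fin.castSucc i₀) (Fin.last n)) ^ k) (Fin.castSucc a)
            = Fin.last n ∧ (τ ^ m) a = i₀) := by
  induction k with
  | zero => exact ⟨0, Or.inl (by simp)⟩
  | succ k ih =>
    obtain ⟨m, h | ⟨h, hm⟩⟩ := ih
    · rcases eq_or_ne ((τ ^ m) a) i₀ with he | he
      · exact ⟨m, Or.inr ⟨by rw [pow_succ', Equiv.Perm.mul_apply, h, swap_apply_castSucc,
          if_pos he], he⟩⟩
      · refine ⟨m + 1, Or.inl ?_⟩
        rw [pow_succ', Equiv.Perm.mul_apply, h, swap_apply_castSucc, if_neg he,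
          pow_succ' τ m, Equiv.Perm.mul_apply]
    · refine ⟨m + 1, Or.inl ?_⟩
      rw [pow_succ', Equiv.Perm.mul_apply, h, swap_apply_last,
        pow_succ' τ m, Equiv.Perm.mul_apply, hm]

lemma sameCycle_swap_iff (τ : Equiv.Perm (Fin n)) (i₀ : Fin n) {a b : Fin n} :
    (extp τ * Equiv.swap (Fin.castSucc i₀) (Fin.last n)).SameCycle
        (Fin.castSucc a) (Fin.castSucc b) ↔ τ.SameCycle a b := by
  constructor
  · intro h
    obtain ⟨k, -, hk⟩ := h.exists_pow_eq'
    obtain ⟨m, h' | ⟨h', -⟩⟩ := pow_invariant τ i₀ a k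
    · rw [h', Fin.castSucc_inj] at hk
      exact ⟨(m : ℤ), by rw [zpow_natCast, hk]⟩
    · rw [h'] at hk
      exact absurd hk.symm (Fin.castSucc_lt_last b).ne
  · intro h
    have step : ∀ x : Fin n,
        (extp τ * Equiv.swap (Fin.castSucc i₀) (Fin.last n)).SameCycle
          (Fin.castSucc x) (Fin.castSucc (τ x)) := by
      intro x
      rcases eq_or_ne x i₀ with rfl | hx
      · exact Equiv.Perm.SameCycle.trans
          ⟨1, by rw [zpow_one, swap_apply_castSucc, if_pos rfl]⟩
          ⟨1, by rw [zpow_one, swap_apply_last]⟩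
      · exact ⟨1, by rw [zpow_one, swap_apply_castSucc, if_neg hx]⟩
    have key : ∀ m : ℕ,
        (extp τ * Equiv.swap (Fin.castSucc i₀) (Fin.last n)).SameCycle
          (Fin.castSucc a) (Fin.castSucc ((τ ^ m) a)) := by
      intro m
      induction m with
      | zero => exact ⟨0, by simp⟩
      | succ m ih =>
        have := step ((τ ^ m) a)
        rw [← Equiv.Perm.mul_apply, ← pow_succ'] at this
        exact ih.trans this
    obtain ⟨m, -, hm⟩ := h.exists_pow_eq'
    exact hm ▸ key m

lemma sameCycle_swap_last (τ : Equiv.Perm (Fin n)) (i₀ : Fin n) :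
    (extp τ * Equiv.swap (Fin.castSucc i₀) (Fin.last n)).SameCycle
      (Fin.last n) (Fin.castSucc (τ i₀)) :=
  ⟨1, by rw [zpow_one, swap_apply_last]⟩

lemma mem_CycSet {N : ℕ} {σ : Equiv.Perm (Fin N)} {k : Fin N} :
    k ∈ CycSet σ ↔ ∀ m : Fin N, σ.SameCycle k m → k ≤ m := by
  simp [CycSet]

lemma CycSet_extp (τ : Equiv.Perm (Fin n)) :
    CycSet (extp τ) = insert (Fin.last n) ((CycSet τ).image Fin.castSucc) := by
  ext x
  induction x using Fin.lastCases with
  | last =>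
    exact iff_of_true (mem_CycSet.2 fun m hm => le_of_eq (sameCycle_extp_last.1 hm).symm)
      (Finset.mem_insert_self _ _)
  | cast x₀ =>
    rw [mem_CycSet]
    simp only [Finset.mem_insert, Finset.mem_image]
    constructor
    · intro h
      refine Or.inr ⟨x₀, mem_CycSet.2 (fun m₀ hm₀ => ?_), rfl⟩
      exact Fin.castSucc_le_castSucc_iff.1 (h (Fin.castSucc m₀) (sameCycle_extp_iff.2 hm₀))
    · rintro (h | ⟨y, hy, hxy⟩)
      · exact absurd h (Fin.castSucc_lt_last x₀).ne
      · obtain rfl : y = x₀ := Fin.castSucc_inj.1 hxy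
        intro m hm
        induction m using Fin.lastCases with
        | last => exact Fin.le_last _
        | cast m₀ =>
          exact Fin.castSucc_le_castSucc_iff.2 (mem_CycSet.1 hy m₀ (sameCycle_extp_iff.1 hm))

lemma CycSet_swap (τ : Equiv.Perm (Fin n)) (i₀ : Fin n) :
    CycSet (extp τ * Equiv.swap (Fin.castSucc i₀) (Fin.last n))
      = (CycSet τ).image Fin.castSucc := by
  ext x
  induction x using Fin.lastCases with
  | last =>
    simp only [mem_CycSet, Finset.mem_image]
    refine iff_of_false (fun h => ?_) ?_
    · exact absurd (h _ (sameCycle_swap_last τ i₀)) (Fin.castSucc_lt_last (τ i₀)).not_ge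
    · rintro ⟨y, -, hxy⟩
      exact (Fin.castSucc_lt_last y).ne hxy
  | cast x₀ =>
    rw [mem_CycSet]
    simp only [Finset.mem_image]
    constructor
    · intro h
      refine ⟨x₀, mem_CycSet.2 (fun m₀ hm₀ => ?_), rfl⟩
      exact Fin.castSucc_le_castSucc_iff.1
        (h (Fin.castSucc m₀) ((sameCycle_swap_iff τ i₀).2 hm₀))
    · rintro ⟨y, hy, hxy⟩
      obtain rfl : y = x₀ := Fin.castSucc_inj.1 hxy
      intro m hm
      induction m using Fin.lastCases with
      | last => exact Fin.le_last _
      | cast m₀ =>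
        exact Fin.castSucc_le_castSucc_iff.2
          (mem_CycSet.1 hy m₀ ((sameCycle_swap_iff τ i₀).1 hm))

lemma extp_one : extp (1 : Equiv.Perm (Fin n)) = 1 := by
  apply Equiv.ext
  intro x
  induction x using Fin.lastCases <;> simp

lemma extp_mul (τ τ' : Equiv.Perm (Fin n)) : extp (τ * τ') = extp τ * extp τ' := by
  apply Equiv.ext
  intro x
  induction x using Fin.lastCases <;> simp [Equiv.Perm.mul_apply]

lemma extp_swap (a b : Fin n) :
    extp (Equiv.swap a b) = Equiv.swap (Fin.castSucc a) (Fin.castSucc b) := by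
  apply Equiv.ext
  intro x
  induction x using Fin.lastCases with
  | last =>
    rw [extp_last, Equiv.swap_apply_of_ne_of_ne (Fin.castSucc_lt_last a).ne'
      (Fin.castSucc_lt_last b).ne']
  | cast x =>
    rw [extp_castSucc]
    rcases eq_or_ne x a with rfl | ha
    · simp
    · rcases eq_or_ne x b with rfl | hb
      · simp
      · rw [Equiv.swap_apply_of_ne_of_ne ha hb,
          Equiv.swap_apply_of_ne_of_ne (by simpa [Fin.castSucc_inj] using ha)
            (by simpa [Fin.castSucc_inj] using hb)]

lemma extp_listProd (l : List (Equiv.Perm (Fin n))) : extp l.prod = (l.map extp).prod := by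
  induction l with
  | nil => simpa using extp_one
  | cons a l ih => simp [extp_mul, ih]

lemma isSortFact_extp {τ : Equiv.Perm (Fin n)} {l : List (Fin n × Fin n)}
    (h : IsSortFact τ l) :
    IsSortFact (extp τ)
      (l.map fun p => (Fin.castSucc p.1, Fin.castSucc p.2)) := by
  obtain ⟨h1, h2, h3⟩ := h
  refine ⟨?_, ?_, ?_⟩
  · intro p hp
    obtain ⟨p₀, hp₀, rfl⟩ := List.mem_map.1 hp
    exact Fin.castSucc_lt_castSucc_iff.2 (h1 p₀ hp₀)
  · rw [List.map_map]
    have he : (Prod.snd ∘ fun p : Fin n × Fin n => (Fin.castSucc p.1, Fin.castSucc p.2))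
        = Fin.castSucc ∘ Prod.snd := rfl
    rw [he, ← List.map_map]
    exact List.Pairwise.map _ (fun a b hab => Fin.castSucc_lt_castSucc_iff.2 hab) h2
  · rw [List.map_map, h3, extp_listProd, List.map_map]
    apply congrArg List.prod
    apply List.map_congr_left
    intro p _
    exact extp_swap p.1 p.2

lemma isSortFact_append {τ : Equiv.Perm (Fin n)} {l : List (Fin n × Fin n)}
    (h : IsSortFact τ l) (i₀ : Fin n) :
    IsSortFact (extp τ * Equiv.swap (Fin.castSucc i₀) (Fin.last n))
      ((l.map fun p => (Fin.castSucc p.1, Fin.castSucc p.2))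
        ++ [(Fin.castSucc i₀, Fin.last n)]) := by
  obtain ⟨h1', h2', h3'⟩ := isSortFact_extp h
  refine ⟨?_, ?_, ?_⟩
  · intro p hp
    rcases List.mem_append.1 hp with hp | hp
    · exact h1' p hp
    · rw [List.mem_singleton.1 hp]
      exact Fin.castSucc_lt_last i₀
  · rw [List.map_append]
    refine List.pairwise_append.2 ⟨h2', by simp, ?_⟩
    intro a ha b hb
    simp only [List.map_cons, List.map_nil, List.mem_singleton] at hb
    subst hb
    rw [List.map_map] at ha
    obtain ⟨p, -, rfl⟩ := List.mem_map.1 ha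
    exact Fin.castSucc_lt_last _
  · rw [List.map_append, List.prod_append]
    simp only [List.map_cons, List.map_nil, List.prod_cons, List.prod_nil, mul_one]
    rw [← h3']

/-- The decomposition map. -/
def Fmap (p : Equiv.Perm (Fin n) × Fin (n + 1)) : Equiv.Perm (Fin (n + 1)) :=
  if p.2 = Fin.last n then extp p.1 else extp p.1 * Equiv.swap p.2 (Fin.last n)

lemma Fmap_last (τ : Equiv.Perm (Fin n)) : Fmap (τ, Fin.last n) = extp τ := if_pos rfl

lemma Fmap_castSucc (τ : Equiv.Perm (Fin n)) (i₀ : Fin n) :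
    Fmap (τ, Fin.castSucc i₀) = extp τ * Equiv.swap (Fin.castSucc i₀) (Fin.last n) :=
  if_neg (Fin.castSucc_lt_last i₀).ne

lemma extp_injective : Function.Injective (extp (n := n)) := by
  intro τ τ' h
  apply Equiv.ext
  intro x
  have := congrArg (fun f : Equiv.Perm (Fin (n+1)) => f (Fin.castSucc x)) h
  simpa [Fin.castSucc_inj] using this

lemma Fmap_inv_last (p : Equiv.Perm (Fin n) × Fin (n + 1)) :
    (Fmap p)⁻¹ (Fin.last n) = p.2 := by
  have hextp : (extp p.1)⁻¹ (Fin.last n) = Fin.last n := by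
    rw [Equiv.Perm.inv_eq_iff_eq, extp_last]
  unfold Fmap
  split
  · rename_i h
    rw [hextp, h]
  · rw [mul_inv_rev, Equiv.Perm.mul_apply, hextp, Equiv.swap_inv, Equiv.swap_apply_right]

lemma Fmap_bijective : Function.Bijective (Fmap (n := n)) := by
  rw [Fintype.bijective_iff_injective_and_card]
  constructor
  · intro p p' h
    have h2 : p.2 = p'.2 := by rw [← Fmap_inv_last p, ← Fmap_inv_last p', h]
    obtain ⟨τ, i⟩ := p
    obtain ⟨τ', i'⟩ := p'
    simp only at h2
    subst h2
    suffices hτ : τ = τ' by rw [hτ]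
    apply extp_injective
    by_cases hi : i = Fin.last n <;> simp only [Fmap, hi, if_pos, if_neg, reduceIte] at h
    · exact h
    · exact mul_right_cancel h
  · simp [Fintype.card_perm, Nat.factorial_succ, mul_comm]

lemma exists_sortFact : ∀ {N : ℕ} (σ : Equiv.Perm (Fin N)), ∃ l, IsSortFact σ l := by
  intro N
  induction N with
  | zero =>
    intro σ
    refine ⟨[], fun p hp => absurd hp List.not_mem_nil, by simp, ?_⟩
    have : σ = 1 := Equiv.ext fun x => x.elim0
    simp [this]
  | succ n ih =>
    intro σ
    obtain ⟨⟨τ, i⟩, rfl⟩ := Fmap_bijective.surjective σ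
    obtain ⟨l, hl⟩ := ih τ
    induction i using Fin.lastCases with
    | last => rw [Fmap_last]; exact ⟨_, isSortFact_extp hl⟩
    | cast i₀ => rw [Fmap_castSucc]; exact ⟨_, isSortFact_append hl i₀⟩

lemma qsum {R : Type*} [CommRing R] (q : R) (N : ℕ) :
    (∑ i₀ : Fin N, q ^ (N - (i₀ : ℕ))) = ∑ i ∈ Finset.Icc 1 N, q ^ i := by
  rw [Fin.sum_univ_eq_sum_range (fun j => q ^ (N - j)) N]
  refine Finset.sum_nbij' (fun j => N - j) (fun i => N - i) ?_ ?_ ?_ ?_ ?_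
  · intro a ha
    simp only [Finset.mem_range] at ha
    simp only [Finset.mem_Icc]
    omega
  · intro a ha
    simp only [Finset.mem_Icc] at ha
    simp only [Finset.mem_range]
    omega
  · intro a ha
    simp only [Finset.mem_range] at ha
    show N - (N - a) = a
    omega
  · intro a ha
    simp only [Finset.mem_Icc] at ha
    show N - (N - a) = a
    omega
  · intro a _
    rfl

lemma aux (R : Type*) [CommRing R] (q : R) :
    ∀ (n : ℕ) (sor : Equiv.Perm (Fin n) → ℕ),
      (∀ (σ : Equiv.Perm (Fin n)) (l : List (Fin n × Fin n)),
        IsSortFact σ l → sor σ = (l.map (fun p => (p.2 : ℕ) - (p.1 : ℕ))).sum) →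
      ∀ t : Fin n → R,
      ∑ σ : Equiv.Perm (Fin n), q ^ sor σ * ∏ i ∈ CycSet σ, t i
        = ∏ k : Fin n, (t k + ∑ i ∈ Finset.Icc 1 (k : ℕ), q ^ i) := by
  intro n
  induction n with
  | zero =>
    intro sor hsor t
    have hone : ∀ σ : Equiv.Perm (Fin 0), σ = 1 := fun σ => Equiv.ext fun x => x.elim0
    have h1 : sor 1 = 0 := by
      rw [hsor 1 [] ⟨fun p hp => absurd hp List.not_mem_nil, by simp, by simp⟩]
      rfl
    have huniv : (Finset.univ : Finset (Equiv.Perm (Fin 0))) = {1} :=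
      Finset.eq_singleton_iff_unique_mem.2 ⟨Finset.mem_univ 1, fun σ _ => hone σ⟩
    rw [huniv, Finset.sum_singleton, h1, pow_zero, one_mul]
    rw [show (CycSet (1 : Equiv.Perm (Fin 0))) = ∅ from Finset.eq_empty_of_isEmpty _]
    rw [show (Finset.univ : Finset (Fin 0)) = ∅ from Finset.eq_empty_of_isEmpty _]
    simp
  | succ n ih =>
    intro sor hsor t
    set sor' : Equiv.Perm (Fin n) → ℕ := fun τ => sor (extp τ) with hsor'def
    have hsor' : ∀ (τ : Equiv.Perm (Fin n)) (l : List (Fin n × Fin n)),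
        IsSortFact τ l → sor' τ = (l.map (fun p => (p.2 : ℕ) - (p.1 : ℕ))).sum := by
      intro τ l hl
      have h2 := hsor _ _ (isSortFact_extp hl)
      rw [List.map_map] at h2
      simpa [Function.comp_def] using h2
    have hval : ∀ (τ : Equiv.Perm (Fin n)) (i₀ : Fin n),
        sor (extp τ * Equiv.swap (Fin.castSucc i₀) (Fin.last n))
          = sor' τ + (n - (i₀ : ℕ)) := by
      intro τ i₀
      obtain ⟨l, hl⟩ := exists_sortFact τ
      rw [hsor _ _ (isSortFact_append hl i₀), hsor' τ l hl]
      rw [List.map_append, List.sum_append, List.map_map]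
      simp [Function.comp_def]
    have hre : ∑ σ : Equiv.Perm (Fin (n+1)), q ^ sor σ * ∏ i ∈ CycSet σ, t i
        = ∑ p : Equiv.Perm (Fin n) × Fin (n+1),
            q ^ sor (Fmap p) * ∏ i ∈ CycSet (Fmap p), t i :=
      (Fintype.sum_bijective Fmap Fmap_bijective _ _ fun p => rfl).symm
    rw [hre, Fintype.sum_prod_type]
    have hinj : ∀ s : Finset (Fin n), ∀ x ∈ s, ∀ y ∈ s,
        Fin.castSucc x = Fin.castSucc y → x = y :=
      fun s x _ y _ h => Fin.castSucc_inj.1 h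
    have inner : ∀ τ : Equiv.Perm (Fin n),
        (∑ i : Fin (n+1), q ^ sor (Fmap (τ, i)) * ∏ j ∈ CycSet (Fmap (τ, i)), t j)
          = (q ^ sor' τ * ∏ j ∈ CycSet τ, t (Fin.castSucc j))
              * (t (Fin.last n) + ∑ i ∈ Finset.Icc 1 n, q ^ i) := by
      intro τ
      rw [Fin.sum_univ_castSucc]
      have hterm : ∀ i₀ : Fin n,
          q ^ sor (Fmap (τ, Fin.castSucc i₀)) * ∏ j ∈ CycSet (Fmap (τ, Fin.castSucc i₀)), t j
            = (q ^ sor' τ * ∏ j ∈ CycSet τ, t (Fin.castSucc j)) * q ^ (n - (i₀ : ℕ)) := by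
        intro i₀
        rw [Fmap_castSucc, hval, CycSet_swap, Finset.prod_image (hinj _), pow_add]
        ring
      rw [Finset.sum_congr rfl (fun i₀ _ => hterm i₀), ← Finset.mul_sum, qsum q n]
      rw [Fmap_last, CycSet_extp,
        Finset.prod_insert (by
          simp only [Finset.mem_image]
          rintro ⟨y, -, hy⟩
          exact (Fin.castSucc_lt_last y).ne hy),
        Finset.prod_image (hinj _)]
      show _ + q ^ sor' τ * _ = _
      ring
    rw [Finset.sum_congr rfl (fun τ _ => inner τ), ← Finset.sum_mul,
      ih sor' hsor' (fun j => t (Fin.castSucc j)), Fin.prod_univ_castSucc]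
    congr 1

end SorProof

/-- `∑_{σ ∈ S_n} q^{sor σ} ∏_{i ∈ Cyc σ} t_i
    = t_1(t_2+q)(t_3+q+q²)⋯(t_n+q+⋯+q^{n-1})`,
with `t` indexed by `Fin n` (so `t k` is the paper's `t_{k+1}`). -/
theorem sor_Cyc_generating_function (n : ℕ) (hn : 1 ≤ n)
    (sor : Equiv.Perm (Fin n) → ℕ)
    (hsor : ∀ (σ : Equiv.Perm (Fin n)) (l : List (Fin n × Fin n)),
      IsSortFact σ l → sor σ = (l.map (fun p => (p.2 : ℕ) - (p.1 : ℕ))).sum)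
    (R : Type*) [CommRing R] (q : R) (t : Fin n → R) :
    ∑ σ : Equiv.Perm (Fin n), q ^ sor σ * ∏ i ∈ CycSet σ, t i
      = ∏ k : Fin n, (t k + ∑ i ∈ Finset.Icc 1 (k : ℕ), q ^ i) :=
  SorProof.aux R q n sor hsor t
end
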